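/- arXiv:2605.25888 — 15 statements merged into one kernel-verified Lean document; each statement's English description precedes it below -/
import Mathlib

section
/- Fix integers T ≥ 1, K ≥ 1 and 0 ≤ k0 ≤ K. Let S_t ≥ 0 (t = 1,…,T) and I_{k,0} ≥ 0 (k = 1,…,K) be reals, let m be a gated FDC plan with induced remaining inventories I_{k,t} and pure greedy quantities m̂_{k,t} (FDCs 1,…,k0 prioritized in this order ahead of the RDC), and let A = { t ∈ {1,…,T} : Σ_{k=1}^{K} m_{k,t} > 0 }. Let m* be a feasible offline FDC plan. Then for every j with 1 ≤ j ≤ k0 and every set B with A ⊆ B ⊆ {1,…,T}, one has Σ_{k=1}^{j} Σ_{t∈B} m̂_{k,t} ≥ Σ_{k=1}^{j} Σ_{t∈B} m*_{k,t}. -/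
open Finset

private lemma min_add_aux (s p q : ℝ) (hp : 0 ≤ p) (hq : 0 ≤ q) :
    min s p + min (max (s - p) 0) q = min s (p + q) := by
  rcases le_total s p with h | h
  · rw [min_eq_left h, max_eq_right (by linarith : s - p ≤ 0),
      min_eq_left hq, min_eq_left (by linarith : s ≤ p + q), add_zero]
  · rw [min_eq_right h, max_eq_left (by linarith : (0:ℝ) ≤ s - p)]
    rcases le_total (s - p) q with h2 | h2
    · rw [min_eq_left h2, min_eq_left (by linarith : s ≤ p + q)]; ring
    · rw [min_eq_right h2, min_eq_right (by linarith : p + q ≤ s)]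

/-- Lemma 1 (key lemma of the Gated Priority-based Greedy policy), single-item,
multi-FDC version: for any set `B` of periods containing all periods in which the
gated plan uses some FDC, the cumulative pure-greedy quantities over the first `j`
prioritized FDCs dominate those of any feasible offline plan. -/
theorem gated_greedy_dominates_offline
    (T K k0 : ℕ) (hT : 1 ≤ T) (hK : 1 ≤ K) (hk0K : k0 ≤ K)
    (S : ℕ → ℝ) (hS : ∀ t ∈ Icc 1 T, 0 ≤ S t)
    (I0 : ℕ → ℝ) (hI0 : ∀ k ∈ Icc 1 K, 0 ≤ I0 k)
    (m : ℕ → ℕ → ℝ) (hm : ∀ k ∈ Icc 1 K, ∀ t ∈ Icc 1 T, 0 ≤ m k t)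
    (I : ℕ → ℕ → ℝ)
    (hI : ∀ k ∈ Icc 1 K, ∀ t : ℕ, I k t = I0 k - ∑ τ ∈ Icc 1 t, m k τ)
    (mhat : ℕ → ℕ → ℝ)
    (hmhat : ∀ k ∈ Icc 1 k0, ∀ t ∈ Icc 1 T,
      mhat k t = min (max (S t - ∑ k' ∈ Icc 1 (k - 1), I k' (t - 1)) 0) (I k (t - 1)))
    (hmhat' : ∀ k ∈ Icc (k0 + 1) K, ∀ t ∈ Icc 1 T, mhat k t = 0)
    (hgated : ∀ t ∈ Icc 1 T,
      (∀ k ∈ Icc 1 K, m k t = mhat k t) ∨ (∀ k ∈ Icc 1 K, m k t = 0))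
    (mstar : ℕ → ℕ → ℝ)
    (hmstar_nonneg : ∀ k ∈ Icc 1 K, ∀ t ∈ Icc 1 T, 0 ≤ mstar k t)
    (hmstar_demand : ∀ t ∈ Icc 1 T, ∑ k ∈ Icc 1 K, mstar k t ≤ S t)
    (hmstar_inv : ∀ k ∈ Icc 1 K, ∑ t ∈ Icc 1 T, mstar k t ≤ I0 k)
    (j : ℕ) (hj1 : 1 ≤ j) (hjk0 : j ≤ k0)
    (B : Finset ℕ)
    (hAB : (Icc 1 T).filter (fun t => 0 < ∑ k ∈ Icc 1 K, m k t) ⊆ B)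
    (hBT : B ⊆ Icc 1 T) :
    ∑ k ∈ Icc 1 j, ∑ t ∈ B, mstar k t ≤ ∑ k ∈ Icc 1 j, ∑ t ∈ B, mhat k t := by
  have hjK : ∀ k ∈ Icc 1 k0, k ∈ Icc 1 K := by
    intro k hk; simp only [mem_Icc] at hk ⊢; omega
  -- inventory recursion
  have hIstep : ∀ k ∈ Icc 1 K, ∀ t : ℕ, I k (t + 1) = I k t - m k (t + 1) := by
    intro k hk t
    rw [hI k hk (t + 1), hI k hk t, Finset.sum_Icc_succ_top (Nat.le_add_left 1 t)]
    ring
  -- inventories stay nonnegative under the gated plan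
  have hIpos : ∀ t : ℕ, t ≤ T → ∀ k ∈ Icc 1 k0, 0 ≤ I k t := by
    intro t
    induction t with
    | zero =>
      intro _ k hk
      rw [hI k (hjK k hk) 0]
      simpa using hI0 k (hjK k hk)
    | succ n ih =>
      intro hn k hk
      have hkK := hjK k hk
      have hInk : 0 ≤ I k n := ih (Nat.le_of_succ_le hn) k hk
      have htT : n + 1 ∈ Icc 1 T := by simp only [mem_Icc]; omega
      rw [hIstep k hkK n]
      rcases hgated (n + 1) htT with h | h
      · have h1 := hmhat k hk (n + 1) htT
        rw [h k hkK, h1]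
        simp only [Nat.add_sub_cancel]
        have h2 : min (max (S (n+1) - ∑ k' ∈ Icc 1 (k - 1), I k' n) 0) (I k n) ≤ I k n :=
          min_le_right _ _
        linarith
      · rw [h k hkK]; linarith
  have hmhat_nonneg : ∀ k ∈ Icc 1 k0, ∀ t ∈ Icc 1 T, 0 ≤ mhat k t := by
    intro k hk t ht
    rw [hmhat k hk t ht]
    have ht1 : t - 1 ≤ T := by simp only [mem_Icc] at ht; omega
    exact le_min (le_max_right _ _) (hIpos (t - 1) ht1 k hk)
  -- prefix-sum identity for the greedy quantities
  have hsum : ∀ t ∈ Icc 1 T, ∀ i : ℕ, i ≤ k0 →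
      ∑ k ∈ Icc 1 i, mhat k t = min (S t) (∑ k ∈ Icc 1 i, I k (t - 1)) := by
    intro t ht i
    induction i with
    | zero =>
      intro _
      simp [min_eq_right (hS t ht)]
    | succ n ih =>
      intro hn
      have ht1 : t - 1 ≤ T := by simp only [mem_Icc] at ht; omega
      have hn1 : n + 1 ∈ Icc 1 k0 := by simp only [mem_Icc]; omega
      have hIn : 0 ≤ I (n + 1) (t - 1) := hIpos (t - 1) ht1 (n + 1) hn1
      have hP : 0 ≤ ∑ k ∈ Icc 1 n, I k (t - 1) :=
        Finset.sum_nonneg fun k hk => by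
          refine hIpos (t - 1) ht1 k ?_
          simp only [mem_Icc] at hk ⊢; omega
      rw [Finset.sum_Icc_succ_top (Nat.le_add_left 1 n),
        Finset.sum_Icc_succ_top (Nat.le_add_left 1 n),
        ih (Nat.le_of_succ_le hn), hmhat (n + 1) hn1 t ht]
      simp only [Nat.add_sub_cancel]
      exact min_add_aux (S t) _ _ hP hIn
  -- the gated plan's usage is pointwise dominated by greedy on B
  have hmle : ∀ k ∈ Icc 1 k0, ∀ τ ∈ Icc 1 T,
      m k τ ≤ if τ ∈ B then mhat k τ else 0 := by
    intro k hk τ hτ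
    by_cases hA : 0 < ∑ k' ∈ Icc 1 K, m k' τ
    · have hτB : τ ∈ B := hAB (by simp only [mem_filter]; exact ⟨hτ, hA⟩)
      rw [if_pos hτB]
      rcases hgated τ hτ with h | h
      · rw [h k (hjK k hk)]
      · exfalso
        have : ∑ k' ∈ Icc 1 K, m k' τ = 0 := Finset.sum_eq_zero fun k' hk' => h k' hk'
        linarith
    · have h1 : ∑ k' ∈ Icc 1 K, m k' τ ≤ 0 := le_of_not_gt hA
      have h2 : 0 ≤ ∑ k' ∈ Icc 1 K, m k' τ :=
        Finset.sum_nonneg fun k' hk' => hm k' hk' τ hτ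
      have hz : m k τ = 0 :=
        (Finset.sum_eq_zero_iff_of_nonneg fun k'' hk'' => hm k'' hk'' τ hτ).mp
          (le_antisymm h1 h2) k (hjK k hk)
      rw [hz]
      split
      · exact hmhat_nonneg k hk τ ‹_›
      · exact le_refl 0
  have hms : ∀ t ∈ Icc 1 T, ∑ k ∈ Icc 1 j, mstar k t ≤ S t := by
    intro t ht
    calc ∑ k ∈ Icc 1 j, mstar k t
        ≤ ∑ k ∈ Icc 1 K, mstar k t :=
          Finset.sum_le_sum_of_subset_of_nonneg
            (Icc_subset_Icc_right (le_trans hjk0 hk0K))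
            (fun k hk _ => hmstar_nonneg k hk t ht)
      _ ≤ S t := hmstar_demand t ht
  have hjsub : Icc 1 j ⊆ Icc 1 k0 := Icc_subset_Icc_right hjk0
  set C := B.filter (fun t => ∑ k ∈ Icc 1 j, mhat k t < S t) with hCdef
  rw [Finset.sum_comm (s := Icc 1 j), Finset.sum_comm (s := Icc 1 j)]
  by_cases hC : C = ∅
  · apply Finset.sum_le_sum
    intro t htB
    have htT := hBT htB
    have hnot : ¬ (∑ k ∈ Icc 1 j, mhat k t < S t) := by
      intro h
      have : t ∈ C := by rw [hCdef]; exact mem_filter.mpr ⟨htB, h⟩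
      simp [hC] at this
    exact le_trans (hms t htT) (le_of_not_gt hnot)
  · have hCne : C.Nonempty := Finset.nonempty_iff_ne_empty.mpr hC
    set ts := C.max' hCne with hts
    have htsC : ts ∈ C := C.max'_mem hCne
    have htsB : ts ∈ B := (mem_filter.mp htsC).1
    have htslt : ∑ k ∈ Icc 1 j, mhat k ts < S ts := (mem_filter.mp htsC).2
    have htsT : ts ∈ Icc 1 T := hBT htsB
    have hts1 : 1 ≤ ts := (mem_Icc.mp htsT).1
    have htsT' : ts ≤ T := (mem_Icc.mp htsT).2
    -- at ts, greedy exhausts the inventory of the first j FDCs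
    have hexh : ∑ k ∈ Icc 1 j, mhat k ts = ∑ k ∈ Icc 1 j, I k (ts - 1) := by
      have h1 := hsum ts htsT j hjk0
      rcases le_total (S ts) (∑ k ∈ Icc 1 j, I k (ts - 1)) with h | h
      · rw [h1, min_eq_left h] at htslt; linarith
      · rw [h1, min_eq_right h]
    -- split B into periods ≤ ts and > ts
    rw [← Finset.sum_filter_add_sum_filter_not B (fun t => t ≤ ts),
      ← Finset.sum_filter_add_sum_filter_not B (fun t => t ≤ ts)]
    have hlate : ∑ t ∈ B.filter (fun t => ¬ t ≤ ts), ∑ k ∈ Icc 1 j, mstar k t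
        ≤ ∑ t ∈ B.filter (fun t => ¬ t ≤ ts), ∑ k ∈ Icc 1 j, mhat k t := by
      apply Finset.sum_le_sum
      intro t ht
      obtain ⟨htB, htgt⟩ := mem_filter.mp ht
      have htT := hBT htB
      have hnotC : t ∉ C := by
        intro hmem
        exact htgt (C.le_max' t hmem)
      have : ¬ (∑ k ∈ Icc 1 j, mhat k t < S t) := by
        intro h; exact hnotC (mem_filter.mpr ⟨htB, h⟩)
      exact le_trans (hms t htT) (le_of_not_gt this)
    have hearly : ∑ t ∈ B.filter (fun t => t ≤ ts), ∑ k ∈ Icc 1 j, mstar k t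
        ≤ ∑ t ∈ B.filter (fun t => t ≤ ts), ∑ k ∈ Icc 1 j, mhat k t := by
      -- LHS ≤ Σ_k I0 k
      have hL : ∑ t ∈ B.filter (fun t => t ≤ ts), ∑ k ∈ Icc 1 j, mstar k t
          ≤ ∑ k ∈ Icc 1 j, I0 k := by
        rw [Finset.sum_comm]
        apply Finset.sum_le_sum
        intro k hk
        have hkK := hjK k (hjsub hk)
        calc ∑ t ∈ B.filter (fun t => t ≤ ts), mstar k t
            ≤ ∑ t ∈ Icc 1 T, mstar k t :=
              Finset.sum_le_sum_of_subset_of_nonneg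
                (fun t ht => hBT (mem_filter.mp ht).1)
                (fun t ht _ => hmstar_nonneg k hkK t ht)
          _ ≤ I0 k := hmstar_inv k hkK
      -- B.filter (≤ ts) = insert ts (B.filter (< ts))
      have hsplit : B.filter (fun t => t ≤ ts) = insert ts (B.filter (fun t => t < ts)) := by
        ext x
        simp only [mem_filter, mem_insert]
        constructor
        · rintro ⟨hx, hle⟩
          rcases lt_or_eq_of_le hle with h | h
          · exact Or.inr ⟨hx, h⟩
          · exact Or.inl h
        · rintro (h | ⟨hx, hlt⟩)
          · exact ⟨h ▸ htsB, h ▸ le_refl ts⟩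
          · exact ⟨hx, le_of_lt hlt⟩
      have htsnot : ts ∉ B.filter (fun t => t < ts) := by
        simp only [mem_filter]
        rintro ⟨-, h⟩; exact lt_irrefl ts h
      -- consumption bound
      have hcons : ∑ k ∈ Icc 1 j, ∑ τ ∈ Icc 1 (ts - 1), m k τ
          ≤ ∑ t ∈ B.filter (fun t => t < ts), ∑ k ∈ Icc 1 j, mhat k t := by
        rw [Finset.sum_comm (t := Icc 1 j)]
        apply Finset.sum_le_sum
        intro k hk
        have hkk0 := hjsub hk
        have hfilter_eq : (Icc 1 (ts - 1)).filter (fun τ => τ ∈ B)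
            = B.filter (fun t => t < ts) := by
          ext x
          simp only [mem_filter, mem_Icc]
          constructor
          · rintro ⟨⟨h1, h2⟩, hx⟩; exact ⟨hx, by omega⟩
          · rintro ⟨hx, hlt⟩
            have := mem_Icc.mp (hBT hx)
            exact ⟨⟨this.1, by omega⟩, hx⟩
        calc ∑ τ ∈ Icc 1 (ts - 1), m k τ
            ≤ ∑ τ ∈ Icc 1 (ts - 1), (if τ ∈ B then mhat k τ else 0) := by
              apply Finset.sum_le_sum
              intro τ hτ
              refine hmle k hkk0 τ ?_
              simp only [mem_Icc] at hτ ⊢; omega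
          _ = ∑ τ ∈ (Icc 1 (ts - 1)).filter (fun τ => τ ∈ B), mhat k τ :=
              (Finset.sum_filter _ _).symm
          _ = ∑ τ ∈ B.filter (fun t => t < ts), mhat k τ := by rw [hfilter_eq]
      -- compute Σ_k I k (ts - 1)
      have hinv : ∑ k ∈ Icc 1 j, I k (ts - 1)
          = ∑ k ∈ Icc 1 j, I0 k - ∑ k ∈ Icc 1 j, ∑ τ ∈ Icc 1 (ts - 1), m k τ := by
        rw [← Finset.sum_sub_distrib]
        apply Finset.sum_congr rfl
        intro k hk
        exact hI k (hjK k (hjsub hk)) (ts - 1)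
      have hRHS : ∑ k ∈ Icc 1 j, I0 k
          ≤ ∑ t ∈ B.filter (fun t => t ≤ ts), ∑ k ∈ Icc 1 j, mhat k t := by
        rw [hsplit, Finset.sum_insert htsnot, hexh, hinv]
        linarith
      linarith
    linarith
end

section
/- Fix an integer T ≥ 1. Let S_t ≥ 0 (t = 1,…,T) and I_0 ≥ 0 be reals. Let m_t ≥ 0 be an FDC plan with remaining inventory I_t = I_0 − Σ_{τ=1}^{t} m_τ and greedy quantities m̂_t = min{S_t, I_{t−1}}, and suppose that for every t either m_t = m̂_t or m_t = 0. Let C = { t : m_t > 0 }. If m*_t are reals with 0 ≤ m*_t ≤ S_t for every t and Σ_{t=1}^{T} m*_t ≤ I_0, then for every set B with C ⊆ B ⊆ {1,…,T} one has Σ_{t∈B} m̂_t ≥ Σ_{t∈B} m*_t. -/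
open Finset

/-- Single-item single-FDC key lemma: for any set `B` of periods containing all
periods in which the (gated) plan uses the FDC, the cumulative greedy quantities
over `B` dominate those of any feasible offline plan. -/
theorem gated_greedy_dominates_offline_singleFDC
    (T : ℕ) (hT : 1 ≤ T)
    (S : ℕ → ℝ) (hS : ∀ t ∈ Icc 1 T, 0 ≤ S t)
    (I0 : ℝ) (hI0 : 0 ≤ I0)
    (m : ℕ → ℝ) (hm : ∀ t ∈ Icc 1 T, 0 ≤ m t)
    (I : ℕ → ℝ) (hI : ∀ t : ℕ, I t = I0 - ∑ τ ∈ Icc 1 t, m τ)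
    (mhat : ℕ → ℝ) (hmhat : ∀ t ∈ Icc 1 T, mhat t = min (S t) (I (t - 1)))
    (hgated : ∀ t ∈ Icc 1 T, m t = mhat t ∨ m t = 0)
    (mstar : ℕ → ℝ)
    (hmstar : ∀ t ∈ Icc 1 T, 0 ≤ mstar t ∧ mstar t ≤ S t)
    (hmstar_inv : ∑ t ∈ Icc 1 T, mstar t ≤ I0)
    (B : Finset ℕ)
    (hCB : (Icc 1 T).filter (fun t => 0 < m t) ⊆ B)
    (hBT : B ⊆ Icc 1 T) :
    ∑ t ∈ B, mstar t ≤ ∑ t ∈ B, mhat t := by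
  classical
  -- m vanishes on [1,T] outside B
  have hm0 : ∀ τ ∈ Icc 1 T, τ ∉ B → m τ = 0 := by
    intro τ hτ hτB
    by_contra h
    have hpos : 0 < m τ := lt_of_le_of_ne (hm τ hτ) (Ne.symm h)
    exact hτB (hCB (mem_filter.mpr ⟨hτ, hpos⟩))
  -- inventory stays nonnegative
  have hInn : ∀ t, t ≤ T → 0 ≤ I t := by
    intro t
    induction t with
    | zero => intro _; simpa [hI 0] using hI0
    | succ n ih =>
      intro h
      have hn := ih (Nat.le_of_succ_le h)
      have hmem : n + 1 ∈ Icc 1 T := mem_Icc.mpr ⟨Nat.succ_le_succ (Nat.zero_le n), h⟩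
      have hstep : I (n + 1) = I n - m (n + 1) := by
        rw [hI (n + 1), hI n, Finset.sum_Icc_succ_top (Nat.succ_le_succ (Nat.zero_le n)) m]
        ring
      rcases hgated (n + 1) hmem with hg | hg
      · rw [hstep, hg, hmhat (n + 1) hmem]
        simp only [Nat.add_sub_cancel]
        have := min_le_right (S (n + 1)) (I n)
        linarith
      · rw [hstep, hg]; linarith
  -- greedy quantities are nonnegative
  have hmhatnn : ∀ t ∈ Icc 1 T, 0 ≤ mhat t := by
    intro t ht
    rw [hmhat t ht]
    exact le_min (hS t ht)
      (hInn (t - 1) (le_trans (Nat.sub_le t 1) (mem_Icc.mp ht).2))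
  have hm_le : ∀ t ∈ Icc 1 T, m t ≤ mhat t := by
    intro t ht
    rcases hgated t ht with h | h
    · rw [h]
    · rw [h]; exact hmhatnn t ht
  by_cases hall : ∀ t ∈ B, mstar t ≤ mhat t
  · exact Finset.sum_le_sum hall
  push_neg at hall
  set Bbad := B.filter (fun t => mhat t < mstar t) with hBbad
  have hne : Bbad.Nonempty := by
    obtain ⟨t, ht, h⟩ := hall
    exact ⟨t, mem_filter.mpr ⟨ht, h⟩⟩
  set ts := Bbad.max' hne with hts
  have htsB : ts ∈ B := (mem_filter.mp (Bbad.max'_mem hne)).1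
  have htsbad : mhat ts < mstar ts := (mem_filter.mp (Bbad.max'_mem hne)).2
  have htsT : ts ∈ Icc 1 T := hBT htsB
  have hts1 : 1 ≤ ts := (mem_Icc.mp htsT).1
  have htsle : ts ≤ T := (mem_Icc.mp htsT).2
  have hafter : ∀ t ∈ B, ts < t → mstar t ≤ mhat t := by
    intro t htB hlt
    by_contra h
    push_neg at h
    have : t ∈ Bbad := mem_filter.mpr ⟨htB, h⟩
    exact absurd (Bbad.le_max' t this) (not_le.mpr hlt)
  have hstarS := (hmstar ts htsT).2
  have hmhat_ts : mhat ts = I (ts - 1) := by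
    rw [hmhat ts htsT] at htsbad ⊢
    rcases min_cases (S ts) (I (ts - 1)) with ⟨h1, _⟩ | ⟨h1, _⟩
    · exfalso; rw [h1] at htsbad; linarith
    · exact h1
  have hsum_m : ∑ t ∈ B.filter (fun t => t < ts), m t = ∑ t ∈ Icc 1 (ts - 1), m t := by
    apply Finset.sum_subset
    · intro x hx
      obtain ⟨hxB, hxlt⟩ := mem_filter.mp hx
      exact mem_Icc.mpr ⟨(mem_Icc.mp (hBT hxB)).1, Nat.le_sub_one_of_lt hxlt⟩
    · intro x hx hxn
      obtain ⟨hx1, hx2⟩ := mem_Icc.mp hx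
      have hxltts : x < ts := lt_of_le_of_lt hx2 (Nat.sub_lt hts1 one_pos)
      have hxT : x ∈ Icc 1 T :=
        mem_Icc.mpr ⟨hx1, le_trans hx2 (le_trans (Nat.sub_le ts 1) htsle)⟩
      by_cases hxB : x ∈ B
      · exact (hxn (mem_filter.mpr ⟨hxB, hxltts⟩)).elim
      · exact hm0 x hxT hxB
  have hIts : I (ts - 1) = I0 - ∑ t ∈ B.filter (fun t => t < ts), m t := by
    rw [hI (ts - 1), hsum_m]
  have hins : B.filter (fun t => t ≤ ts) = insert ts (B.filter (fun t => t < ts)) := by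
    ext x
    simp only [mem_filter, mem_insert]
    constructor
    · rintro ⟨hxB, hxle⟩
      rcases lt_or_eq_of_le hxle with h | h
      · exact Or.inr ⟨hxB, h⟩
      · exact Or.inl h
    · rintro (h | ⟨hxB, hlt⟩)
      · exact ⟨h ▸ htsB, le_of_eq h⟩
      · exact ⟨hxB, le_of_lt hlt⟩
  have hnotmem : ts ∉ B.filter (fun t => t < ts) := by
    simp [mem_filter]
  have h1 : ∑ t ∈ B.filter (fun t => t ≤ ts), mhat t
      = mhat ts + ∑ t ∈ B.filter (fun t => t < ts), mhat t := by
    rw [hins, Finset.sum_insert hnotmem]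
  have hmsum : ∑ t ∈ B.filter (fun t => t < ts), m t
      ≤ ∑ t ∈ B.filter (fun t => t < ts), mhat t :=
    Finset.sum_le_sum (fun t ht => hm_le t (hBT (mem_filter.mp ht).1))
  have hA : ∑ t ∈ B.filter (fun t => t ≤ ts), mstar t
      ≤ ∑ t ∈ B.filter (fun t => t ≤ ts), mhat t := by
    have hsub : B.filter (fun t => t ≤ ts) ⊆ Icc 1 T :=
      (Finset.filter_subset _ B).trans hBT
    have hstep1 : ∑ t ∈ B.filter (fun t => t ≤ ts), mstar t ≤ ∑ t ∈ Icc 1 T, mstar t :=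
      Finset.sum_le_sum_of_subset_of_nonneg hsub (fun i hi _ => (hmstar i hi).1)
    have : I0 = ∑ t ∈ B.filter (fun t => t < ts), m t + I (ts - 1) := by
      rw [hIts]; ring
    rw [h1]
    have := hmhat_ts
    linarith
  have hB2 : ∑ t ∈ B.filter (fun t => ¬ t ≤ ts), mstar t
      ≤ ∑ t ∈ B.filter (fun t => ¬ t ≤ ts), mhat t :=
    Finset.sum_le_sum (fun t ht =>
      hafter t (mem_filter.mp ht).1 (not_le.mp (mem_filter.mp ht).2))
  calc ∑ t ∈ B, mstar t
      = ∑ t ∈ B.filter (fun t => t ≤ ts), mstar t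
        + ∑ t ∈ B.filter (fun t => ¬ t ≤ ts), mstar t :=
        (Finset.sum_filter_add_sum_filter_not B _ mstar).symm
    _ ≤ ∑ t ∈ B.filter (fun t => t ≤ ts), mhat t
        + ∑ t ∈ B.filter (fun t => ¬ t ≤ ts), mhat t := add_le_add hA hB2
    _ = ∑ t ∈ B, mhat t := Finset.sum_filter_add_sum_filter_not B _ mhat
end

section
/- Fix integers T ≥ 1, K ≥ 1 and 0 ≤ k0 ≤ K. Let S_t ≥ 0 (t = 1,…,T) and I_{k,0} ≥ 0 (k = 1,…,K) be reals, let m be a gated FDC plan with induced remaining inventories I_{k,t} and pure greedy quantities m̂_{k,t} (FDCs 1,…,k0 prioritized in this order ahead of the RDC), and let A = { t ∈ {1,…,T} : Σ_{k=1}^{K} m_{k,t} > 0 }. Then for every j with 1 ≤ j ≤ k0, Σ_{k=1}^{j} Σ_{t∈A} m̂_{k,t} = min{ Σ_{t∈A} S_t , Σ_{k=1}^{j} I_{k,0} }. -/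
open Finset

private lemma gated_lemA (S P q : ℝ) (hP : 0 ≤ P) (hq : 0 ≤ q) :
    min S P + min (max (S - P) 0) q = min S (P + q) := by
  rcases le_total S P with h | h
  · rw [min_eq_left h, max_eq_right (by linarith), min_eq_left hq,
      min_eq_left (by linarith : S ≤ P + q), add_zero]
  · rw [min_eq_right h, max_eq_left (by linarith)]
    rcases le_total (S - P) q with h2 | h2
    · rw [min_eq_left h2, min_eq_left (by linarith : S ≤ P + q)]; ring
    · rw [min_eq_right h2, min_eq_right (by linarith : P + q ≤ S)]

private lemma gated_lemB (F C s : ℝ) (hs : 0 ≤ s) :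
    min F C + min s (C - min F C) = min (F + s) C := by
  rcases le_total F C with h | h
  · rw [min_eq_left h]
    rcases le_total s (C - F) with h2 | h2
    · rw [min_eq_left h2, min_eq_left (by linarith : F + s ≤ C)]
    · rw [min_eq_right h2, min_eq_right (by linarith : C ≤ F + s)]; ring
  · rw [min_eq_right h, sub_self, min_eq_right hs, add_zero,
      min_eq_right (by linarith : C ≤ F + s)]

/-- Over the set `A` of periods in which the gated plan uses some FDC, the cumulative
pure-greedy quantities over the first `j` prioritized FDCs equal
`min { Σ_{t∈A} S_t , Σ_{k=1}^j I_{k,0} }`. -/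
theorem gated_greedy_sum_eq_min
    (T K k0 : ℕ) (hT : 1 ≤ T) (hK : 1 ≤ K) (hk0K : k0 ≤ K)
    (S : ℕ → ℝ) (hS : ∀ t ∈ Icc 1 T, 0 ≤ S t)
    (I0 : ℕ → ℝ) (hI0 : ∀ k ∈ Icc 1 K, 0 ≤ I0 k)
    (m : ℕ → ℕ → ℝ) (hm : ∀ k ∈ Icc 1 K, ∀ t ∈ Icc 1 T, 0 ≤ m k t)
    (I : ℕ → ℕ → ℝ)
    (hI : ∀ k ∈ Icc 1 K, ∀ t : ℕ, I k t = I0 k - ∑ τ ∈ Icc 1 t, m k τ)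
    (mhat : ℕ → ℕ → ℝ)
    (hmhat : ∀ k ∈ Icc 1 k0, ∀ t ∈ Icc 1 T,
      mhat k t = min (max (S t - ∑ k' ∈ Icc 1 (k - 1), I k' (t - 1)) 0) (I k (t - 1)))
    (hmhat' : ∀ k ∈ Icc (k0 + 1) K, ∀ t ∈ Icc 1 T, mhat k t = 0)
    (hgated : ∀ t ∈ Icc 1 T,
      (∀ k ∈ Icc 1 K, m k t = mhat k t) ∨ (∀ k ∈ Icc 1 K, m k t = 0))
    (j : ℕ) (hj1 : 1 ≤ j) (hjk0 : j ≤ k0) :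
    ∑ k ∈ Icc 1 j, ∑ t ∈ (Icc 1 T).filter (fun t => 0 < ∑ k ∈ Icc 1 K, m k t), mhat k t
      = min (∑ t ∈ (Icc 1 T).filter (fun t => 0 < ∑ k ∈ Icc 1 K, m k t), S t)
            (∑ k ∈ Icc 1 j, I0 k) := by
  have hI0' : ∀ k ∈ Icc 1 K, I k 0 = I0 k := by
    intro k hk
    rw [hI k hk 0]
    simp
  have hIrec : ∀ k ∈ Icc 1 K, ∀ t : ℕ, I k (t + 1) = I k t - m k (t + 1) := by
    intro k hk t
    rw [hI k hk (t + 1), hI k hk t, Finset.sum_Icc_succ_top (by omega)]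
    ring
  -- nonnegativity of inventories
  have hInn : ∀ t, t ≤ T → ∀ k ∈ Icc 1 K, 0 ≤ I k t := by
    intro t
    induction t with
    | zero => intro _ k hk; rw [hI0' k hk]; exact hI0 k hk
    | succ t ih =>
      intro ht k hk
      have hk' := Finset.mem_Icc.mp hk
      have h1 : 0 ≤ I k t := ih (by omega) k hk
      have hmle : m k (t + 1) ≤ I k t := by
        have htm : t + 1 ∈ Icc 1 T := Finset.mem_Icc.mpr ⟨by omega, ht⟩
        rcases hgated (t + 1) htm with h | h
        · rw [h k hk]
          by_cases hkk0 : k ≤ k0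
          · rw [hmhat k (Finset.mem_Icc.mpr ⟨hk'.1, hkk0⟩) (t + 1) htm]
            exact min_le_right _ _
          · rw [hmhat' k (Finset.mem_Icc.mpr ⟨by omega, hk'.2⟩) (t + 1) htm]
            exact h1
        · rw [h k hk]; exact h1
      rw [hIrec k hk t]
      linarith
  -- per-period greedy partial sums
  have hgreedy : ∀ t, 1 ≤ t → t ≤ T → ∀ i, i ≤ k0 →
      ∑ k ∈ Icc 1 i, mhat k t = min (S t) (∑ k ∈ Icc 1 i, I k (t - 1)) := by
    intro t h1 h2 i
    induction i with
    | zero =>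
      intro _
      rw [show Icc 1 0 = (∅ : Finset ℕ) from Finset.Icc_eq_empty (by omega)]
      simp [min_eq_right (hS t (Finset.mem_Icc.mpr ⟨h1, h2⟩))]
    | succ i ih =>
      intro hi
      have hP : 0 ≤ ∑ k ∈ Icc 1 i, I k (t - 1) := by
        refine Finset.sum_nonneg fun k hk => ?_
        have hk' := Finset.mem_Icc.mp hk
        exact hInn (t - 1) (by omega) k (Finset.mem_Icc.mpr ⟨hk'.1, by omega⟩)
      have hq : 0 ≤ I (i + 1) (t - 1) :=
        hInn (t - 1) (by omega) (i + 1) (Finset.mem_Icc.mpr ⟨by omega, by omega⟩)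
      rw [Finset.sum_Icc_succ_top (by omega : 1 ≤ i + 1),
        Finset.sum_Icc_succ_top (by omega : 1 ≤ i + 1), ih (by omega),
        hmhat (i + 1) (Finset.mem_Icc.mpr ⟨by omega, hi⟩) t (Finset.mem_Icc.mpr ⟨h1, h2⟩)]
      simp only [Nat.add_sub_cancel]
      exact gated_lemA (S t) _ _ hP hq
  -- gated plan as an indicator of the greedy plan
  have hmif : ∀ τ ∈ Icc 1 T, ∀ k ∈ Icc 1 K,
      m k τ = if 0 < ∑ k' ∈ Icc 1 K, m k' τ then mhat k τ else 0 := by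
    intro τ hτ k hk
    rcases hgated τ hτ with h | h
    · by_cases hp : 0 < ∑ k' ∈ Icc 1 K, m k' τ
      · rw [if_pos hp]; exact h k hk
      · rw [if_neg hp]
        have hz : ∑ k' ∈ Icc 1 K, m k' τ = 0 :=
          le_antisymm (le_of_not_gt hp)
            (Finset.sum_nonneg fun k' hk' => hm k' hk' τ hτ)
        exact (Finset.sum_eq_zero_iff_of_nonneg
          (fun k' hk' => hm k' hk' τ hτ)).mp hz k hk
    · have h0 : ∑ k' ∈ Icc 1 K, m k' τ = 0 := Finset.sum_eq_zero fun k' hk' => h k' hk'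
      rw [if_neg (by rw [h0]; exact lt_irrefl 0), h k hk]
  have hCnn : 0 ≤ ∑ k ∈ Icc 1 j, I0 k := by
    refine Finset.sum_nonneg fun k hk => ?_
    have hk' := Finset.mem_Icc.mp hk
    exact hI0 k (Finset.mem_Icc.mpr ⟨hk'.1, by omega⟩)
  -- main induction over time
  have main : ∀ t, t ≤ T →
      ∑ k ∈ Icc 1 j, ∑ τ ∈ Icc 1 t,
          (if 0 < ∑ k' ∈ Icc 1 K, m k' τ then mhat k τ else 0)
        = min (∑ τ ∈ Icc 1 t, if 0 < ∑ k' ∈ Icc 1 K, m k' τ then S τ else 0)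
              (∑ k ∈ Icc 1 j, I0 k) := by
    intro t
    induction t with
    | zero =>
      intro _
      rw [show Icc 1 0 = (∅ : Finset ℕ) from Finset.Icc_eq_empty (by omega)]
      simp [min_eq_left hCnn]
    | succ t ih =>
      intro ht
      have ih' := ih (by omega)
      simp only [Finset.sum_Icc_succ_top (show (1 : ℕ) ≤ t + 1 by omega)]
      rw [Finset.sum_add_distrib, ih']
      by_cases hp : 0 < ∑ k' ∈ Icc 1 K, m k' (t + 1)
      · simp only [if_pos hp]
        rw [hgreedy (t + 1) (by omega) ht j hjk0]
        simp only [Nat.add_sub_cancel]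
        have hPeq : ∑ k ∈ Icc 1 j, I k t
            = (∑ k ∈ Icc 1 j, I0 k)
              - ∑ k ∈ Icc 1 j, ∑ τ ∈ Icc 1 t,
                  (if 0 < ∑ k' ∈ Icc 1 K, m k' τ then mhat k τ else 0) := by
          rw [← Finset.sum_sub_distrib]
          refine Finset.sum_congr rfl fun k hk => ?_
          have hk' := Finset.mem_Icc.mp hk
          have hkK : k ∈ Icc 1 K := Finset.mem_Icc.mpr ⟨hk'.1, by omega⟩
          rw [hI k hkK t]
          congr 1
          refine Finset.sum_congr rfl fun τ hτ => ?_
          have hτ' := Finset.mem_Icc.mp hτ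
          exact hmif τ (Finset.mem_Icc.mpr ⟨hτ'.1, by omega⟩) k hkK
        rw [hPeq, ih']
        exact gated_lemB _ _ _ (hS (t + 1) (Finset.mem_Icc.mpr ⟨by omega, ht⟩))
      · simp [hp]
  simp only [Finset.sum_filter]
  exact main T le_rfl
end

section
/- Fix integers T ≥ 1, K ≥ 1. Let f_0, f_1, …, f_K ≥ 0 be fixed costs satisfying f_1 ≤ … ≤ f_{k0} < f_0 ≤ f_{k0+1} ≤ … ≤ f_K for some 0 ≤ k0 ≤ K. Let S_t ≥ 0 and I_{k,0} ≥ 0 be reals, let m̂_{k,t} be the pure greedy quantities (FDCs 1,…,k0 prioritized in this order ahead of the RDC) induced by an FDC plan m, and suppose A ⊆ {1,…,T} is such that m_{k,t} = m̂_{k,t} for all k ∈ {1,…,K} when t ∈ A and m_{k,t} = 0 for all k ∈ {1,…,K} when t ∉ A; extend the plan to the RDC (index 0) by m_{0,t} = S_t − Σ_{k=1}^{K} m_{k,t}. Let m* be a feasible offline FDC plan, extended by m*_{0,t} = S_t − Σ_{k=1}^{K} m*_{k,t}. Then Σ_{t∈A} Σ_{k=0}^{K} f_k · m_{k,t} ≤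 Σ_{t∈A} Σ_{k=0}^{K} f_k · m*_{k,t}. -/
open Finset

private lemma min_split (a b c : ℝ) (hc : 0 ≤ c) :
    min a b + min (max (a - b) 0) c = min a (b + c) := by
  simp only [min_def, max_def]
  split_ifs <;> linarith

private lemma abel_aux (n : ℕ) (d z : ℕ → ℝ)
    (hd : ∀ k, 1 ≤ k → k < n → d (k + 1) ≤ d k)
    (hZ : ∀ j, j ≤ n → 0 ≤ ∑ k ∈ Icc 1 j, z k) :
    d n * (∑ k ∈ Icc 1 n, z k) ≤ ∑ k ∈ Icc 1 n, d k * z k := by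
  induction n with
  | zero => simp
  | succ n ih =>
    have h1 : d n * (∑ k ∈ Icc 1 n, z k) ≤ ∑ k ∈ Icc 1 n, d k * z k :=
      ih (fun k h1 h2 => hd k h1 (by omega)) (fun j hj => hZ j (by omega))
    have h2 : d (n + 1) * (∑ k ∈ Icc 1 n, z k) ≤ d n * (∑ k ∈ Icc 1 n, z k) := by
      rcases Nat.eq_zero_or_pos n with h | h
      · subst h; simp
      · exact mul_le_mul_of_nonneg_right (hd n h (by omega)) (hZ n (by omega))
    rw [Finset.sum_Icc_succ_top (by omega : 1 ≤ n + 1),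
        Finset.sum_Icc_succ_top (by omega : 1 ≤ n + 1), mul_add]
    linarith

/-- Claim 1 (fixed-cost comparison over the greedy periods): over the set `A` of
periods in which the plan follows the pure greedy allocation, the fixed-cost weighted
total quantities of the plan are at most those of any feasible offline plan, with
fixed costs satisfying `f_1 ≤ … ≤ f_{k0} < f_0 ≤ f_{k0+1} ≤ … ≤ f_K`. -/
theorem greedy_fixed_cost_weighted_le_offline
    (T K k0 : ℕ) (hT : 1 ≤ T) (hK : 1 ≤ K) (hk0K : k0 ≤ K)
    (f : ℕ → ℝ) (hf : ∀ k, k ≤ K → 0 ≤ f k)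
    (hf_mono_low : ∀ k, 1 ≤ k → k < k0 → f k ≤ f (k + 1))
    (hf_k0_lt : 1 ≤ k0 → f k0 < f 0)
    (hf_0_le : k0 < K → f 0 ≤ f (k0 + 1))
    (hf_mono_high : ∀ k, k0 < k → k < K → f k ≤ f (k + 1))
    (S : ℕ → ℝ) (hS : ∀ t ∈ Icc 1 T, 0 ≤ S t)
    (I0 : ℕ → ℝ) (hI0 : ∀ k ∈ Icc 1 K, 0 ≤ I0 k)
    (m : ℕ → ℕ → ℝ) (hm : ∀ k ∈ Icc 1 K, ∀ t ∈ Icc 1 T, 0 ≤ m k t)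
    (I : ℕ → ℕ → ℝ)
    (hI : ∀ k ∈ Icc 1 K, ∀ t : ℕ, I k t = I0 k - ∑ τ ∈ Icc 1 t, m k τ)
    (mhat : ℕ → ℕ → ℝ)
    (hmhat : ∀ k ∈ Icc 1 k0, ∀ t ∈ Icc 1 T,
      mhat k t = min (max (S t - ∑ k' ∈ Icc 1 (k - 1), I k' (t - 1)) 0) (I k (t - 1)))
    (hmhat' : ∀ k ∈ Icc (k0 + 1) K, ∀ t ∈ Icc 1 T, mhat k t = 0)
    (A : Finset ℕ) (hA : A ⊆ Icc 1 T)
    (hmA : ∀ t ∈ A, ∀ k ∈ Icc 1 K, m k t = mhat k t)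
    (hmA' : ∀ t ∈ Icc 1 T, t ∉ A → ∀ k ∈ Icc 1 K, m k t = 0)
    (mstar : ℕ → ℕ → ℝ)
    (hmstar_nonneg : ∀ k ∈ Icc 1 K, ∀ t ∈ Icc 1 T, 0 ≤ mstar k t)
    (hmstar_demand : ∀ t ∈ Icc 1 T, ∑ k ∈ Icc 1 K, mstar k t ≤ S t)
    (hmstar_inv : ∀ k ∈ Icc 1 K, ∑ t ∈ Icc 1 T, mstar k t ≤ I0 k) :
    ∑ t ∈ A, (f 0 * (S t - ∑ k ∈ Icc 1 K, m k t) + ∑ k ∈ Icc 1 K, f k * m k t)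
      ≤ ∑ t ∈ A, (f 0 * (S t - ∑ k ∈ Icc 1 K, mstar k t)
          + ∑ k ∈ Icc 1 K, f k * mstar k t) := by
  -- Nonnegativity of remaining inventories along the plan.
  have hInonneg : ∀ t, t ≤ T → ∀ k ∈ Icc 1 K, 0 ≤ I k t := by
    intro t
    induction t with
    | zero =>
      intro _ k hk
      rw [hI k hk 0]
      simpa using hI0 k hk
    | succ n ih =>
      intro hnT k hk
      have hn : 0 ≤ I k n := ih (by omega) k hk
      have hformula : I k (n + 1) = I k n - m k (n + 1) := by
        rw [hI k hk (n + 1), hI k hk n, Finset.sum_Icc_succ_top (by omega : 1 ≤ n + 1)]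
        ring
      have hmem : n + 1 ∈ Icc 1 T := by simp; omega
      by_cases hA' : n + 1 ∈ A
      · rcases le_or_gt k k0 with hkk | hkk
        · have hmk := hmA (n + 1) hA' k hk
          rw [hmhat k (by simp; exact ⟨(mem_Icc.mp hk).1, hkk⟩) (n + 1) hmem] at hmk
          have hred : n + 1 - 1 = n := rfl
          rw [hred] at hmk
          rw [hformula, hmk]
          have := min_le_right (max (S (n + 1) - ∑ k' ∈ Icc 1 (k - 1), I k' n) 0) (I k n)
          linarith
        · obtain ⟨hk1, hk2⟩ := mem_Icc.mp hk
          have hmk := hmA (n + 1) hA' k hk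
          rw [hmhat' k (by simp; omega) (n + 1) hmem] at hmk
          rw [hformula, hmk]; linarith
      · rw [hformula, hmA' (n + 1) hmem hA' k hk]; linarith
  -- Greedy prefix identity.
  have hprefix : ∀ t ∈ A, ∀ j, j ≤ k0 →
      ∑ k ∈ Icc 1 j, m k t = min (S t) (∑ k ∈ Icc 1 j, I k (t - 1)) := by
    intro t ht j
    have htT : t ∈ Icc 1 T := hA ht
    obtain ⟨ht1, ht2⟩ := mem_Icc.mp htT
    induction j with
    | zero =>
      intro _
      simp [min_eq_right (hS t htT)]
    | succ n ih =>
      intro h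
      have hn := ih (by omega)
      rw [Finset.sum_Icc_succ_top (by omega : 1 ≤ n + 1),
          Finset.sum_Icc_succ_top (by omega : 1 ≤ n + 1), hn,
          hmA t ht (n + 1) (by simp; omega),
          hmhat (n + 1) (by simp; omega) t htT]
      have hred : n + 1 - 1 = n := rfl
      rw [hred]
      exact min_split _ _ _ (hInonneg (t - 1) (by omega) (n + 1) (by simp; omega))
  -- Key prefix comparison over the greedy periods.
  have key : ∀ j, j ≤ k0 →
      ∑ t ∈ A, ∑ k ∈ Icc 1 j, mstar k t ≤ ∑ t ∈ A, ∑ k ∈ Icc 1 j, m k t := by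
    intro j hj
    have hjK : Icc 1 j ⊆ Icc 1 K := Finset.Icc_subset_Icc le_rfl (by omega)
    have hQS : ∀ t ∈ Icc 1 T, ∑ k ∈ Icc 1 j, mstar k t ≤ S t := by
      intro t ht
      refine le_trans ?_ (hmstar_demand t ht)
      exact Finset.sum_le_sum_of_subset_of_nonneg hjK
        (fun k hk _ => hmstar_nonneg k hk t ht)
    by_cases hcase : ∀ t ∈ A, ∑ k ∈ Icc 1 j, m k t = S t
    · refine Finset.sum_le_sum fun t ht => ?_
      rw [hcase t ht]
      exact hQS t (hA ht)
    · push_neg at hcase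
      obtain ⟨t₀, ht₀A, ht₀ne⟩ := hcase
      set B' : Finset ℕ := A.filter (fun t => ∑ k ∈ Icc 1 j, m k t ≠ S t) with hB'
      have hB'ne : B'.Nonempty := ⟨t₀, by simp [hB', ht₀A, ht₀ne]⟩
      set ts : ℕ := B'.max' hB'ne with hts
      have htsB' : ts ∈ B' := B'.max'_mem hB'ne
      have htsA : ts ∈ A := (Finset.mem_filter.mp htsB').1
      have htsne : ∑ k ∈ Icc 1 j, m k ts ≠ S ts := (Finset.mem_filter.mp htsB').2
      obtain ⟨hts1, hts2⟩ := mem_Icc.mp (hA htsA)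
      -- after ts, greedy serves the full demand
      have hafter : ∀ t ∈ A, ts < t → ∑ k ∈ Icc 1 j, m k t = S t := by
        intro t ht hlt
        by_contra hne
        have : t ∈ B' := Finset.mem_filter.mpr ⟨ht, hne⟩
        exact absurd (B'.le_max' t this) (by omega)
      -- at ts, greedy exhausts the prefix inventory
      have hts_eq : ∑ k ∈ Icc 1 j, m k ts = ∑ k ∈ Icc 1 j, I k (ts - 1) := by
        have := hprefix ts htsA j hj
        rcases min_choice (S ts) (∑ k ∈ Icc 1 j, I k (ts - 1)) with h | h
        · rw [h] at this; exact absurd this htsne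
        · rw [h] at this; exact this
      -- inventory formula
      set BB : ℝ := ∑ k ∈ Icc 1 j, I0 k with hBB
      have hinv : ∑ k ∈ Icc 1 j, I k (ts - 1)
          = BB - ∑ τ ∈ Icc 1 (ts - 1), ∑ k ∈ Icc 1 j, m k τ := by
        rw [Finset.sum_comm (s := Icc 1 (ts - 1))]
        rw [hBB, ← Finset.sum_sub_distrib]
        exact Finset.sum_congr rfl fun k hk => hI k (hjK hk) (ts - 1)
      -- the sum over periods < ts equals the sum over A-periods < ts
      have hless : ∑ τ ∈ Icc 1 (ts - 1), ∑ k ∈ Icc 1 j, m k τ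
          = ∑ τ ∈ A.filter (fun t => t < ts), ∑ k ∈ Icc 1 j, m k τ := by
        refine (Finset.sum_subset ?_ ?_).symm
        · intro τ hτ
          obtain ⟨hτA, hτlt⟩ := Finset.mem_filter.mp hτ
          obtain ⟨h1, h2⟩ := mem_Icc.mp (hA hτA)
          simp; omega
        · intro τ hτ hτn
          obtain ⟨h1, h2⟩ := mem_Icc.mp hτ
          have hτT : τ ∈ Icc 1 T := by simp; omega
          have hτA : τ ∉ A := by
            intro hc
            exact hτn (Finset.mem_filter.mpr ⟨hc, by omega⟩)
          exact Finset.sum_eq_zero fun k hk => hmA' τ hτT hτA k (hjK hk)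
      -- split A at ts
      have hfle : A.filter (fun t => t ≤ ts)
          = insert ts (A.filter (fun t => t < ts)) := by
        ext a
        simp only [Finset.mem_filter, Finset.mem_insert]
        constructor
        · rintro ⟨ha, hle⟩
          rcases eq_or_lt_of_le hle with h | h
          · exact Or.inl h
          · exact Or.inr ⟨ha, h⟩
        · rintro (rfl | ⟨ha, hlt⟩)
          · exact ⟨htsA, le_rfl⟩
          · exact ⟨ha, le_of_lt hlt⟩
      have hts_not : ts ∉ A.filter (fun t => t < ts) := by simp
      -- greedy total over periods ≤ ts equals BB
      have hGle : ∑ t ∈ A.filter (fun t => t ≤ ts), ∑ k ∈ Icc 1 j, m k t = BB := by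
        rw [hfle, Finset.sum_insert hts_not, hts_eq, hinv, hless]; ring
      -- offline total over periods ≤ ts is at most BB
      have hOle : ∑ t ∈ A.filter (fun t => t ≤ ts), ∑ k ∈ Icc 1 j, mstar k t ≤ BB := by
        rw [Finset.sum_comm]
        refine Finset.sum_le_sum fun k hk => ?_
        refine le_trans ?_ (hmstar_inv k (hjK hk))
        refine Finset.sum_le_sum_of_subset_of_nonneg ?_
          (fun t ht _ => hmstar_nonneg k (hjK hk) t ht)
        exact (Finset.filter_subset _ A).trans hA
      -- offline total after ts is at most greedy total after ts
      have hOgt : ∑ t ∈ A.filter (fun t => ¬ t ≤ ts), ∑ k ∈ Icc 1 j, mstar k t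
          ≤ ∑ t ∈ A.filter (fun t => ¬ t ≤ ts), ∑ k ∈ Icc 1 j, m k t := by
        refine Finset.sum_le_sum fun t ht => ?_
        obtain ⟨htA, htgt⟩ := Finset.mem_filter.mp ht
        rw [hafter t htA (by omega)]
        exact hQS t (hA htA)
      calc ∑ t ∈ A, ∑ k ∈ Icc 1 j, mstar k t
          = ∑ t ∈ A.filter (fun t => t ≤ ts), ∑ k ∈ Icc 1 j, mstar k t
            + ∑ t ∈ A.filter (fun t => ¬ t ≤ ts), ∑ k ∈ Icc 1 j, mstar k t :=
            (Finset.sum_filter_add_sum_filter_not A _ _).symm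
        _ ≤ BB + ∑ t ∈ A.filter (fun t => ¬ t ≤ ts), ∑ k ∈ Icc 1 j, m k t :=
            add_le_add hOle hOgt
        _ = ∑ t ∈ A.filter (fun t => t ≤ ts), ∑ k ∈ Icc 1 j, m k t
            + ∑ t ∈ A.filter (fun t => ¬ t ≤ ts), ∑ k ∈ Icc 1 j, m k t := by rw [hGle]
        _ = ∑ t ∈ A, ∑ k ∈ Icc 1 j, m k t :=
            Finset.sum_filter_add_sum_filter_not A _ _
  have key' : ∀ j, j ≤ k0 →
      ∑ k ∈ Icc 1 j, ∑ t ∈ A, mstar k t ≤ ∑ k ∈ Icc 1 j, ∑ t ∈ A, m k t := by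
    intro j hj
    calc ∑ k ∈ Icc 1 j, ∑ t ∈ A, mstar k t
        = ∑ t ∈ A, ∑ k ∈ Icc 1 j, mstar k t := Finset.sum_comm
      _ ≤ ∑ t ∈ A, ∑ k ∈ Icc 1 j, m k t := key j hj
      _ = ∑ k ∈ Icc 1 j, ∑ t ∈ A, m k t := Finset.sum_comm
  -- f 0 ≤ f k for all k above k0
  have hf_high : ∀ k, k0 < k → k ≤ K → f 0 ≤ f k := by
    intro k
    induction k with
    | zero => omega
    | succ n ih =>
      intro h1 h2
      rcases Nat.lt_or_ge k0 n with h | h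
      · exact (ih h (by omega)).trans (hf_mono_high n h (by omega))
      · have : n = k0 := by omega
        subst this
        exact hf_0_le (by omega)
  -- rewrite the cost
  have expand : ∀ w : ℕ → ℕ → ℝ, ∀ t : ℕ,
      f 0 * (S t - ∑ k ∈ Icc 1 K, w k t) + ∑ k ∈ Icc 1 K, f k * w k t
        = f 0 * S t - ∑ k ∈ Icc 1 K, (f 0 - f k) * w k t := by
    intro w t
    simp only [sub_mul, Finset.sum_sub_distrib, ← Finset.mul_sum]
    ring
  simp only [expand]
  rw [Finset.sum_sub_distrib, Finset.sum_sub_distrib]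
  apply sub_le_sub_left
  -- split the FDC range at k0
  have hIK : ∀ g : ℕ → ℝ, ∑ k ∈ Icc 1 K, g k
      = ∑ k ∈ Icc 1 k0, g k + ∑ k ∈ Icc (k0 + 1) K, g k := by
    intro g
    have e1 : Icc 1 K = Ioc 0 K := by ext x; simp; omega
    have e2 : Icc 1 k0 = Ioc 0 k0 := by ext x; simp; omega
    have e3 : Icc (k0 + 1) K = Ioc k0 K := by ext x; simp
    rw [e1, e2, e3, Finset.sum_Ioc_consecutive _ (Nat.zero_le k0) hk0K]
  simp only [hIK]
  rw [Finset.sum_add_distrib, Finset.sum_add_distrib]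
  -- high part: greedy contributes 0, offline contributes ≤ 0
  have hhigh_m : ∑ t ∈ A, ∑ k ∈ Icc (k0 + 1) K, (f 0 - f k) * m k t = 0 := by
    refine Finset.sum_eq_zero fun t ht => Finset.sum_eq_zero fun k hk => ?_
    obtain ⟨h1, h2⟩ := mem_Icc.mp hk
    rw [hmA t ht k (by simp; omega), hmhat' k hk t (hA ht), mul_zero]
  have hhigh_star : ∑ t ∈ A, ∑ k ∈ Icc (k0 + 1) K, (f 0 - f k) * mstar k t ≤ 0 := by
    refine Finset.sum_nonpos fun t ht => Finset.sum_nonpos fun k hk => ?_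
    obtain ⟨h1, h2⟩ := mem_Icc.mp hk
    exact mul_nonpos_of_nonpos_of_nonneg (by linarith [hf_high k (by omega) h2])
      (hmstar_nonneg k (by simp; omega) t (hA ht))
  -- low part via Abel summation
  have hlow : ∑ t ∈ A, ∑ k ∈ Icc 1 k0, (f 0 - f k) * mstar k t
      ≤ ∑ t ∈ A, ∑ k ∈ Icc 1 k0, (f 0 - f k) * m k t := by
    have h1 : ∑ t ∈ A, ∑ k ∈ Icc 1 k0, (f 0 - f k) * mstar k t
        = ∑ k ∈ Icc 1 k0, (f 0 - f k) * ∑ t ∈ A, mstar k t := by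
      rw [Finset.sum_comm]
      exact Finset.sum_congr rfl fun k _ => (Finset.mul_sum _ _ _).symm
    have h2 : ∑ t ∈ A, ∑ k ∈ Icc 1 k0, (f 0 - f k) * m k t
        = ∑ k ∈ Icc 1 k0, (f 0 - f k) * ∑ t ∈ A, m k t := by
      rw [Finset.sum_comm]
      exact Finset.sum_congr rfl fun k _ => (Finset.mul_sum _ _ _).symm
    rw [h1, h2, ← sub_nonneg, ← Finset.sum_sub_distrib]
    have h3 : ∑ k ∈ Icc 1 k0,
        ((f 0 - f k) * ∑ t ∈ A, m k t - (f 0 - f k) * ∑ t ∈ A, mstar k t)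
        = ∑ k ∈ Icc 1 k0, (f 0 - f k) * ((∑ t ∈ A, m k t) - ∑ t ∈ A, mstar k t) :=
      Finset.sum_congr rfl fun k _ => (mul_sub _ _ _).symm
    rw [h3]
    have habel := abel_aux k0 (fun k => f 0 - f k)
      (fun k => (∑ t ∈ A, m k t) - ∑ t ∈ A, mstar k t)
      (fun k hh1 hh2 => by
        have := hf_mono_low k hh1 hh2
        simp only [sub_le_sub_iff_left]; linarith)
      (fun j hj => by
        rw [Finset.sum_sub_distrib, sub_nonneg]; exact key' j hj)
    have hd0 : 0 ≤ (f 0 - f k0) * ∑ k ∈ Icc 1 k0,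
        ((∑ t ∈ A, m k t) - ∑ t ∈ A, mstar k t) := by
      rcases Nat.eq_zero_or_pos k0 with h | h
      · subst h; simp
      · refine mul_nonneg (by linarith [hf_k0_lt h]) ?_
        rw [Finset.sum_sub_distrib, sub_nonneg]
        exact key' k0 le_rfl
    exact le_trans hd0 habel
  calc ∑ t ∈ A, ∑ k ∈ Icc 1 k0, (f 0 - f k) * mstar k t
        + ∑ t ∈ A, ∑ k ∈ Icc (k0 + 1) K, (f 0 - f k) * mstar k t
      ≤ ∑ t ∈ A, ∑ k ∈ Icc 1 k0, (f 0 - f k) * m k t + 0 := add_le_add hlow hhigh_star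
    _ = ∑ t ∈ A, ∑ k ∈ Icc 1 k0, (f 0 - f k) * m k t
        + ∑ t ∈ A, ∑ k ∈ Icc (k0 + 1) K, (f 0 - f k) * m k t := by rw [hhigh_m]
end

section
/- Fix integers T ≥ 1, K ≥ 1. Let c_0, c_1, …, c_K ≥ 0 be per-unit variable costs satisfying c_1 ≤ … ≤ c_{k0} < c_0 ≤ c_{k0+1} ≤ … ≤ c_K for some 0 ≤ k0 ≤ K. Let S_t ≥ 0 and I_{k,0} ≥ 0 be reals, let m be a gated FDC plan with pure greedy quantities m̂_{k,t} (FDCs 1,…,k0 prioritized in this order ahead of the RDC), let A = { t : Σ_{k=1}^{K} m_{k,t} > 0 }, and set m̂_{0,t} = S_t − Σ_{k=1}^{K} m̂_{k,t}. Let m* be a feasible offline FDC plan, extended by m*_{0,t} = S_t − Σ_{k=1}^{K} m*_{k,t}. Then for every set B with A ⊆ B ⊆ {1,…,T}, Σ_{t∈B} Σ_{k=0}^{K} c_k · m̂_{k,t} ≤ Σ_{t∈B} Σ_{k=0}^{K} c_k · m*_{k,t}. -/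
open Finset

private lemma greedy_min_add_aux (a b cv : ℝ) (hc : 0 ≤ cv) :
    min a b + min (max (a - b) 0) cv = min a (b + cv) := by
  simp only [min_def, max_def]
  split_ifs <;> linarith

private lemma greedy_tele (W : ℕ → ℝ) :
    ∀ b k, k ≤ b → ∑ j ∈ Icc k b, (W j - W (j + 1)) = W k - W (b + 1) := by
  intro b
  induction b with
  | zero =>
    intro k hk
    interval_cases k
    simp
  | succ b ih =>
    intro k hk
    rcases Nat.lt_or_ge k (b + 1) with h | h
    · rw [Finset.sum_Icc_succ_top (by omega : k ≤ b + 1), ih k (by omega)]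
      ring
    · have hkb : k = b + 1 := by omega
      subst hkb
      simp

/-- Claim 2 (variable-cost comparison): for any set `B` of periods containing all
periods in which the gated plan uses some FDC, the variable-cost weighted total of the
pure greedy quantities (including the RDC) is at most that of any feasible offline plan,
with variable costs satisfying `c_1 ≤ … ≤ c_{k0} < c_0 ≤ c_{k0+1} ≤ … ≤ c_K`. -/
theorem greedy_variable_cost_weighted_le_offline
    (T K k0 : ℕ) (hT : 1 ≤ T) (hK : 1 ≤ K) (hk0K : k0 ≤ K)
    (c : ℕ → ℝ) (hc : ∀ k, k ≤ K → 0 ≤ c k)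
    (hc_mono_low : ∀ k, 1 ≤ k → k < k0 → c k ≤ c (k + 1))
    (hc_k0_lt : 1 ≤ k0 → c k0 < c 0)
    (hc_0_le : k0 < K → c 0 ≤ c (k0 + 1))
    (hc_mono_high : ∀ k, k0 < k → k < K → c k ≤ c (k + 1))
    (S : ℕ → ℝ) (hS : ∀ t ∈ Icc 1 T, 0 ≤ S t)
    (I0 : ℕ → ℝ) (hI0 : ∀ k ∈ Icc 1 K, 0 ≤ I0 k)
    (m : ℕ → ℕ → ℝ) (hm : ∀ k ∈ Icc 1 K, ∀ t ∈ Icc 1 T, 0 ≤ m k t)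
    (I : ℕ → ℕ → ℝ)
    (hI : ∀ k ∈ Icc 1 K, ∀ t : ℕ, I k t = I0 k - ∑ τ ∈ Icc 1 t, m k τ)
    (mhat : ℕ → ℕ → ℝ)
    (hmhat : ∀ k ∈ Icc 1 k0, ∀ t ∈ Icc 1 T,
      mhat k t = min (max (S t - ∑ k' ∈ Icc 1 (k - 1), I k' (t - 1)) 0) (I k (t - 1)))
    (hmhat' : ∀ k ∈ Icc (k0 + 1) K, ∀ t ∈ Icc 1 T, mhat k t = 0)
    (hgated : ∀ t ∈ Icc 1 T,
      (∀ k ∈ Icc 1 K, m k t = mhat k t) ∨ (∀ k ∈ Icc 1 K, m k t = 0))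
    (mstar : ℕ → ℕ → ℝ)
    (hmstar_nonneg : ∀ k ∈ Icc 1 K, ∀ t ∈ Icc 1 T, 0 ≤ mstar k t)
    (hmstar_demand : ∀ t ∈ Icc 1 T, ∑ k ∈ Icc 1 K, mstar k t ≤ S t)
    (hmstar_inv : ∀ k ∈ Icc 1 K, ∑ t ∈ Icc 1 T, mstar k t ≤ I0 k)
    (B : Finset ℕ)
    (hAB : (Icc 1 T).filter (fun t => 0 < ∑ k ∈ Icc 1 K, m k t) ⊆ B)
    (hBT : B ⊆ Icc 1 T) :
    ∑ t ∈ B, (c 0 * (S t - ∑ k ∈ Icc 1 K, mhat k t) + ∑ k ∈ Icc 1 K, c k * mhat k t)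
      ≤ ∑ t ∈ B, (c 0 * (S t - ∑ k ∈ Icc 1 K, mstar k t)
          + ∑ k ∈ Icc 1 K, c k * mstar k t) := by
  -- basic inventory facts
  have hI00 : ∀ k ∈ Icc 1 K, I k 0 = I0 k := by
    intro k hk
    rw [hI k hk 0]
    simp
  have hIrec : ∀ k ∈ Icc 1 K, ∀ t : ℕ, I k (t + 1) = I k t - m k (t + 1) := by
    intro k hk t
    rw [hI k hk (t + 1), hI k hk t, Finset.sum_Icc_succ_top (by omega : 1 ≤ t + 1)]
    ring
  have hInn : ∀ t, t ≤ T → ∀ k ∈ Icc 1 K, 0 ≤ I k t := by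
    intro t
    induction t with
    | zero =>
      intro _ k hk
      rw [hI00 k hk]
      exact hI0 k hk
    | succ t ih =>
      intro ht k hk
      have hkK : 1 ≤ k ∧ k ≤ K := by simpa [mem_Icc] using hk
      have htT : t + 1 ∈ Icc 1 T := by simp [mem_Icc]; omega
      have h0 : 0 ≤ I k t := ih (by omega) k hk
      rw [hIrec k hk t]
      rcases hgated (t + 1) htT with hg | hg
      · rw [hg k hk]
        rcases le_or_gt k k0 with hkk | hkk
        · rw [hmhat k (by simp [mem_Icc]; omega) (t + 1) htT]
          simp only [Nat.add_sub_cancel]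
          have hle := min_le_right (max (S (t + 1) - ∑ k' ∈ Icc 1 (k - 1), I k' t) 0) (I k t)
          linarith
        · rw [hmhat' k (by simp [mem_Icc]; omega) (t + 1) htT]
          linarith
      · rw [hg k hk]
        linarith
  have hPnn : ∀ j, j ≤ K → ∀ t, t ≤ T → 0 ≤ ∑ k ∈ Icc 1 j, I k t := by
    intro j hj t ht
    apply Finset.sum_nonneg
    intro k hk
    have hk' : 1 ≤ k ∧ k ≤ j := by simpa [mem_Icc] using hk
    exact hInn t ht k (by simp [mem_Icc]; omega)
  -- prefix formula for greedy quantities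
  have hprefix : ∀ j, j ≤ k0 → ∀ t, t ∈ Icc 1 T →
      ∑ k ∈ Icc 1 j, mhat k t = min (S t) (∑ k ∈ Icc 1 j, I k (t - 1)) := by
    intro j
    induction j with
    | zero =>
      intro _ t ht
      simp only [Finset.Icc_eq_empty (by omega : ¬(1:ℕ) ≤ 0), Finset.sum_empty]
      exact (min_eq_right (hS t ht)).symm
    | succ j ih =>
      intro hj t ht
      have ht1 : 1 ≤ t ∧ t ≤ T := by simpa [mem_Icc] using ht
      have hjK : (j + 1) ∈ Icc 1 K := by simp [mem_Icc]; omega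
      have hcnn : 0 ≤ I (j + 1) (t - 1) := hInn (t - 1) (by omega) (j + 1) hjK
      rw [Finset.sum_Icc_succ_top (by omega : 1 ≤ j + 1),
        Finset.sum_Icc_succ_top (by omega : 1 ≤ j + 1),
        ih (by omega) t ht, hmhat (j + 1) (by simp [mem_Icc]; omega) t ht]
      simp only [Nat.add_sub_cancel]
      exact greedy_min_add_aux (S t) _ _ hcnn
  -- inventory telescoping
  have hPtel : ∀ j, j ≤ K → ∀ t : ℕ,
      ∑ k ∈ Icc 1 j, I k t = ∑ k ∈ Icc 1 j, I0 k - ∑ τ ∈ Icc 1 t, ∑ k ∈ Icc 1 j, m k τ := by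
    intro j hj t
    have hsw : ∑ τ ∈ Icc 1 t, ∑ k ∈ Icc 1 j, m k τ
        = ∑ k ∈ Icc 1 j, ∑ τ ∈ Icc 1 t, m k τ := Finset.sum_comm
    rw [hsw, ← Finset.sum_sub_distrib]
    apply Finset.sum_congr rfl
    intro k hk
    have hk' : 1 ≤ k ∧ k ≤ j := by simpa [mem_Icc] using hk
    exact hI k (by simp [mem_Icc]; omega) t
  -- core prefix-comparison lemma
  have hcore : ∀ j, j ≤ k0 →
      ∑ t ∈ B, ∑ k ∈ Icc 1 j, mstar k t ≤ ∑ t ∈ B, ∑ k ∈ Icc 1 j, mhat k t := by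
    intro j hj
    have hgB : ∀ t ∈ B, ∑ k ∈ Icc 1 j, mhat k t = min (S t) (∑ k ∈ Icc 1 j, I k (t - 1)) :=
      fun t ht => hprefix j hj t (hBT ht)
    have hgnn : ∀ t ∈ B, 0 ≤ min (S t) (∑ k ∈ Icc 1 j, I k (t - 1)) := by
      intro t ht
      have htI : t ∈ Icc 1 T := hBT ht
      have ht1 : 1 ≤ t ∧ t ≤ T := by simpa [mem_Icc] using htI
      exact le_min (hS t htI) (hPnn j (le_trans hj hk0K) (t - 1) (by omega))
    by_cases hcase : ∀ t ∈ B, S t ≤ ∑ k ∈ Icc 1 j, I k (t - 1)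
    · calc ∑ t ∈ B, ∑ k ∈ Icc 1 j, mstar k t ≤ ∑ t ∈ B, S t := by
            apply Finset.sum_le_sum
            intro t ht
            have htI := hBT ht
            calc ∑ k ∈ Icc 1 j, mstar k t ≤ ∑ k ∈ Icc 1 K, mstar k t := by
                  apply Finset.sum_le_sum_of_subset_of_nonneg
                    (Finset.Icc_subset_Icc_right (le_trans hj hk0K))
                  intro k hk _
                  exact hmstar_nonneg k hk t htI
              _ ≤ S t := hmstar_demand t htI
        _ = ∑ t ∈ B, ∑ k ∈ Icc 1 j, mhat k t := by
            apply Finset.sum_congr rfl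
            intro t ht
            rw [hgB t ht, min_eq_left (hcase t ht)]
    · push_neg at hcase
      obtain ⟨t0, ht0B, ht0⟩ := hcase
      have ht0I : t0 ∈ Icc 1 T := hBT ht0B
      have ht01 : 1 ≤ t0 ∧ t0 ≤ T := by simpa [mem_Icc] using ht0I
      have step1 : ∑ t ∈ B, ∑ k ∈ Icc 1 j, mstar k t ≤ ∑ k ∈ Icc 1 j, I0 k := by
        rw [Finset.sum_comm]
        apply Finset.sum_le_sum
        intro k hk
        have hk' : 1 ≤ k ∧ k ≤ j := by simpa [mem_Icc] using hk
        have hkK : k ∈ Icc 1 K := by simp [mem_Icc]; omega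
        calc ∑ t ∈ B, mstar k t ≤ ∑ t ∈ Icc 1 T, mstar k t := by
              apply Finset.sum_le_sum_of_subset_of_nonneg hBT
              intro t htT _
              exact hmstar_nonneg k hkK t htT
          _ ≤ I0 k := hmstar_inv k hkK
      have hcons : ∑ τ ∈ Icc 1 (t0 - 1), ∑ k ∈ Icc 1 j, m k τ
          ≤ ∑ τ ∈ (Icc 1 (t0 - 1)).filter (· ∈ B),
              min (S τ) (∑ k ∈ Icc 1 j, I k (τ - 1)) := by
        rw [Finset.sum_filter]
        apply Finset.sum_le_sum
        intro τ hτ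
        have hτ1 : 1 ≤ τ ∧ τ ≤ t0 - 1 := by simpa [mem_Icc] using hτ
        have hτT : τ ∈ Icc 1 T := by simp [mem_Icc]; omega
        by_cases hτB : τ ∈ B
        · rw [if_pos hτB]
          rcases hgated τ hτT with hg | hg
          · rw [← hprefix j hj τ hτT]
            apply le_of_eq
            apply Finset.sum_congr rfl
            intro k hk
            have hk' : 1 ≤ k ∧ k ≤ j := by simpa [mem_Icc] using hk
            exact hg k (by simp [mem_Icc]; omega)
          · have hz : ∑ k ∈ Icc 1 j, m k τ = 0 := by
              apply Finset.sum_eq_zero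
              intro k hk
              have hk' : 1 ≤ k ∧ k ≤ j := by simpa [mem_Icc] using hk
              exact hg k (by simp [mem_Icc]; omega)
            rw [hz]
            exact hgnn τ hτB
        · rw [if_neg hτB]
          have hnA : τ ∉ (Icc 1 T).filter (fun t => 0 < ∑ k ∈ Icc 1 K, m k t) :=
            fun hx => hτB (hAB hx)
          have hKle : ∑ k ∈ Icc 1 K, m k τ ≤ 0 := by
            by_contra h
            push_neg at h
            exact hnA (Finset.mem_filter.mpr ⟨hτT, h⟩)
          calc ∑ k ∈ Icc 1 j, m k τ ≤ ∑ k ∈ Icc 1 K, m k τ := by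
                apply Finset.sum_le_sum_of_subset_of_nonneg
                  (Finset.Icc_subset_Icc_right (le_trans hj hk0K))
                intro k hk _
                exact hm k hk τ hτT
            _ ≤ 0 := hKle
      have hsetEq : (Icc 1 (t0 - 1)).filter (· ∈ B) = B.filter (· ≤ t0 - 1) := by
        ext τ
        simp only [Finset.mem_filter, mem_Icc]
        constructor
        · rintro ⟨⟨h1, h2⟩, h3⟩
          exact ⟨h3, h2⟩
        · rintro ⟨h1, h2⟩
          have hτI := hBT h1
          simp only [mem_Icc] at hτI
          exact ⟨⟨hτI.1, h2⟩, h1⟩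
      have hPt0 := hPtel j (le_trans hj hk0K) (t0 - 1)
      have hgt0 : min (S t0) (∑ k ∈ Icc 1 j, I k (t0 - 1)) = ∑ k ∈ Icc 1 j, I k (t0 - 1) :=
        min_eq_right (le_of_lt ht0)
      have hsub : insert t0 (B.filter (· ≤ t0 - 1)) ⊆ B := by
        intro x hx
        rcases Finset.mem_insert.mp hx with h | h
        · rwa [h]
        · exact (Finset.mem_filter.mp h).1
      have ht0nmem : t0 ∉ B.filter (· ≤ t0 - 1) := by
        simp only [Finset.mem_filter]
        rintro ⟨_, h⟩
        omega
      have step2 : ∑ k ∈ Icc 1 j, I0 k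
          ≤ ∑ t ∈ B, min (S t) (∑ k ∈ Icc 1 j, I k (t - 1)) := by
        have h1 : ∑ k ∈ Icc 1 j, I0 k
            ≤ ∑ k ∈ Icc 1 j, I k (t0 - 1)
              + ∑ τ ∈ B.filter (· ≤ t0 - 1), min (S τ) (∑ k ∈ Icc 1 j, I k (τ - 1)) := by
          rw [← hsetEq]
          linarith [hcons]
        have h2 : ∑ k ∈ Icc 1 j, I k (t0 - 1)
              + ∑ τ ∈ B.filter (· ≤ t0 - 1), min (S τ) (∑ k ∈ Icc 1 j, I k (τ - 1))
            = ∑ τ ∈ insert t0 (B.filter (· ≤ t0 - 1)),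
                min (S τ) (∑ k ∈ Icc 1 j, I k (τ - 1)) := by
          rw [Finset.sum_insert ht0nmem, hgt0]
        have h3 : ∑ τ ∈ insert t0 (B.filter (· ≤ t0 - 1)),
              min (S τ) (∑ k ∈ Icc 1 j, I k (τ - 1))
            ≤ ∑ t ∈ B, min (S t) (∑ k ∈ Icc 1 j, I k (t - 1)) := by
          apply Finset.sum_le_sum_of_subset_of_nonneg hsub
          intro t ht _
          exact hgnn t ht
        linarith
      calc ∑ t ∈ B, ∑ k ∈ Icc 1 j, mstar k t ≤ ∑ k ∈ Icc 1 j, I0 k := step1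
        _ ≤ ∑ t ∈ B, min (S t) (∑ k ∈ Icc 1 j, I k (t - 1)) := step2
        _ = ∑ t ∈ B, ∑ k ∈ Icc 1 j, mhat k t := by
            apply Finset.sum_congr rfl
            intro t ht
            exact (hgB t ht).symm
  -- rewrite the goal with weights c 0 - c k
  have hrw : ∀ (x : ℕ → ℕ → ℝ) (t : ℕ),
      c 0 * (S t - ∑ k ∈ Icc 1 K, x k t) + ∑ k ∈ Icc 1 K, c k * x k t
        = c 0 * S t - ∑ k ∈ Icc 1 K, (c 0 - c k) * x k t := by
    intro x t
    have h1 : ∑ k ∈ Icc 1 K, (c 0 - c k) * x k t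
        = ∑ k ∈ Icc 1 K, c 0 * x k t - ∑ k ∈ Icc 1 K, c k * x k t := by
      rw [← Finset.sum_sub_distrib]
      apply Finset.sum_congr rfl
      intro k _
      ring
    rw [h1, ← Finset.mul_sum]
    ring
  have main : ∑ t ∈ B, ∑ k ∈ Icc 1 K, (c 0 - c k) * mstar k t
      ≤ ∑ t ∈ B, ∑ k ∈ Icc 1 K, (c 0 - c k) * mhat k t := by
    -- split the index range at k0
    have hsplit : ∀ (x : ℕ → ℕ → ℝ) (t : ℕ), ∑ k ∈ Icc 1 K, (c 0 - c k) * x k t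
        = ∑ k ∈ Icc 1 k0, (c 0 - c k) * x k t
          + ∑ k ∈ Icc (k0 + 1) K, (c 0 - c k) * x k t := by
      intro x t
      rw [← Finset.Ico_add_one_right_eq_Icc 1 K, ← Finset.Ico_add_one_right_eq_Icc 1 k0, ← Finset.Ico_add_one_right_eq_Icc (k0 + 1) K,
        ← Finset.sum_Ico_consecutive _ (by omega : 1 ≤ k0 + 1) (by omega : k0 + 1 ≤ K + 1)]
    have hchigh : ∀ k, k0 < k → k ≤ K → c 0 ≤ c k := by
      intro k
      induction k with
      | zero => omega
      | succ k ih =>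
        intro h1 h2
        rcases Nat.lt_or_ge k0 k with h | h
        · exact le_trans (ih h (by omega)) (hc_mono_high k h (by omega))
        · have hk0 : k0 = k := by omega
          subst hk0
          exact hc_0_le (by omega)
    have hhigh_star : ∀ t ∈ B, ∑ k ∈ Icc (k0 + 1) K, (c 0 - c k) * mstar k t ≤ 0 := by
      intro t ht
      apply Finset.sum_nonpos
      intro k hk
      have hk' : k0 + 1 ≤ k ∧ k ≤ K := by simpa [mem_Icc] using hk
      apply mul_nonpos_of_nonpos_of_nonneg
      · have := hchigh k (by omega) hk'.2
        linarith
      · exact hmstar_nonneg k (by simp [mem_Icc]; omega) t (hBT ht)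
    have hhigh_hat : ∀ t ∈ B, ∑ k ∈ Icc (k0 + 1) K, (c 0 - c k) * mhat k t = 0 := by
      intro t ht
      apply Finset.sum_eq_zero
      intro k hk
      rw [hmhat' k hk t (hBT ht), mul_zero]
    -- low part via Abel summation
    have hlow : ∑ t ∈ B, ∑ k ∈ Icc 1 k0, (c 0 - c k) * mstar k t
        ≤ ∑ t ∈ B, ∑ k ∈ Icc 1 k0, (c 0 - c k) * mhat k t := by
      have hwk : ∀ k ∈ Icc 1 k0, c 0 - c k
          = ∑ jj ∈ Icc k k0, ((if jj ≤ k0 then c 0 - c jj else 0)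
              - (if jj + 1 ≤ k0 then c 0 - c (jj + 1) else 0)) := by
        intro k hk
        have hk' : 1 ≤ k ∧ k ≤ k0 := by simpa [mem_Icc] using hk
        rw [greedy_tele (fun jj => if jj ≤ k0 then c 0 - c jj else 0) k0 k hk'.2]
        simp only [if_pos hk'.2, if_neg (by omega : ¬ k0 + 1 ≤ k0)]
        ring
      have hDnn : ∀ jj ∈ Icc 1 k0,
          0 ≤ ∑ k ∈ Icc 1 jj, (∑ t ∈ B, mhat k t - ∑ t ∈ B, mstar k t) := by
        intro jj hjj
        have hjj' : 1 ≤ jj ∧ jj ≤ k0 := by simpa [mem_Icc] using hjj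
        have hco := hcore jj hjj'.2
        have e1 : ∑ k ∈ Icc 1 jj, (∑ t ∈ B, mhat k t - ∑ t ∈ B, mstar k t)
            = ∑ t ∈ B, ∑ k ∈ Icc 1 jj, mhat k t - ∑ t ∈ B, ∑ k ∈ Icc 1 jj, mstar k t := by
          rw [Finset.sum_sub_distrib]
          congr 1
          · exact Finset.sum_comm
          · exact Finset.sum_comm
        rw [e1]
        linarith
      have hdnn : ∀ jj ∈ Icc 1 k0,
          0 ≤ (if jj ≤ k0 then c 0 - c jj else 0)
              - (if jj + 1 ≤ k0 then c 0 - c (jj + 1) else 0) := by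
        intro jj hjj
        have hjj' : 1 ≤ jj ∧ jj ≤ k0 := by simpa [mem_Icc] using hjj
        rcases Nat.lt_or_ge jj k0 with h | h
        · rw [if_pos hjj'.2, if_pos (by omega : jj + 1 ≤ k0)]
          have := hc_mono_low jj hjj'.1 h
          linarith
        · have hjk : jj = k0 := by omega
          subst hjk
          rw [if_pos le_rfl, if_neg (by omega : ¬ jj + 1 ≤ jj)]
          have := hc_k0_lt (by omega)
          linarith
      have habel : ∑ k ∈ Icc 1 k0, (c 0 - c k) * (∑ t ∈ B, mhat k t - ∑ t ∈ B, mstar k t)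
          = ∑ jj ∈ Icc 1 k0, ((if jj ≤ k0 then c 0 - c jj else 0)
              - (if jj + 1 ≤ k0 then c 0 - c (jj + 1) else 0))
              * ∑ k ∈ Icc 1 jj, (∑ t ∈ B, mhat k t - ∑ t ∈ B, mstar k t) := by
        calc ∑ k ∈ Icc 1 k0, (c 0 - c k) * (∑ t ∈ B, mhat k t - ∑ t ∈ B, mstar k t)
            = ∑ k ∈ Icc 1 k0, ∑ jj ∈ Icc k k0,
                ((if jj ≤ k0 then c 0 - c jj else 0)
                  - (if jj + 1 ≤ k0 then c 0 - c (jj + 1) else 0))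
                * (∑ t ∈ B, mhat k t - ∑ t ∈ B, mstar k t) := by
              apply Finset.sum_congr rfl
              intro k hk
              rw [hwk k hk, Finset.sum_mul]
          _ = ∑ k ∈ Icc 1 k0, ∑ jj ∈ Icc 1 k0,
                if k ≤ jj then
                  ((if jj ≤ k0 then c 0 - c jj else 0)
                    - (if jj + 1 ≤ k0 then c 0 - c (jj + 1) else 0))
                  * (∑ t ∈ B, mhat k t - ∑ t ∈ B, mstar k t)
                else 0 := by
              apply Finset.sum_congr rfl
              intro k hk
              have hk' : 1 ≤ k ∧ k ≤ k0 := by simpa [mem_Icc] using hk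
              have hfe : (Icc 1 k0).filter (fun jj => k ≤ jj) = Icc k k0 := by
                ext jj
                simp only [Finset.mem_filter, mem_Icc]
                omega
              rw [← hfe, Finset.sum_filter]
          _ = ∑ jj ∈ Icc 1 k0, ∑ k ∈ Icc 1 k0,
                if k ≤ jj then
                  ((if jj ≤ k0 then c 0 - c jj else 0)
                    - (if jj + 1 ≤ k0 then c 0 - c (jj + 1) else 0))
                  * (∑ t ∈ B, mhat k t - ∑ t ∈ B, mstar k t)
                else 0 := Finset.sum_comm
          _ = ∑ jj ∈ Icc 1 k0, ∑ k ∈ Icc 1 jj,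
                ((if jj ≤ k0 then c 0 - c jj else 0)
                  - (if jj + 1 ≤ k0 then c 0 - c (jj + 1) else 0))
                * (∑ t ∈ B, mhat k t - ∑ t ∈ B, mstar k t) := by
              apply Finset.sum_congr rfl
              intro jj hjj
              have hjj' : 1 ≤ jj ∧ jj ≤ k0 := by simpa [mem_Icc] using hjj
              have hfe : (Icc 1 k0).filter (fun k => k ≤ jj) = Icc 1 jj := by
                ext k
                simp only [Finset.mem_filter, mem_Icc]
                omega
              rw [← hfe, Finset.sum_filter]
          _ = _ := by
              apply Finset.sum_congr rfl
              intro jj _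
              rw [Finset.mul_sum]
      have hFnn : 0 ≤ ∑ k ∈ Icc 1 k0, (c 0 - c k) * (∑ t ∈ B, mhat k t - ∑ t ∈ B, mstar k t) := by
        rw [habel]
        apply Finset.sum_nonneg
        intro jj hjj
        exact mul_nonneg (hdnn jj hjj) (hDnn jj hjj)
      have e2 : ∑ t ∈ B, ∑ k ∈ Icc 1 k0, (c 0 - c k) * mhat k t
          - ∑ t ∈ B, ∑ k ∈ Icc 1 k0, (c 0 - c k) * mstar k t
          = ∑ k ∈ Icc 1 k0, (c 0 - c k) * (∑ t ∈ B, mhat k t - ∑ t ∈ B, mstar k t) := by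
        rw [Finset.sum_comm (s := B) (t := Icc 1 k0),
          Finset.sum_comm (s := B) (t := Icc 1 k0), ← Finset.sum_sub_distrib]
        apply Finset.sum_congr rfl
        intro k _
        rw [← Finset.mul_sum, ← Finset.mul_sum]
        ring
      linarith
    calc ∑ t ∈ B, ∑ k ∈ Icc 1 K, (c 0 - c k) * mstar k t
        = ∑ t ∈ B, ∑ k ∈ Icc 1 k0, (c 0 - c k) * mstar k t
          + ∑ t ∈ B, ∑ k ∈ Icc (k0 + 1) K, (c 0 - c k) * mstar k t := by
          rw [← Finset.sum_add_distrib]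
          exact Finset.sum_congr rfl (fun t _ => hsplit mstar t)
      _ ≤ ∑ t ∈ B, ∑ k ∈ Icc 1 k0, (c 0 - c k) * mstar k t := by
          have hle : ∑ t ∈ B, ∑ k ∈ Icc (k0 + 1) K, (c 0 - c k) * mstar k t ≤ 0 :=
            Finset.sum_nonpos hhigh_star
          linarith
      _ ≤ ∑ t ∈ B, ∑ k ∈ Icc 1 k0, (c 0 - c k) * mhat k t := hlow
      _ = ∑ t ∈ B, ∑ k ∈ Icc 1 K, (c 0 - c k) * mhat k t := by
          apply Finset.sum_congr rfl
          intro t ht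
          rw [hsplit mhat t, hhigh_hat t ht, add_zero]
  calc ∑ t ∈ B, (c 0 * (S t - ∑ k ∈ Icc 1 K, mhat k t) + ∑ k ∈ Icc 1 K, c k * mhat k t)
      = ∑ t ∈ B, (c 0 * S t - ∑ k ∈ Icc 1 K, (c 0 - c k) * mhat k t) := by
        exact Finset.sum_congr rfl (fun t _ => hrw mhat t)
    _ ≤ ∑ t ∈ B, (c 0 * S t - ∑ k ∈ Icc 1 K, (c 0 - c k) * mstar k t) := by
        rw [Finset.sum_sub_distrib, Finset.sum_sub_distrib]
        linarith
    _ = ∑ t ∈ B, (c 0 * (S t - ∑ k ∈ Icc 1 K, mstar k t) + ∑ k ∈ Icc 1 K, c k * mstar k t) := by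
        exact Finset.sum_congr rfl (fun t _ => (hrw mstar t).symm)
end

section
/- Fix an integer T ≥ 1 and reals 0 < a ≤ b. Let c_{0,t}, c_{1,t} ∈ [a,b] for t = 1,…,T, let S_t ≥ 0 and I_0 ≥ 0 be reals, and let A₁ = { t : c_{1,t} < √(a/b)·c_{0,t} }. Let m_{1,t} ≥ 0 be an FDC plan with remaining inventory I_t = I_0 − Σ_{τ=1}^{t} m_{1,τ}, define m̂_{1,t} = min{S_t, I_{t−1}} if t ∈ A₁ and m̂_{1,t} = 0 otherwise, and m̂_{0,t} = S_t − m̂_{1,t}; suppose for every t either m_{1,t} = m̂_{1,t} or m_{1,t} = 0. Let m*_{1,t} ∈ [0, S_t] with Σ_{t=1}^{T} m*_{1,t} ≤ I_0, and set m*_{0,t} = S_t − m*_{1,t}. Then for every set B with { t : m_{1,t} > 0 } ⊆ B ⊆ {1,…,T}, Σ_{t∈B} ( c_{0,t}·m̂_{0,t} + c_{1,t}·m̂_{1,t} ) ≤ √(b/a) · Σ_{t∈B} ( c_{0,t}·m*_{0,t} + c_{1,t}·m*_{1,t} ). -/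
/-!
Let `r = √(b/a)`, so that the threshold `c₁ < √(a/b)·c₀` reads `r·c₁ < c₀`. On a period that fails
the threshold the greedy plan ships everything from the RDC at cost `c₀·S ≤ r·(c₀ m₀* + c₁ m₁*)`,
since both `c₀ ≤ r c₀` and `c₀ ≤ r c₁`. On the set `A` of periods in `B` that pass it, every unit
costs the greedy plan at most `b` from the RDC and at most `r·a = √(ab)` from the FDC, while it
costs the offline plan at least `b/r` resp. `a`; so the claim reduces to the greedy plan shipping
at least as much from the FDC over `A` as the offline plan. Either the greedy plan always covers
the whole order on `A`, or at some period of `A` it empties the FDC; everything shipped from the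
FDC before then was shipped by the greedy plan on `A` (the gated plan only ships in periods of
`B` where it agrees with the greedy one), so the greedy plan ships at least `I₀` over `A`, which
bounds the offline plan.
-/

open Finset

section Inventory

variable {m I : ℕ → ℝ} {I0 : ℝ}

theorem inventory_succ (hI : ∀ t, I t = I0 - ∑ τ ∈ Icc 1 t, m τ) (t : ℕ) :
    I (t + 1) = I t - m (t + 1) := by
  rw [hI, hI, sum_Icc_succ_top (Nat.le_add_left 1 t)]
  ring

theorem inventory_nonneg {T : ℕ} (hI : ∀ t, I t = I0 - ∑ τ ∈ Icc 1 t, m τ) (hI0 : 0 ≤ I0)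
    (hm : ∀ t ∈ Icc 1 T, m t = 0 ∨ m t ≤ I (t - 1)) : ∀ t ≤ T, 0 ≤ I t := by
  intro t
  induction t with
  | zero => intro _; simpa [hI] using hI0
  | succ n ih =>
    intro hn
    have hIn := ih (by omega)
    rw [inventory_succ hI]
    rcases hm (n + 1) (mem_Icc.2 ⟨by omega, hn⟩) with h | h
    · linarith
    · rw [Nat.add_sub_cancel] at h
      linarith

end Inventory

theorem sum_le_sum_of_ne_zero_imp {ι : Type*} {s t : Finset ι} {f g : ι → ℝ}
    (h : ∀ i ∈ s, f i ≠ 0 → i ∈ t ∧ f i ≤ g i) (hg : ∀ i ∈ t, 0 ≤ g i) :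
    ∑ i ∈ s, f i ≤ ∑ i ∈ t, g i := by
  classical
  calc ∑ i ∈ s, f i = ∑ i ∈ s with i ∈ t, f i :=
        (sum_filter_of_ne fun i hi hne => (h i hi hne).1).symm
    _ ≤ ∑ i ∈ s with i ∈ t, g i := by
        refine sum_le_sum fun i hi => ?_
        obtain ⟨his, hit⟩ := mem_filter.1 hi
        by_cases hf : f i = 0
        · exact hf ▸ hg i hit
        · exact (h i his hf).2
    _ ≤ ∑ i ∈ t, g i :=
        sum_le_sum_of_subset_of_nonneg (fun i hi => (mem_filter.1 hi).2) fun i hi _ => hg i hi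

theorem sum_le_sum_of_min_inventory {A : Finset ℕ} {x y S I : ℕ → ℝ} {I0 : ℝ}
    (hy : ∀ t ∈ A, y t = min (S t) (I (t - 1))) (hy0 : ∀ t ∈ A, 0 ≤ y t)
    (hxS : ∀ t ∈ A, x t ≤ S t) (hxI0 : ∑ t ∈ A, x t ≤ I0)
    (hused : ∀ t ∈ A, I0 - I (t - 1) ≤ ∑ τ ∈ A with τ < t, y τ) :
    ∑ t ∈ A, x t ≤ ∑ t ∈ A, y t := by
  by_cases hshort : ∃ t ∈ A, I (t - 1) < S t
  · obtain ⟨t, ht, hlt⟩ := hshort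
    have hyt : y t = I (t - 1) := (hy t ht).trans (min_eq_right hlt.le)
    have hprefix : y t + ∑ τ ∈ A with τ < t, y τ ≤ ∑ τ ∈ A, y τ := by
      rw [← sum_insert (by simp)]
      exact sum_le_sum_of_subset_of_nonneg (insert_subset ht (filter_subset _ _))
        fun τ hτ _ => hy0 τ hτ
    linarith [hused t ht]
  · simp only [not_exists, not_and, not_lt] at hshort
    exact sum_le_sum fun t ht => (hxS t ht).trans ((hy t ht).trans (min_eq_left (hshort t ht))).ge

section GatedGreedy

variable {T : ℕ} {p : ℕ → Prop} [DecidablePred p] {S y m I : ℕ → ℝ} {I0 : ℝ}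

theorem gated_inventory_nonneg (hI : ∀ t, I t = I0 - ∑ τ ∈ Icc 1 t, m τ) (hI0 : 0 ≤ I0)
    (hy : ∀ t ∈ Icc 1 T, y t = if p t then min (S t) (I (t - 1)) else 0)
    (hgated : ∀ t ∈ Icc 1 T, m t = y t ∨ m t = 0) : ∀ t ≤ T, 0 ≤ I t :=
  inventory_nonneg hI hI0 fun t ht => by
    rcases hgated t ht with h | h
    · rw [h, hy t ht]
      split_ifs
      · exact Or.inr (min_le_right _ _)
      · exact Or.inl rfl
    · exact Or.inl h

theorem greedy_nonneg_le (hS : ∀ t ∈ Icc 1 T, 0 ≤ S t) (hInv : ∀ t ≤ T, 0 ≤ I t)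
    (hy : ∀ t ∈ Icc 1 T, y t = if p t then min (S t) (I (t - 1)) else 0) :
    ∀ t ∈ Icc 1 T, 0 ≤ y t ∧ y t ≤ S t := by
  intro t ht
  have hIt : 0 ≤ I (t - 1) := hInv _ (by grind)
  rw [hy t ht]
  split_ifs
  · exact ⟨le_min (hS t ht) hIt, min_le_left _ _⟩
  · exact ⟨le_rfl, hS t ht⟩

theorem gated_nonneg_le (hy0 : ∀ t ∈ Icc 1 T, 0 ≤ y t)
    (hgated : ∀ t ∈ Icc 1 T, m t = y t ∨ m t = 0) :
    ∀ t ∈ Icc 1 T, 0 ≤ m t ∧ m t ≤ y t := by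
  intro t ht
  rcases hgated t ht with h | h <;> rw [h]
  · exact ⟨hy0 t ht, le_rfl⟩
  · exact ⟨le_rfl, hy0 t ht⟩

theorem gated_used_le_greedy_sum {B : Finset ℕ} (hI : ∀ t, I t = I0 - ∑ τ ∈ Icc 1 t, m τ)
    (hy : ∀ t ∈ Icc 1 T, y t = if p t then min (S t) (I (t - 1)) else 0)
    (hy0 : ∀ t ∈ Icc 1 T, 0 ≤ y t) (hgated : ∀ t ∈ Icc 1 T, m t = y t ∨ m t = 0)
    (hmB : (Icc 1 T).filter (fun t => 0 < m t) ⊆ B) (hBT : B ⊆ Icc 1 T) :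
    ∀ t ∈ B.filter p, I0 - I (t - 1) ≤ ∑ τ ∈ B.filter p with τ < t, y τ := by
  intro t ht
  have htT := mem_Icc.1 (hBT (mem_filter.1 ht).1)
  rw [hI, sub_sub_cancel]
  refine sum_le_sum_of_ne_zero_imp (fun τ hτ hne => ?_) fun τ hτ => hy0 τ (hBT (by grind))
  have hτT : τ ∈ Icc 1 T := by grind
  obtain ⟨hm0, hmy⟩ := gated_nonneg_le hy0 hgated τ hτT
  have hmτ : m τ = y τ := (hgated τ hτT).resolve_right hne
  have hpτ : p τ := by
    by_contra hnp
    rw [hy τ hτT, if_neg hnp] at hmτ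
    exact hne hmτ
  have hτB : τ ∈ B := hmB (mem_filter.2 ⟨hτT, lt_of_le_of_ne hm0 (Ne.symm hne)⟩)
  exact ⟨mem_filter.2 ⟨mem_filter.2 ⟨hτB, hpτ⟩, by grind⟩, hmy⟩

theorem offline_sum_le_gated_greedy_sum {B : Finset ℕ} {x : ℕ → ℝ}
    (hI : ∀ t, I t = I0 - ∑ τ ∈ Icc 1 t, m τ)
    (hy : ∀ t ∈ Icc 1 T, y t = if p t then min (S t) (I (t - 1)) else 0)
    (hy0 : ∀ t ∈ Icc 1 T, 0 ≤ y t) (hgated : ∀ t ∈ Icc 1 T, m t = y t ∨ m t = 0)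
    (hx : ∀ t ∈ Icc 1 T, 0 ≤ x t ∧ x t ≤ S t) (hxI0 : ∑ t ∈ Icc 1 T, x t ≤ I0)
    (hmB : (Icc 1 T).filter (fun t => 0 < m t) ⊆ B) (hBT : B ⊆ Icc 1 T) :
    ∑ t ∈ B.filter p, x t ≤ ∑ t ∈ B.filter p, y t := by
  have hsub : B.filter p ⊆ Icc 1 T := (filter_subset _ _).trans hBT
  refine sum_le_sum_of_min_inventory (fun t ht => ?_) (fun t ht => hy0 t (hsub ht))
    (fun t ht => (hx t (hsub ht)).2) ?_ (gated_used_le_greedy_sum hI hy hy0 hgated hmB hBT)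
  · rw [hy t (hsub ht), if_pos (mem_filter.1 ht).2]
  · exact (sum_le_sum_of_subset_of_nonneg hsub fun t ht _ => (hx t ht).1).trans hxI0

end GatedGreedy

section Cost

variable {a b r c0 c1 S x y : ℝ}

theorem cheap_greedy_cost_le (hr : 0 < r) (hb : r ^ 2 * a = b) (hc0 : c0 ≤ b)
    (hc : r * c1 ≤ c0) (hy0 : 0 ≤ y) (hyS : y ≤ S) :
    c0 * (S - y) + c1 * y ≤ b * (S - y) + r * a * y := by
  have hc1 : c1 ≤ r * a := le_of_mul_le_mul_left (by nlinarith) hr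
  nlinarith [mul_le_mul_of_nonneg_right hc0 (sub_nonneg.2 hyS), mul_le_mul_of_nonneg_right hc1 hy0]

theorem cheap_offline_cost_ge (hr : 0 ≤ r) (hb : r ^ 2 * a = b) (hc1 : a ≤ c1)
    (hc : r * c1 ≤ c0) (hx0 : 0 ≤ x) (hxS : x ≤ S) :
    b * (S - x) + r * a * x ≤ r * (c0 * (S - x) + c1 * x) := by
  have hrc0 : b ≤ r * c0 := by nlinarith [mul_le_mul_of_nonneg_left hc1 hr]
  nlinarith [mul_le_mul_of_nonneg_right hrc0 (sub_nonneg.2 hxS),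
    mul_le_mul_of_nonneg_right (mul_le_mul_of_nonneg_left hc1 hr) hx0]

theorem expensive_cost_le (hr : 1 ≤ r) (hc0 : 0 ≤ c0) (hc : c0 ≤ r * c1) (hx0 : 0 ≤ x)
    (hxS : x ≤ S) : c0 * S ≤ r * (c0 * (S - x) + c1 * x) := by
  nlinarith [mul_le_mul_of_nonneg_right hr (mul_nonneg hc0 (sub_nonneg.2 hxS)),
    mul_le_mul_of_nonneg_right hc hx0]

end Cost

theorem sum_capped_cost_anti {ι : Type*} {s : Finset ι} {g b : ℝ} {S x y : ι → ℝ} (hgb : g ≤ b)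
    (hxy : ∑ i ∈ s, x i ≤ ∑ i ∈ s, y i) :
    ∑ i ∈ s, (b * (S i - y i) + g * y i) ≤ ∑ i ∈ s, (b * (S i - x i) + g * x i) := by
  have hsum : ∀ z : ι → ℝ,
      ∑ i ∈ s, (b * (S i - z i) + g * z i) = b * ∑ i ∈ s, S i - (b - g) * ∑ i ∈ s, z i := by
    intro z
    simp only [mul_sum, ← sum_sub_distrib]
    exact sum_congr rfl fun i _ => by ring
  rw [hsum, hsum]
  nlinarith

section CostSums

variable {a b r : ℝ} {s : Finset ℕ} {c0 c1 S x y : ℕ → ℝ}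

theorem sum_cost_le_of_cheap (hr : 1 ≤ r) (hb : r ^ 2 * a = b) (ha : 0 ≤ a)
    (hc0 : ∀ t ∈ s, c0 t ≤ b) (hc1 : ∀ t ∈ s, a ≤ c1 t) (hc : ∀ t ∈ s, r * c1 t < c0 t)
    (hy : ∀ t ∈ s, 0 ≤ y t ∧ y t ≤ S t) (hx : ∀ t ∈ s, 0 ≤ x t ∧ x t ≤ S t)
    (hxy : ∑ t ∈ s, x t ≤ ∑ t ∈ s, y t) :
    ∑ t ∈ s, (c0 t * (S t - y t) + c1 t * y t)
      ≤ r * ∑ t ∈ s, (c0 t * (S t - x t) + c1 t * x t) := by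
  have hra : r * a ≤ b := by
    nlinarith [mul_le_mul_of_nonneg_right hr (mul_nonneg (zero_le_one.trans hr) ha)]
  calc ∑ t ∈ s, (c0 t * (S t - y t) + c1 t * y t)
      ≤ ∑ t ∈ s, (b * (S t - y t) + r * a * y t) := sum_le_sum fun t ht =>
        cheap_greedy_cost_le (by linarith) hb (hc0 t ht) (hc t ht).le (hy t ht).1 (hy t ht).2
    _ ≤ ∑ t ∈ s, (b * (S t - x t) + r * a * x t) := sum_capped_cost_anti hra hxy
    _ ≤ r * ∑ t ∈ s, (c0 t * (S t - x t) + c1 t * x t) := by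
        rw [mul_sum]
        exact sum_le_sum fun t ht =>
          cheap_offline_cost_ge (by linarith) hb (hc1 t ht) (hc t ht).le (hx t ht).1 (hx t ht).2

theorem sum_cost_le_of_expensive (hr : 1 ≤ r) (hc0 : ∀ t ∈ s, 0 ≤ c0 t)
    (hc : ∀ t ∈ s, c0 t ≤ r * c1 t) (hy : ∀ t ∈ s, y t = 0)
    (hx : ∀ t ∈ s, 0 ≤ x t ∧ x t ≤ S t) :
    ∑ t ∈ s, (c0 t * (S t - y t) + c1 t * y t)
      ≤ r * ∑ t ∈ s, (c0 t * (S t - x t) + c1 t * x t) := by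
  rw [mul_sum]
  refine sum_le_sum fun t ht => ?_
  rw [hy t ht, sub_zero, mul_zero, add_zero]
  exact expensive_cost_le hr (hc0 t ht) (hc t ht) (hx t ht).1 (hx t ht).2

end CostSums

theorem sqrt_div_threshold_iff {a b c0 c1 : ℝ} (ha : 0 < a) (hb : 0 < b) :
    c1 < Real.sqrt (a / b) * c0 ↔ Real.sqrt (b / a) * c1 < c0 := by
  rw [← inv_div b a, Real.sqrt_inv, lt_inv_mul_iff₀ (Real.sqrt_pos.2 (div_pos hb ha))]
theorem adjusted_greedy_variable_cost_le_sqrt_offline_general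
    (T : ℕ)
    (a b : ℝ) (ha : 0 < a) (hab : a ≤ b)
    (c0 c1 : ℕ → ℝ)
    (hc0 : ∀ t ∈ Icc 1 T, a ≤ c0 t ∧ c0 t ≤ b)
    (hc1 : ∀ t ∈ Icc 1 T, a ≤ c1 t ∧ c1 t ≤ b)
    (S : ℕ → ℝ) (hS : ∀ t ∈ Icc 1 T, 0 ≤ S t)
    (I0 : ℝ) (hI0 : 0 ≤ I0)
    (m1 : ℕ → ℝ)
    (I : ℕ → ℝ) (hI : ∀ t : ℕ, I t = I0 - ∑ τ ∈ Icc 1 t, m1 τ)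
    (mhat1 mhat0 : ℕ → ℝ)
    (hmhat1 : ∀ t ∈ Icc 1 T,
      mhat1 t = if c1 t < Real.sqrt (a / b) * c0 t then min (S t) (I (t - 1)) else 0)
    (hmhat0 : ∀ t ∈ Icc 1 T, mhat0 t = S t - mhat1 t)
    (hgated : ∀ t ∈ Icc 1 T, m1 t = mhat1 t ∨ m1 t = 0)
    (mstar1 : ℕ → ℝ)
    (hmstar1 : ∀ t ∈ Icc 1 T, 0 ≤ mstar1 t ∧ mstar1 t ≤ S t)
    (hmstar_inv : ∑ t ∈ Icc 1 T, mstar1 t ≤ I0)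
    (B : Finset ℕ)
    (hCB : (Icc 1 T).filter (fun t => 0 < m1 t) ⊆ B)
    (hBT : B ⊆ Icc 1 T) :
    ∑ t ∈ B, (c0 t * mhat0 t + c1 t * mhat1 t)
      ≤ Real.sqrt (b / a) *
          ∑ t ∈ B, (c0 t * (S t - mstar1 t) + c1 t * mstar1 t) := by
  have hb : 0 < b := ha.trans_le hab
  have hr : 1 ≤ Real.sqrt (b / a) := Real.one_le_sqrt.2 ((one_le_div ha).2 hab)
  have hrb : Real.sqrt (b / a) ^ 2 * a = b := by
    rw [Real.sq_sqrt (div_pos hb ha).le, div_mul_cancel₀ _ ha.ne']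
  have hmhat := greedy_nonneg_le hS (gated_inventory_nonneg hI hI0 hmhat1 hgated) hmhat1
  have hmore := offline_sum_le_gated_greedy_sum hI hmhat1 (fun t ht => (hmhat t ht).1) hgated
    hmstar1 hmstar_inv hCB hBT
  rw [sum_congr rfl fun t ht => by rw [hmhat0 t (hBT ht)],
    ← sum_filter_add_sum_filter_not B (fun t => c1 t < Real.sqrt (a / b) * c0 t),
    ← sum_filter_add_sum_filter_not B (fun t => c1 t < Real.sqrt (a / b) * c0 t), mul_add]
  have hB : ∀ {q : ℕ → Prop} [DecidablePred q] {t}, t ∈ B.filter q → t ∈ Icc 1 T ∧ q t :=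
    fun ht => ⟨hBT (mem_filter.1 ht).1, (mem_filter.1 ht).2⟩
  refine add_le_add (sum_cost_le_of_cheap hr hrb ha.le (fun t ht => (hc0 t (hB ht).1).2)
    (fun t ht => (hc1 t (hB ht).1).1) (fun t ht => (sqrt_div_threshold_iff ha hb).1 (hB ht).2)
    (fun t ht => hmhat t (hB ht).1) (fun t ht => hmstar1 t (hB ht).1) hmore)
    (sum_cost_le_of_expensive hr (fun t ht => ha.le.trans (hc0 t (hB ht).1).1)
    (fun t ht => not_lt.1 (mt (sqrt_div_threshold_iff ha hb).2 (hB ht).2))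
    (fun t ht => by rw [hmhat1 t (hB ht).1, if_neg (hB ht).2])
    (fun t ht => hmstar1 t (hB ht).1))

/-- Claim 3 (adjusted-variable-cost comparison, single FDC, time-varying costs):
for any set `B` of periods containing all periods in which the gated plan uses the FDC,
the total variable cost of the adjusted-priority greedy quantities is at most
`√(b/a)` times that of any feasible offline plan. -/
theorem adjusted_greedy_variable_cost_le_sqrt_offline
    (T : ℕ) (hT : 1 ≤ T)
    (a b : ℝ) (ha : 0 < a) (hab : a ≤ b)
    (c0 c1 : ℕ → ℝ)
    (hc0 : ∀ t ∈ Icc 1 T, a ≤ c0 t ∧ c0 t ≤ b)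
    (hc1 : ∀ t ∈ Icc 1 T, a ≤ c1 t ∧ c1 t ≤ b)
    (S : ℕ → ℝ) (hS : ∀ t ∈ Icc 1 T, 0 ≤ S t)
    (I0 : ℝ) (hI0 : 0 ≤ I0)
    (m1 : ℕ → ℝ) (hm1 : ∀ t ∈ Icc 1 T, 0 ≤ m1 t)
    (I : ℕ → ℝ) (hI : ∀ t : ℕ, I t = I0 - ∑ τ ∈ Icc 1 t, m1 τ)
    (mhat1 mhat0 : ℕ → ℝ)
    (hmhat1 : ∀ t ∈ Icc 1 T,
      mhat1 t = if c1 t < Real.sqrt (a / b) * c0 t then min (S t) (I (t - 1)) else 0)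
    (hmhat0 : ∀ t ∈ Icc 1 T, mhat0 t = S t - mhat1 t)
    (hgated : ∀ t ∈ Icc 1 T, m1 t = mhat1 t ∨ m1 t = 0)
    (mstar1 : ℕ → ℝ)
    (hmstar1 : ∀ t ∈ Icc 1 T, 0 ≤ mstar1 t ∧ mstar1 t ≤ S t)
    (hmstar_inv : ∑ t ∈ Icc 1 T, mstar1 t ≤ I0)
    (B : Finset ℕ)
    (hCB : (Icc 1 T).filter (fun t => 0 < m1 t) ⊆ B)
    (hBT : B ⊆ Icc 1 T) :
    ∑ t ∈ B, (c0 t * mhat0 t + c1 t * mhat1 t)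
      ≤ Real.sqrt (b / a) *
          ∑ t ∈ B, (c0 t * (S t - mstar1 t) + c1 t * mstar1 t) :=
  adjusted_greedy_variable_cost_le_sqrt_offline_general T a b ha hab c0 c1 hc0 hc1 S hS I0 hI0 m1 I
    hI mhat1 mhat0 hmhat1 hmhat0 hgated mstar1 hmstar1 hmstar_inv B hCB hBT
end

section
/- Fix integers n ≥ 1, T ≥ 1, K ≥ 1. Assume time-invariant variable costs c_{k,t}^i = c_k^i ≥ 0 for all t, f_0 ≥ 0, and f_k > 0 for k ∈ {1,…,K}. For each item i let σ_i be the permutation of {1,…,K} with c_{σ_i(1)}^i ≤ … ≤ c_{σ_i(K)}^i and σ_i(l) < σ_i(l+1) whenever c_{σ_i(l)}^i = c_{σ_i(l+1)}^i, and let k0(i) = #{ k ∈ {1,…,K} : c_k^i < c_0^i }. Let m be the plan produced by the Cost-Comparison V-Priority policy: with I_{k,t}^i = I_{k,0}^i − Σ_{τ=1}^{t} m_{k,τ}^i, the greedy quantities are m̂_{σ_i(l),t}^i = min{ (S_t^i − Σ_{l'=1}^{l−1} I_{σ_i(l'),t−1}^i)⁺ , I_{σ_i(l),t−1}^i } for 1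 ≤ l ≤ k0(i), m̂_{k,t}^i = 0 for the remaining FDCs k, and m̂_{0,t}^i = S_t^i − Σ_{k=1}^{K} m̂_{k,t}^i; at each period t, if Σ_{k=0}^{K} [ f_k·𝟙(Σ_{i=1}^{n} m̂_{k,t}^i > 0) + Σ_{i=1}^{n} c_k^i·m̂_{k,t}^i ] > f_0 + Σ_{i=1}^{n} c_0^i·S_t^i, then m_{0,t}^i = S_t^i and m_{k,t}^i = 0 for all i and all k ∈ {1,…,K}; otherwise m_{k,t}^i = m̂_{k,t}^i for all i and k. Then for every feasible plan m*, Cost(m) ≤ max{ (f_0 + Σ_{k=1}^{K} f_k)/min_{k∈{1,…,K}} f_k , 2 } · Cost(m*). -/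
open Finset

/-- Total fulfillment cost of a plan `m` over `T` periods, `K` FDCs (indices `1,…,K`)
and the RDC (index `0`), with `n` items, fixed costs `f` and variable costs `c`. -/
noncomputable def fulfillCost (n T K : ℕ) (f : ℕ → ℝ) (c : ℕ → ℕ → ℕ → ℝ)
    (m : ℕ → ℕ → ℕ → ℝ) : ℝ :=
  ∑ t ∈ Finset.Icc 1 T, ∑ k ∈ Finset.Icc 0 K,
    (f k * (if 0 < ∑ i ∈ Finset.Icc 1 n, m k t i then (1 : ℝ) else 0)
      + ∑ i ∈ Finset.Icc 1 n, c k t i * m k t i)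

/-- Feasibility of a plan: nonnegativity, demand fulfillment, and FDC inventory
constraints. -/
def feasiblePlan (n T K : ℕ) (S : ℕ → ℕ → ℝ) (I0 : ℕ → ℕ → ℝ)
    (m : ℕ → ℕ → ℕ → ℝ) : Prop :=
  (∀ k ∈ Finset.Icc 0 K, ∀ t ∈ Finset.Icc 1 T, ∀ i ∈ Finset.Icc 1 n, 0 ≤ m k t i) ∧
  (∀ t ∈ Finset.Icc 1 T, ∀ i ∈ Finset.Icc 1 n, ∑ k ∈ Finset.Icc 0 K, m k t i = S t i) ∧
  (∀ k ∈ Finset.Icc 1 K, ∀ i ∈ Finset.Icc 1 n, ∑ t ∈ Finset.Icc 1 T, m k t i ≤ I0 k i)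

/-!
Per period, the policy's plan `m`, the greedy plan `m̂` and any feasible plan `m*` satisfy
`cost(m) + var(m*) ≤ R · cost(m*) + var(m̂)`, where `var` is the variable part of the cost and `R`
the ratio: if `m*` uses no FDC in that period it ships everything from the RDC, and the cost
comparison makes `m` no dearer; otherwise `m*` pays some `f k ≥ min f` in fixed costs, while `m`
pays at most `f 0 + Σ f` in fixed costs plus `var(m̂)`.

Summing over periods, it remains to show that `m̂` has the least total variable cost. Per item,
with the FDCs sorted by cost, `m̂` ships in total at least `min (Σ_t S_t) (Σ I_0)` from the `l`
cheapest ones whenever these are cheaper than the RDC (although each greedy step draws on the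
stocks left by `m`, which may idle), and this bounds what `m*` ships from them; Abel summation
against the decreasing savings `c 0 - c (σ l)` turns these prefix bounds into the cost bound.
-/

lemma sum_Icc_zero_eq_add {M : Type*} [AddCommMonoid M] (K : ℕ) (g : ℕ → M) :
    ∑ k ∈ Icc 0 K, g k = g 0 + ∑ k ∈ Icc 1 K, g k := by
  rw [Icc_eq_cons_Ioc K.zero_le, sum_cons, ← Icc_add_one_left_eq_Ioc, zero_add]

lemma sum_Icc_one_eq_add {M : Type*} [AddCommMonoid M] {q K : ℕ} (h : q ≤ K) (g : ℕ → M) :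
    ∑ l ∈ Icc 1 K, g l = ∑ l ∈ Icc 1 q, g l + ∑ l ∈ Icc (q + 1) K, g l := by
  simpa only [← Icc_add_one_left_eq_Ioc, zero_add] using
    (sum_Ioc_consecutive g (Nat.zero_le q) h).symm

lemma sum_comp_eq_of_bijOn {ι M : Type*} [AddCommMonoid M] {s : Finset ι} {σ : ι → ι}
    (hσ : Set.BijOn σ s s) (g : ι → M) : ∑ l ∈ s, g (σ l) = ∑ k ∈ s, g k :=
  sum_nbij σ hσ.mapsTo hσ.injOn hσ.surjOn fun _ _ => rfl

/-- Abel summation against the nonnegative differences `w l - w (l + 1)`. -/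
lemma sum_mul_le_sum_mul_of_sum_le_sum {R : Type*} [CommRing R] [LinearOrder R]
    [IsStrictOrderedRing R] {N : ℕ} {w a b : ℕ → R}
    (hw : ∀ l, 1 ≤ l → l < N → w (l + 1) ≤ w l) (hwN : 1 ≤ N → 0 ≤ w N)
    (hab : ∀ l ∈ Icc 1 N, ∑ j ∈ Icc 1 l, b j ≤ ∑ j ∈ Icc 1 l, a j) :
    ∑ l ∈ Icc 1 N, w l * b l ≤ ∑ l ∈ Icc 1 N, w l * a l := by
  induction N generalizing w with
  | zero => simp
  | succ N ih =>
    have split (y : ℕ → R) : ∑ l ∈ Icc 1 (N + 1), w l * y l =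
        ∑ l ∈ Icc 1 N, (w l - w (N + 1)) * y l + w (N + 1) * ∑ l ∈ Icc 1 (N + 1), y l := by
      simp only [sum_Icc_succ_top (Nat.le_add_left 1 N), sub_mul, sum_sub_distrib, mul_add,
        ← mul_sum]
      ring
    have hhead := ih (w := fun l => w l - w (N + 1))
      (fun l h1 h2 => by linarith [hw l h1 (by omega)])
      (fun h1 => by linarith [hw N h1 (by omega)])
      (fun l hl => hab l (by simp only [mem_Icc] at hl ⊢; omega))
    have hlast := mul_le_mul_of_nonneg_left (hab (N + 1) (by simp)) (hwN (by omega))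
    rw [split a, split b]
    linarith

lemma sum_fill_eq_min {L : ℕ} {s : ℝ} {a b : ℕ → ℝ} (hs : 0 ≤ s) (hb : ∀ l ∈ Icc 1 L, 0 ≤ b l)
    (ha : ∀ l ∈ Icc 1 L, a l = min (max (s - ∑ j ∈ Icc 1 (l - 1), b j) 0) (b l)) :
    ∀ l ≤ L, ∑ j ∈ Icc 1 l, a j = min s (∑ j ∈ Icc 1 l, b j) := by
  intro l hl
  induction l with
  | zero => simp [hs]
  | succ l ih =>
    have hB : 0 ≤ ∑ j ∈ Icc 1 l, b j :=
      sum_nonneg fun j hj => hb j (by simp only [mem_Icc] at hj ⊢; omega)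
    have hbl := hb (l + 1) (mem_Icc.2 ⟨by omega, hl⟩)
    rw [sum_Icc_succ_top (by omega), sum_Icc_succ_top (by omega), ih (by omega),
      ha (l + 1) (mem_Icc.2 ⟨by omega, hl⟩), Nat.add_sub_cancel]
    rcases le_total s (∑ j ∈ Icc 1 l, b j) with h | h
    · rw [min_eq_left h, max_eq_right (by linarith), min_eq_left hbl, min_eq_left (by linarith)]
      simp
    · rw [min_eq_right h, max_eq_left (by linarith)]
      rcases le_total (s - ∑ j ∈ Icc 1 l, b j) (b (l + 1)) with h' | h'
      · rw [min_eq_left h', min_eq_left (by linarith)]; ring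
      · rw [min_eq_right h', min_eq_right (by linarith)]

lemma min_sum_le_of_fill_step {T : ℕ} {A : ℝ} {s G C : ℕ → ℝ}
    (hG0 : G 0 = 0) (hC0 : C 0 = 0) (hs : ∀ t ∈ Icc 1 T, 0 ≤ s t)
    (hG : ∀ t < T, G (t + 1) = G t + min (s (t + 1)) (A - C t))
    (hC : ∀ t < T, C (t + 1) = C t ∨ C (t + 1) = C t + min (s (t + 1)) (A - C t))
    (hCA : ∀ t ≤ T, C t ≤ A) :
    min (∑ t ∈ Icc 1 T, s t) A ≤ G T := by
  -- `C ≤ G`: a greedy step against the capacity `A - C t` left by `C` is at least as large as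
  -- one against `A - G t`.
  suffices h : ∀ t ≤ T, C t ≤ G t ∧ min (∑ τ ∈ Icc 1 t, s τ) A ≤ G t from (h T le_rfl).2
  intro t ht
  induction t with
  | zero => simp [hG0, hC0]
  | succ t ih =>
    obtain ⟨hCG, hmin⟩ := ih (by omega)
    have hst := hs (t + 1) (mem_Icc.2 ⟨by omega, ht⟩)
    have hAC := hCA t (by omega)
    rw [hG t ht, sum_Icc_succ_top (by omega)]
    constructor
    · rcases hC t ht with h | h <;> rw [h] <;> linarith [le_min hst (sub_nonneg.mpr hAC)]
    · rcases le_total (s (t + 1)) (A - C t) with h | h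
      · rw [min_eq_left h]
        calc min (∑ τ ∈ Icc 1 t, s τ + s (t + 1)) A
            ≤ min (∑ τ ∈ Icc 1 t, s τ + s (t + 1)) (A + s (t + 1)) :=
              min_le_min_left _ (by linarith)
          _ = min (∑ τ ∈ Icc 1 t, s τ) A + s (t + 1) := min_add_add_right _ _ _
          _ ≤ G t + s (t + 1) := by linarith
      · rw [min_eq_right h]
        linarith [min_le_right (∑ τ ∈ Icc 1 t, s τ + s (t + 1)) A]

lemma le_card_filter_iff {K : ℕ} {P : ℕ → Prop} [DecidablePred P]
    (hP : ∀ l ∈ Icc 1 K, ∀ l' ∈ Icc 1 K, l ≤ l' → P l' → P l) {l : ℕ} (hl : l ∈ Icc 1 K) :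
    l ≤ #{k ∈ Icc 1 K | P k} ↔ P l := by
  rw [mem_Icc] at hl
  constructor
  · intro hcard
    by_contra hPl
    have hsub : {k ∈ Icc 1 K | P k} ⊆ Icc 1 (l - 1) := by
      intro k hk
      simp only [mem_filter, mem_Icc] at hk ⊢
      refine ⟨hk.1.1, ?_⟩
      by_contra hkl
      exact hPl (hP l (mem_Icc.2 hl) k (mem_Icc.2 ⟨hk.1.1, by omega⟩) (by omega) hk.2)
    have := card_le_card hsub
    rw [Nat.card_Icc] at this
    omega
  · intro hPl
    have hsub : Icc 1 l ⊆ {k ∈ Icc 1 K | P k} := by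
      intro k hk
      simp only [mem_filter, mem_Icc] at hk ⊢
      exact ⟨⟨hk.1, by omega⟩, hP k (mem_Icc.2 ⟨hk.1, by omega⟩) l (mem_Icc.2 hl) hk.2 hPl⟩
    simpa using card_le_card hsub

lemma sum_sub_mul_le_of_prefix {K q : ℕ} {σ : ℕ → ℕ} {c a b : ℕ → ℝ}
    (hσ : Set.BijOn σ (Icc 1 K) (Icc 1 K)) (hc : ∀ l, 1 ≤ l → l < K → c (σ l) ≤ c (σ (l + 1)))
    (hq : q = #{k ∈ Icc 1 K | c k < c 0}) (ha : ∀ l ∈ Icc (q + 1) K, a (σ l) = 0)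
    (hb : ∀ k ∈ Icc 1 K, 0 ≤ b k) (hab : ∀ l ≤ q, ∑ j ∈ Icc 1 l, b (σ j) ≤ ∑ j ∈ Icc 1 l, a (σ j)) :
    ∑ k ∈ Icc 1 K, (c 0 - c k) * b k ≤ ∑ k ∈ Icc 1 K, (c 0 - c k) * a k := by
  have hmono : MonotoneOn (c ∘ σ) (Set.Icc 1 K) :=
    monotoneOn_of_le_succ Set.ordConnected_Icc fun l _ hl hl' => by
      simp only [Set.mem_Icc, Order.succ_eq_add_one] at hl hl' ⊢
      exact hc l hl.1 (by omega)
  have hcheap : ∀ l ∈ Icc 1 K, l ≤ q ↔ c (σ l) < c 0 := by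
    have hcard : q = #{l ∈ Icc 1 K | c (σ l) < c 0} := by
      rw [hq, card_filter, card_filter]
      exact (sum_comp_eq_of_bijOn hσ fun k => if c k < c 0 then 1 else 0).symm
    rw [hcard]
    refine fun l hl => le_card_filter_iff (fun j hj l' hl' hjl' h => ?_) hl
    exact (hmono (by simpa using hj) (by simpa using hl') hjl').trans_lt h
  have hqK : q ≤ K := hq ▸ (card_filter_le _ _).trans (by simp)
  rw [← sum_comp_eq_of_bijOn hσ fun k => (c 0 - c k) * b k,
    ← sum_comp_eq_of_bijOn hσ fun k => (c 0 - c k) * a k, sum_Icc_one_eq_add hqK,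
    sum_Icc_one_eq_add hqK]
  refine add_le_add ?_ ?_
  · refine sum_mul_le_sum_mul_of_sum_le_sum (w := fun l => c 0 - c (σ l))
      (fun l h1 h2 => by linarith [hc l h1 (by omega)]) (fun h => ?_)
      fun l hl => hab l (mem_Icc.1 hl).2
    linarith [(hcheap q (mem_Icc.2 ⟨h, hqK⟩)).1 le_rfl]
  · have htail : ∑ l ∈ Icc (q + 1) K, (c 0 - c (σ l)) * a (σ l) = 0 :=
      sum_eq_zero fun l hl => by rw [ha l hl, mul_zero]
    rw [htail]
    refine sum_nonpos fun l hl => mul_nonpos_of_nonpos_of_nonneg ?_ (hb _ (hσ.mapsTo ?_))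
    · have hl' := mem_Icc.1 hl
      linarith [not_lt.1 ((hcheap l (mem_Icc.2 ⟨by omega, hl'.2⟩)).not.1 (by omega))]
    · exact Icc_subset_Icc_left (by omega) hl

lemma le_max_div_inf'_mul {ι : Type*} {s : Finset ι} (hs : s.Nonempty) {f : ι → ℝ}
    (hf : ∀ k ∈ s, 0 < f k) (a : ℝ) {b : ℝ} (hb : 0 ≤ b) {k : ι} (hk : k ∈ s) :
    a ≤ max (a / s.inf' hs f) b * f k :=
  calc a ≤ max (a / s.inf' hs f) b * s.inf' hs f :=
        (div_le_iff₀ ((lt_inf'_iff hs).2 hf)).1 (le_max_left _ _)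
    _ ≤ max (a / s.inf' hs f) b * f k :=
        mul_le_mul_of_nonneg_left (inf'_le f hk) (le_max_of_le_right hb)

section Item

variable {K T q : ℕ} {σ : ℕ → ℕ} {s I0 : ℕ → ℝ} {I x y z : ℕ → ℕ → ℝ}

lemma sum_sum_le_min (hσ : Set.BijOn σ (Icc 1 K) (Icc 1 K))
    (hz : ∀ k ∈ Icc 0 K, ∀ t ∈ Icc 1 T, 0 ≤ z k t)
    (hz_sum : ∀ t ∈ Icc 1 T, ∑ k ∈ Icc 0 K, z k t = s t)
    (hz_inv : ∀ k ∈ Icc 1 K, ∑ t ∈ Icc 1 T, z k t ≤ I0 k) {l : ℕ} (hl : l ≤ K) :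
    ∑ j ∈ Icc 1 l, ∑ t ∈ Icc 1 T, z (σ j) t ≤
      min (∑ t ∈ Icc 1 T, s t) (∑ j ∈ Icc 1 l, I0 (σ j)) := by
  have hmem : ∀ j ∈ Icc 1 l, σ j ∈ Icc 1 K := fun j hj => hσ.mapsTo (Icc_subset_Icc_right hl hj)
  refine le_min ?_ (sum_le_sum fun j hj => hz_inv _ (hmem j hj))
  calc ∑ j ∈ Icc 1 l, ∑ t ∈ Icc 1 T, z (σ j) t
      ≤ ∑ j ∈ Icc 1 K, ∑ t ∈ Icc 1 T, z (σ j) t :=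
        sum_le_sum_of_subset_of_nonneg (Icc_subset_Icc_right hl) fun j hj _ =>
          sum_nonneg fun t ht => hz _ (Icc_subset_Icc_left zero_le_one (hσ.mapsTo hj)) t ht
    _ = ∑ t ∈ Icc 1 T, ∑ k ∈ Icc 1 K, z k t := by
        rw [sum_comp_eq_of_bijOn hσ fun k => ∑ t ∈ Icc 1 T, z k t, sum_comm]
    _ ≤ ∑ t ∈ Icc 1 T, s t := sum_le_sum fun t ht => by
        rw [← hz_sum t ht, sum_Icc_zero_eq_add]
        linarith [hz 0 (by simp) t ht]

lemma sum_sum_mul_eq (c : ℕ → ℝ) (hx : ∀ t ∈ Icc 1 T, ∑ k ∈ Icc 0 K, x k t = s t) :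
    ∑ t ∈ Icc 1 T, ∑ k ∈ Icc 0 K, c k * x k t =
      c 0 * ∑ t ∈ Icc 1 T, s t - ∑ k ∈ Icc 1 K, (c 0 - c k) * ∑ t ∈ Icc 1 T, x k t := by
  have hper : ∀ t ∈ Icc 1 T, ∑ k ∈ Icc 0 K, c k * x k t =
      c 0 * s t - ∑ k ∈ Icc 1 K, (c 0 - c k) * x k t := fun t ht => by
    rw [← hx t ht, sum_Icc_zero_eq_add, sum_Icc_zero_eq_add]
    simp only [sub_mul, sum_sub_distrib, mul_add, ← mul_sum]
    ring
  rw [sum_congr rfl hper, sum_sub_distrib, ← mul_sum, sum_comm]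
  simp only [mul_sum]

/-- `y` drains the FDCs `σ 1, …, σ q` in this order, as far as the stocks `I · (t - 1)` left at
the end of the previous period allow, keeps the other FDCs idle and ships the rest from the RDC. -/
def IsGreedyFill (K T q : ℕ) (σ : ℕ → ℕ) (s : ℕ → ℝ) (I y : ℕ → ℕ → ℝ) : Prop :=
  (∀ t ∈ Icc 1 T, ∀ l ∈ Icc 1 q, y (σ l) t =
      min (max (s t - ∑ j ∈ Icc 1 (l - 1), I (σ j) (t - 1)) 0) (I (σ l) (t - 1))) ∧
  (∀ t ∈ Icc 1 T, ∀ l ∈ Icc (q + 1) K, y (σ l) t = 0) ∧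
  ∀ t ∈ Icc 1 T, y 0 t = s t - ∑ k ∈ Icc 1 K, y k t

namespace IsGreedyFill

lemma nonneg_and_le_inventory (hy : IsGreedyFill K T q σ s I y)
    (hσ : Set.SurjOn σ (Icc 1 K) (Icc 1 K)) {t k : ℕ} (ht : t ∈ Icc 1 T) (hk : k ∈ Icc 1 K)
    (hI : 0 ≤ I k (t - 1)) : 0 ≤ y k t ∧ y k t ≤ I k (t - 1) := by
  obtain ⟨l, hl, rfl⟩ := hσ (mem_coe.2 hk)
  rw [mem_coe, mem_Icc] at hl
  by_cases hlq : l ≤ q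
  · rw [hy.1 t ht l (mem_Icc.2 ⟨hl.1, hlq⟩)]
    exact ⟨le_min (le_max_right _ _) hI, min_le_right _ _⟩
  · rw [hy.2.1 t ht l (mem_Icc.2 ⟨by omega, hl.2⟩)]
    exact ⟨le_rfl, hI⟩

lemma inventory_nonneg (hy : IsGreedyFill K T q σ s I y) (hσ : Set.SurjOn σ (Icc 1 K) (Icc 1 K))
    (hI : ∀ k ∈ Icc 1 K, ∀ t, I k t = I0 k - ∑ τ ∈ Icc 1 t, x k τ)
    (hI0 : ∀ k ∈ Icc 1 K, 0 ≤ I0 k)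
    (hx : ∀ t ∈ Icc 1 T, (∀ k ∈ Icc 1 K, x k t = y k t) ∨ ∀ k ∈ Icc 1 K, x k t = 0) :
    ∀ t ≤ T, ∀ k ∈ Icc 1 K, 0 ≤ I k t := by
  intro t ht
  induction t with
  | zero => intro k hk; simpa [hI k hk 0] using hI0 k hk
  | succ t ih =>
    intro k hk
    have hstep : I k (t + 1) = I k t - x k (t + 1) := by
      rw [hI k hk, hI k hk, sum_Icc_succ_top (by omega)]; ring
    have ht1 : t + 1 ∈ Icc 1 T := mem_Icc.2 ⟨by omega, ht⟩
    have hprev := ih (by omega) k hk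
    have hle : y k (t + 1) ≤ I k t := (hy.nonneg_and_le_inventory hσ ht1 hk hprev).2
    rcases hx (t + 1) ht1 with h | h <;> rw [hstep, h k hk] <;> linarith

lemma sum_eq_min (hy : IsGreedyFill K T q σ s I y) (hqK : q ≤ K)
    (hσ : Set.MapsTo σ (Icc 1 K) (Icc 1 K)) {t : ℕ} (ht : t ∈ Icc 1 T) (hs : 0 ≤ s t)
    (hI : ∀ k ∈ Icc 1 K, 0 ≤ I k (t - 1)) {l : ℕ} (hl : l ≤ q) :
    ∑ j ∈ Icc 1 l, y (σ j) t = min (s t) (∑ j ∈ Icc 1 l, I (σ j) (t - 1)) :=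
  sum_fill_eq_min hs (fun _ hj => hI _ (hσ (Icc_subset_Icc_right hqK hj))) (hy.1 t ht) l hl

lemma nonneg (hy : IsGreedyFill K T q σ s I y) (hqK : q ≤ K)
    (hσ : Set.BijOn σ (Icc 1 K) (Icc 1 K)) {t : ℕ} (ht : t ∈ Icc 1 T) (hs : 0 ≤ s t)
    (hI : ∀ k ∈ Icc 1 K, 0 ≤ I k (t - 1)) : ∀ k ∈ Icc 0 K, 0 ≤ y k t := by
  have hfdc : ∑ k ∈ Icc 1 K, y k t ≤ s t := by
    rw [← sum_comp_eq_of_bijOn hσ (y · t), sum_Icc_one_eq_add hqK,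
      sum_eq_zero fun l hl => hy.2.1 t ht l hl, add_zero,
      hy.sum_eq_min hqK hσ.mapsTo ht hs hI le_rfl]
    exact min_le_left _ _
  intro k hk
  rcases Nat.eq_zero_or_pos k with rfl | hk0
  · rw [hy.2.2 t ht]; linarith
  · have hk1 : k ∈ Icc 1 K := mem_Icc.2 ⟨hk0, (mem_Icc.1 hk).2⟩
    exact (hy.nonneg_and_le_inventory hσ.surjOn ht hk1 (hI k hk1)).1

lemma sum_eq (hy : IsGreedyFill K T q σ s I y) {t : ℕ} (ht : t ∈ Icc 1 T) :
    ∑ k ∈ Icc 0 K, y k t = s t := by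
  rw [sum_Icc_zero_eq_add, hy.2.2 t ht]; ring

lemma min_le_sum_sum (hy : IsGreedyFill K T q σ s I y) (hqK : q ≤ K)
    (hσ : Set.MapsTo σ (Icc 1 K) (Icc 1 K))
    (hI : ∀ k ∈ Icc 1 K, ∀ t, I k t = I0 k - ∑ τ ∈ Icc 1 t, x k τ)
    (hI_nonneg : ∀ t ≤ T, ∀ k ∈ Icc 1 K, 0 ≤ I k t) (hs : ∀ t ∈ Icc 1 T, 0 ≤ s t)
    (hx : ∀ t ∈ Icc 1 T, (∀ k ∈ Icc 1 K, x k t = y k t) ∨ ∀ k ∈ Icc 1 K, x k t = 0)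
    {l : ℕ} (hl : l ≤ q) :
    min (∑ t ∈ Icc 1 T, s t) (∑ j ∈ Icc 1 l, I0 (σ j)) ≤
      ∑ j ∈ Icc 1 l, ∑ t ∈ Icc 1 T, y (σ j) t := by
  have hmem : ∀ j ∈ Icc 1 l, σ j ∈ Icc 1 K := fun j hj =>
    hσ (Icc_subset_Icc_right (hl.trans hqK) hj)
  set A := ∑ j ∈ Icc 1 l, I0 (σ j)
  set C := fun τ => ∑ τ' ∈ Icc 1 τ, ∑ j ∈ Icc 1 l, x (σ j) τ'
  have hrem : ∀ τ, ∑ j ∈ Icc 1 l, I (σ j) τ = A - C τ := fun τ => by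
    rw [sum_congr rfl fun j hj => hI _ (hmem j hj) τ, sum_sub_distrib, sum_comm]
  have hfill : ∀ τ < T, ∑ j ∈ Icc 1 l, y (σ j) (τ + 1) = min (s (τ + 1)) (A - C τ) := by
    intro τ hτ
    have ht : τ + 1 ∈ Icc 1 T := mem_Icc.2 ⟨by omega, hτ⟩
    rw [← hrem]
    exact hy.sum_eq_min hqK hσ ht (hs _ ht) (hI_nonneg τ hτ.le) hl
  rw [sum_comm]
  refine min_sum_le_of_fill_step (G := fun τ => ∑ t ∈ Icc 1 τ, ∑ j ∈ Icc 1 l, y (σ j) t) (C := C)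
    (by simp) (by simp [C]) hs (fun τ hτ => ?_) (fun τ hτ => ?_) (fun τ hτ => ?_)
  · rw [sum_Icc_succ_top (by omega), hfill τ hτ]
  · simp only [C]
    rw [sum_Icc_succ_top (by omega)]
    rcases hx (τ + 1) (mem_Icc.2 ⟨by omega, hτ⟩) with h | h
    · right
      rw [sum_congr rfl fun j hj => h _ (hmem j hj), hfill τ hτ]
    · left
      rw [sum_eq_zero fun j hj => h _ (hmem j hj), add_zero]
  · have := sum_nonneg fun j hj => hI_nonneg τ hτ _ (hmem j hj)
    rw [hrem] at this
    linarith

lemma sum_sum_mul_le (hy : IsGreedyFill K T q σ s I y)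
    (hσ : Set.BijOn σ (Icc 1 K) (Icc 1 K)) {c : ℕ → ℝ}
    (hc : ∀ l, 1 ≤ l → l < K → c (σ l) ≤ c (σ (l + 1))) (hq : q = #{k ∈ Icc 1 K | c k < c 0})
    (hI : ∀ k ∈ Icc 1 K, ∀ t, I k t = I0 k - ∑ τ ∈ Icc 1 t, x k τ)
    (hI_nonneg : ∀ t ≤ T, ∀ k ∈ Icc 1 K, 0 ≤ I k t) (hs : ∀ t ∈ Icc 1 T, 0 ≤ s t)
    (hx : ∀ t ∈ Icc 1 T, (∀ k ∈ Icc 1 K, x k t = y k t) ∨ ∀ k ∈ Icc 1 K, x k t = 0)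
    (hz : ∀ k ∈ Icc 0 K, ∀ t ∈ Icc 1 T, 0 ≤ z k t)
    (hz_sum : ∀ t ∈ Icc 1 T, ∑ k ∈ Icc 0 K, z k t = s t)
    (hz_inv : ∀ k ∈ Icc 1 K, ∑ t ∈ Icc 1 T, z k t ≤ I0 k) :
    ∑ t ∈ Icc 1 T, ∑ k ∈ Icc 0 K, c k * y k t ≤ ∑ t ∈ Icc 1 T, ∑ k ∈ Icc 0 K, c k * z k t := by
  have hqK : q ≤ K := hq ▸ (card_filter_le _ _).trans (by simp)
  rw [sum_sum_mul_eq c fun t ht => hy.sum_eq ht, sum_sum_mul_eq c hz_sum]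
  refine sub_le_sub_left (sum_sub_mul_le_of_prefix hσ hc hq
    (fun l hl => sum_eq_zero fun t ht => hy.2.1 t ht l hl)
    (fun k hk => sum_nonneg fun t ht => hz k (Icc_subset_Icc_left zero_le_one hk) t ht)
    fun l hl => ?_) _
  exact (sum_sum_le_min hσ hz hz_sum hz_inv (hl.trans hqK)).trans
    (hy.min_le_sum_sum hqK hσ.mapsTo hI hI_nonneg hs hx hl)

end IsGreedyFill

end Item

section Period

variable {n K : ℕ} {f : ℕ → ℝ} {c : ℕ → ℕ → ℝ} {S : ℕ → ℕ → ℝ} {x y z : ℕ → ℕ → ℕ → ℝ} {t : ℕ}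

noncomputable def periodCost (n K : ℕ) (f : ℕ → ℝ) (c : ℕ → ℕ → ℝ) (x : ℕ → ℕ → ℕ → ℝ)
    (t : ℕ) : ℝ :=
  ∑ k ∈ Icc 0 K, (f k * (if 0 < ∑ i ∈ Icc 1 n, x k t i then (1 : ℝ) else 0)
    + ∑ i ∈ Icc 1 n, c k i * x k t i)

noncomputable def fixedCost (n K : ℕ) (f : ℕ → ℝ) (x : ℕ → ℕ → ℕ → ℝ) (t : ℕ) : ℝ :=
  ∑ k ∈ Icc 0 K, f k * if 0 < ∑ i ∈ Icc 1 n, x k t i then (1 : ℝ) else 0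

noncomputable def variableCost (n K : ℕ) (c : ℕ → ℕ → ℝ) (x : ℕ → ℕ → ℕ → ℝ) (t : ℕ) : ℝ :=
  ∑ k ∈ Icc 0 K, ∑ i ∈ Icc 1 n, c k i * x k t i

lemma fulfillCost_eq_sum_periodCost (T : ℕ) :
    fulfillCost n T K f (fun k _ i => c k i) x = ∑ t ∈ Icc 1 T, periodCost n K f c x t :=
  rfl

lemma periodCost_eq_add :
    periodCost n K f c x t = fixedCost n K f x t + variableCost n K c x t :=
  sum_add_distrib

lemma fixedCost_nonneg (hf : ∀ k ∈ Icc 0 K, 0 ≤ f k) : 0 ≤ fixedCost n K f x t :=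
  sum_nonneg fun k hk => mul_nonneg (hf k hk) (by split_ifs <;> norm_num)

lemma fixedCost_le (hf : ∀ k ∈ Icc 0 K, 0 ≤ f k) :
    fixedCost n K f x t ≤ f 0 + ∑ k ∈ Icc 1 K, f k := by
  rw [← sum_Icc_zero_eq_add]
  exact sum_le_sum fun k hk => mul_le_of_le_one_right (hf k hk) (by split_ifs <;> norm_num)

lemma le_fixedCost (hf : ∀ k ∈ Icc 0 K, 0 ≤ f k) {k i : ℕ} (hk : k ∈ Icc 0 K) (hi : i ∈ Icc 1 n)
    (hx : ∀ i ∈ Icc 1 n, 0 ≤ x k t i) (hpos : 0 < x k t i) : f k ≤ fixedCost n K f x t := by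
  have hsum : 0 < ∑ i ∈ Icc 1 n, x k t i := hpos.trans_le (single_le_sum hx hi)
  calc f k = f k * if 0 < ∑ i ∈ Icc 1 n, x k t i then (1 : ℝ) else 0 := by
        rw [if_pos hsum, mul_one]
    _ ≤ fixedCost n K f x t :=
        single_le_sum (f := fun k => f k * if 0 < ∑ i ∈ Icc 1 n, x k t i then (1 : ℝ) else 0)
          (fun j hj => mul_nonneg (hf j hj) (by split_ifs <;> norm_num)) hk

lemma variableCost_nonneg (hc : ∀ k ∈ Icc 0 K, ∀ i ∈ Icc 1 n, 0 ≤ c k i)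
    (hx : ∀ k ∈ Icc 0 K, ∀ i ∈ Icc 1 n, 0 ≤ x k t i) : 0 ≤ variableCost n K c x t :=
  sum_nonneg fun k hk => sum_nonneg fun i hi => mul_nonneg (hc k hk i hi) (hx k hk i hi)

lemma periodCost_of_fdc_eq_zero (h0 : ∀ i ∈ Icc 1 n, x 0 t i = S t i)
    (hfdc : ∀ k ∈ Icc 1 K, ∀ i ∈ Icc 1 n, x k t i = 0) :
    periodCost n K f c x t = f 0 * (if 0 < ∑ i ∈ Icc 1 n, S t i then (1 : ℝ) else 0)
      + ∑ i ∈ Icc 1 n, c 0 i * S t i := by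
  have hidle : ∀ k ∈ Icc 1 K, f k * (if 0 < ∑ i ∈ Icc 1 n, x k t i then (1 : ℝ) else 0)
      + ∑ i ∈ Icc 1 n, c k i * x k t i = 0 := fun k hk => by
    have hsum : ∑ i ∈ Icc 1 n, c k i * x k t i = 0 :=
      sum_eq_zero fun i hi => by rw [hfdc k hk i hi, mul_zero]
    simp [sum_eq_zero (hfdc k hk), hsum]
  have hrdc : ∑ i ∈ Icc 1 n, c 0 i * x 0 t i = ∑ i ∈ Icc 1 n, c 0 i * S t i :=
    sum_congr rfl fun i hi => by rw [h0 i hi]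
  rw [periodCost, sum_Icc_zero_eq_add, sum_eq_zero hidle, add_zero, sum_congr rfl h0, hrdc]

lemma periodCost_congr (h : ∀ k ∈ Icc 0 K, ∀ i ∈ Icc 1 n, x k t i = y k t i) :
    periodCost n K f c x t = periodCost n K f c y t := by
  refine sum_congr rfl fun k hk => ?_
  have hvar : ∑ i ∈ Icc 1 n, c k i * x k t i = ∑ i ∈ Icc 1 n, c k i * y k t i :=
    sum_congr rfl fun i hi => by rw [h k hk i hi]
  rw [sum_congr rfl (h k hk), hvar]

def IsCostComparison (n K : ℕ) (f : ℕ → ℝ) (c : ℕ → ℕ → ℝ) (S : ℕ → ℕ → ℝ)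
    (y x : ℕ → ℕ → ℕ → ℝ) (t : ℕ) : Prop :=
  (f 0 + ∑ i ∈ Icc 1 n, c 0 i * S t i < periodCost n K f c y t →
      (∀ i ∈ Icc 1 n, x 0 t i = S t i) ∧ ∀ k ∈ Icc 1 K, ∀ i ∈ Icc 1 n, x k t i = 0) ∧
  (periodCost n K f c y t ≤ f 0 + ∑ i ∈ Icc 1 n, c 0 i * S t i →
      ∀ k ∈ Icc 0 K, ∀ i ∈ Icc 1 n, x k t i = y k t i)

namespace IsCostComparison

lemma fdc_eq_or_eq_zero (h : IsCostComparison n K f c S y x t) {i : ℕ} (hi : i ∈ Icc 1 n) :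
    (∀ k ∈ Icc 1 K, x k t i = y k t i) ∨ ∀ k ∈ Icc 1 K, x k t i = 0 := by
  rcases le_or_gt (periodCost n K f c y t) (f 0 + ∑ i ∈ Icc 1 n, c 0 i * S t i) with hle | hlt
  · exact .inl fun k hk => h.2 hle k (Icc_subset_Icc_left zero_le_one hk) i hi
  · exact .inr fun k hk => (h.1 hlt).2 k hk i hi

lemma periodCost_le (h : IsCostComparison n K f c S y x t) (hf0 : 0 ≤ f 0)
    (hS : ∀ i ∈ Icc 1 n, 0 ≤ S t i) (hy : ∀ k ∈ Icc 0 K, ∀ i ∈ Icc 1 n, 0 ≤ y k t i)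
    (hy_sum : ∀ i ∈ Icc 1 n, ∑ k ∈ Icc 0 K, y k t i = S t i) :
    periodCost n K f c x t ≤ periodCost n K f c y t ∧
      periodCost n K f c x t ≤ f 0 * (if 0 < ∑ i ∈ Icc 1 n, S t i then (1 : ℝ) else 0)
        + ∑ i ∈ Icc 1 n, c 0 i * S t i := by
  have hind : f 0 * (if 0 < ∑ i ∈ Icc 1 n, S t i then (1 : ℝ) else 0) ≤ f 0 :=
    mul_le_of_le_one_right hf0 (by split_ifs <;> norm_num)
  rcases le_or_gt (periodCost n K f c y t) (f 0 + ∑ i ∈ Icc 1 n, c 0 i * S t i) with hle | hlt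
  · have hxy : periodCost n K f c x t = periodCost n K f c y t := periodCost_congr (h.2 hle)
    refine ⟨hxy.le, ?_⟩
    by_cases hpos : 0 < ∑ i ∈ Icc 1 n, S t i
    · rw [if_pos hpos, mul_one, hxy]; exact hle
    -- without demand `y` ships nothing, so it costs nothing
    have hS0 : ∀ i ∈ Icc 1 n, S t i = 0 :=
      (sum_eq_zero_iff_of_nonneg hS).1 (le_antisymm (not_lt.1 hpos) (sum_nonneg hS))
    have hy0 : ∀ k ∈ Icc 0 K, ∀ i ∈ Icc 1 n, y k t i = 0 := fun k hk i hi =>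
      (sum_eq_zero_iff_of_nonneg fun k hk => hy k hk i hi).1 ((hy_sum i hi).trans (hS0 i hi)) k hk
    rw [hxy, periodCost_of_fdc_eq_zero (S := S)
      (fun i hi => (hy0 0 (by simp) i hi).trans (hS0 i hi).symm)
      fun k hk => hy0 k (Icc_subset_Icc_left zero_le_one hk)]
  · have hx := periodCost_of_fdc_eq_zero (f := f) (c := c) (h.1 hlt).1 (h.1 hlt).2
    constructor <;> linarith

lemma periodCost_add_variableCost_le (h : IsCostComparison n K f c S y x t) {R : ℝ}
    (hf : ∀ k ∈ Icc 0 K, 0 ≤ f k) (hc : ∀ k ∈ Icc 0 K, ∀ i ∈ Icc 1 n, 0 ≤ c k i) (hR : 2 ≤ R)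
    (hRf : ∀ k ∈ Icc 1 K, f 0 + ∑ k ∈ Icc 1 K, f k ≤ R * f k) (hS : ∀ i ∈ Icc 1 n, 0 ≤ S t i)
    (hy : ∀ k ∈ Icc 0 K, ∀ i ∈ Icc 1 n, 0 ≤ y k t i)
    (hy_sum : ∀ i ∈ Icc 1 n, ∑ k ∈ Icc 0 K, y k t i = S t i)
    (hz : ∀ k ∈ Icc 0 K, ∀ i ∈ Icc 1 n, 0 ≤ z k t i)
    (hz_sum : ∀ i ∈ Icc 1 n, ∑ k ∈ Icc 0 K, z k t i = S t i) :
    periodCost n K f c x t + variableCost n K c z t ≤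
      R * periodCost n K f c z t + variableCost n K c y t := by
  obtain ⟨hxy, hxS⟩ := h.periodCost_le (hf 0 (by simp)) hS hy hy_sum
  have hFz : 0 ≤ fixedCost n K f z t := fixedCost_nonneg hf
  have hVz := variableCost_nonneg hc hz
  have hVy := variableCost_nonneg hc hy
  rw [periodCost_eq_add (x := z)]
  by_cases hfdc : ∀ k ∈ Icc 1 K, ∀ i ∈ Icc 1 n, z k t i = 0
  · -- `z` ships everything from the RDC, and the cost comparison keeps `x` below that
    have hz0 : ∀ i ∈ Icc 1 n, z 0 t i = S t i := fun i hi => by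
      rw [← hz_sum i hi, sum_Icc_zero_eq_add, sum_eq_zero fun k hk => hfdc k hk i hi, add_zero]
    have hzS := periodCost_of_fdc_eq_zero (f := f) (c := c) hz0 hfdc
    rw [periodCost_eq_add] at hzS
    nlinarith [mul_le_mul_of_nonneg_right hR (add_nonneg hFz hVz)]
  · push Not at hfdc
    -- `z` opens the FDC `k`, which pays for the fixed costs of `x` up to the factor `R`
    obtain ⟨k, hk, i, hi, hne⟩ := hfdc
    have hk0 : k ∈ Icc 0 K := Icc_subset_Icc_left zero_le_one hk
    have hfk : f k ≤ fixedCost n K f z t :=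
      le_fixedCost hf hk0 hi (hz k hk0) ((hz k hk0 i hi).lt_of_ne hne.symm)
    have hFy : fixedCost n K f y t ≤ f 0 + ∑ k ∈ Icc 1 K, f k := fixedCost_le hf
    rw [periodCost_eq_add (x := y)] at hxy
    nlinarith [hRf k hk, mul_le_mul_of_nonneg_left hfk (by linarith : (0 : ℝ) ≤ R),
      mul_le_mul_of_nonneg_right (by linarith : (1 : ℝ) ≤ R) hVz]

end IsCostComparison

lemma sum_variableCost_eq (T : ℕ) : ∑ t ∈ Icc 1 T, variableCost n K c x t =
    ∑ i ∈ Icc 1 n, ∑ t ∈ Icc 1 T, ∑ k ∈ Icc 0 K, c k i * x k t i := by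
  simp only [variableCost, sum_comm (s := Icc 0 K) (t := Icc 1 n)]
  exact sum_comm

end Period

theorem costComparisonVPriority_competitive_general
    (n T K : ℕ) (hK : 1 ≤ K)
    (f : ℕ → ℝ) (hf0 : 0 ≤ f 0) (hf : ∀ k ∈ Icc 1 K, 0 < f k)
    (c : ℕ → ℕ → ℝ) (hc : ∀ k ∈ Icc 0 K, ∀ i ∈ Icc 1 n, 0 ≤ c k i)
    (S : ℕ → ℕ → ℝ) (hS : ∀ t ∈ Icc 1 T, ∀ i ∈ Icc 1 n, 0 ≤ S t i)
    (I0 : ℕ → ℕ → ℝ) (hI0 : ∀ k ∈ Icc 1 K, ∀ i ∈ Icc 1 n, 0 ≤ I0 k i)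
    (σ : ℕ → ℕ → ℕ)
    (hσ_mem : ∀ i ∈ Icc 1 n, ∀ l ∈ Icc 1 K, σ i l ∈ Icc 1 K)
    (hσ_inj : ∀ i ∈ Icc 1 n, ∀ l ∈ Icc 1 K, ∀ l' ∈ Icc 1 K, σ i l = σ i l' → l = l')
    (hσ_sorted : ∀ i ∈ Icc 1 n, ∀ l, 1 ≤ l → l < K →
      c (σ i l) i ≤ c (σ i (l + 1)) i ∧
        (c (σ i l) i = c (σ i (l + 1)) i → σ i l < σ i (l + 1)))
    (k0 : ℕ → ℕ)
    (hk0 : ∀ i ∈ Icc 1 n, k0 i = ((Icc 1 K).filter (fun k => c k i < c 0 i)).card)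
    (m : ℕ → ℕ → ℕ → ℝ)
    (I : ℕ → ℕ → ℕ → ℝ)
    (hI : ∀ k ∈ Icc 1 K, ∀ t : ℕ, ∀ i ∈ Icc 1 n,
      I k t i = I0 k i - ∑ τ ∈ Icc 1 t, m k τ i)
    (mhat : ℕ → ℕ → ℕ → ℝ)
    (hmhat : ∀ i ∈ Icc 1 n, ∀ t ∈ Icc 1 T, ∀ l ∈ Icc 1 (k0 i),
      mhat (σ i l) t i =
        min (max (S t i - ∑ l' ∈ Icc 1 (l - 1), I (σ i l') (t - 1) i) 0)
          (I (σ i l) (t - 1) i))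
    (hmhat' : ∀ i ∈ Icc 1 n, ∀ t ∈ Icc 1 T, ∀ l ∈ Icc (k0 i + 1) K,
      mhat (σ i l) t i = 0)
    (hmhat0 : ∀ t ∈ Icc 1 T, ∀ i ∈ Icc 1 n,
      mhat 0 t i = S t i - ∑ k ∈ Icc 1 K, mhat k t i)
    (hpolicy : ∀ t ∈ Icc 1 T,
      ((f 0 + ∑ i ∈ Icc 1 n, c 0 i * S t i <
          ∑ k ∈ Icc 0 K, (f k * (if 0 < ∑ i ∈ Icc 1 n, mhat k t i then (1:ℝ) else 0)
            + ∑ i ∈ Icc 1 n, c k i * mhat k t i)) →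
        (∀ i ∈ Icc 1 n, m 0 t i = S t i) ∧
        (∀ k ∈ Icc 1 K, ∀ i ∈ Icc 1 n, m k t i = 0)) ∧
      ((∑ k ∈ Icc 0 K, (f k * (if 0 < ∑ i ∈ Icc 1 n, mhat k t i then (1:ℝ) else 0)
            + ∑ i ∈ Icc 1 n, c k i * mhat k t i) ≤
          f 0 + ∑ i ∈ Icc 1 n, c 0 i * S t i) →
        ∀ k ∈ Icc 0 K, ∀ i ∈ Icc 1 n, m k t i = mhat k t i))
    (mstar : ℕ → ℕ → ℕ → ℝ) (hmstar : feasiblePlan n T K S I0 mstar) :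
    fulfillCost n T K f (fun k _ i => c k i) m ≤
      max ((f 0 + ∑ k ∈ Icc 1 K, f k) /
          ((Icc 1 K).inf' (Finset.nonempty_Icc.mpr hK) f)) 2
        * fulfillCost n T K f (fun k _ i => c k i) mstar := by
  obtain ⟨hz_nonneg, hz_sum, hz_inv⟩ := hmstar
  have hf_nonneg : ∀ k ∈ Icc 0 K, 0 ≤ f k := fun k hk => by
    rcases k.eq_zero_or_pos with rfl | hk0
    exacts [hf0, (hf k (mem_Icc.2 ⟨hk0, (mem_Icc.1 hk).2⟩)).le]
  have hσ : ∀ i ∈ Icc 1 n, Set.BijOn (σ i) (Icc 1 K) (Icc 1 K) := fun i hi =>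
    ((Icc 1 K).finite_toSet.injOn_iff_bijOn_of_mapsTo (hσ_mem i hi)).1 (hσ_inj i hi)
  have hgreedy : ∀ i ∈ Icc 1 n,
      IsGreedyFill K T (k0 i) (σ i) (S · i) (I · · i) (mhat · · i) := fun i hi =>
    ⟨hmhat i hi, hmhat' i hi, fun t ht => hmhat0 t ht i hi⟩
  have hpol : ∀ t ∈ Icc 1 T, IsCostComparison n K f c S mhat m t := hpolicy
  have hfollow : ∀ i ∈ Icc 1 n, ∀ t ∈ Icc 1 T,
      (∀ k ∈ Icc 1 K, m k t i = mhat k t i) ∨ ∀ k ∈ Icc 1 K, m k t i = 0 :=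
    fun i hi t ht => (hpol t ht).fdc_eq_or_eq_zero hi
  have hstock : ∀ i ∈ Icc 1 n, ∀ t ≤ T, ∀ k ∈ Icc 1 K, 0 ≤ I k t i := fun i hi =>
    (hgreedy i hi).inventory_nonneg (hσ i hi).surjOn (hI · · · i hi) (hI0 · · i hi) (hfollow i hi)
  have hmhat_nonneg : ∀ t ∈ Icc 1 T, ∀ k ∈ Icc 0 K, ∀ i ∈ Icc 1 n, 0 ≤ mhat k t i :=
    fun t ht k hk i hi => (hgreedy i hi).nonneg (hk0 i hi ▸ (card_filter_le _ _).trans (by simp))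
      (hσ i hi) ht (hS t ht i hi) (hstock i hi _ ((Nat.sub_le t 1).trans (mem_Icc.1 ht).2)) k hk
  have hvar : ∑ t ∈ Icc 1 T, variableCost n K c mhat t ≤
      ∑ t ∈ Icc 1 T, variableCost n K c mstar t := by
    rw [sum_variableCost_eq, sum_variableCost_eq]
    exact sum_le_sum fun i hi => (hgreedy i hi).sum_sum_mul_le (hσ i hi)
      (hσ_sorted i hi · · · |>.1) (hk0 i hi) (hI · · · i hi) (hstock i hi) (hS · · i hi)
      (hfollow i hi) (hz_nonneg · · · · i hi) (hz_sum · · i hi) (hz_inv · · i hi)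
  have hper := fun t ht => (hpol t ht).periodCost_add_variableCost_le hf_nonneg hc
    (le_max_right _ _)
    (fun k hk => le_max_div_inf'_mul (nonempty_Icc.mpr hK) hf _ zero_le_two hk) (hS t ht)
    (hmhat_nonneg t ht) (fun i hi => (hgreedy i hi).sum_eq ht)
    (fun k hk i hi => hz_nonneg k hk t ht i hi) (hz_sum t ht)
  have hsum := sum_le_sum hper
  rw [sum_add_distrib, sum_add_distrib, ← mul_sum] at hsum
  rw [fulfillCost_eq_sum_periodCost, fulfillCost_eq_sum_periodCost]
  linarith

/-- Theorem 2: competitive-ratio upper bound of the Cost-Comparison V-Priority policy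
under time-invariant variable costs. -/
theorem costComparisonVPriority_competitive
    (n T K : ℕ) (hn : 1 ≤ n) (hT : 1 ≤ T) (hK : 1 ≤ K)
    (f : ℕ → ℝ) (hf0 : 0 ≤ f 0) (hf : ∀ k ∈ Icc 1 K, 0 < f k)
    (c : ℕ → ℕ → ℝ) (hc : ∀ k ∈ Icc 0 K, ∀ i ∈ Icc 1 n, 0 ≤ c k i)
    (S : ℕ → ℕ → ℝ) (hS : ∀ t ∈ Icc 1 T, ∀ i ∈ Icc 1 n, 0 ≤ S t i)
    (I0 : ℕ → ℕ → ℝ) (hI0 : ∀ k ∈ Icc 1 K, ∀ i ∈ Icc 1 n, 0 ≤ I0 k i)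
    (σ : ℕ → ℕ → ℕ)
    (hσ_mem : ∀ i ∈ Icc 1 n, ∀ l ∈ Icc 1 K, σ i l ∈ Icc 1 K)
    (hσ_inj : ∀ i ∈ Icc 1 n, ∀ l ∈ Icc 1 K, ∀ l' ∈ Icc 1 K, σ i l = σ i l' → l = l')
    (hσ_sorted : ∀ i ∈ Icc 1 n, ∀ l, 1 ≤ l → l < K →
      c (σ i l) i ≤ c (σ i (l + 1)) i ∧
        (c (σ i l) i = c (σ i (l + 1)) i → σ i l < σ i (l + 1)))
    (k0 : ℕ → ℕ)
    (hk0 : ∀ i ∈ Icc 1 n, k0 i = ((Icc 1 K).filter (fun k => c k i < c 0 i)).card)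
    (m : ℕ → ℕ → ℕ → ℝ)
    (I : ℕ → ℕ → ℕ → ℝ)
    (hI : ∀ k ∈ Icc 1 K, ∀ t : ℕ, ∀ i ∈ Icc 1 n,
      I k t i = I0 k i - ∑ τ ∈ Icc 1 t, m k τ i)
    (mhat : ℕ → ℕ → ℕ → ℝ)
    (hmhat : ∀ i ∈ Icc 1 n, ∀ t ∈ Icc 1 T, ∀ l ∈ Icc 1 (k0 i),
      mhat (σ i l) t i =
        min (max (S t i - ∑ l' ∈ Icc 1 (l - 1), I (σ i l') (t - 1) i) 0)
          (I (σ i l) (t - 1) i))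
    (hmhat' : ∀ i ∈ Icc 1 n, ∀ t ∈ Icc 1 T, ∀ l ∈ Icc (k0 i + 1) K,
      mhat (σ i l) t i = 0)
    (hmhat0 : ∀ t ∈ Icc 1 T, ∀ i ∈ Icc 1 n,
      mhat 0 t i = S t i - ∑ k ∈ Icc 1 K, mhat k t i)
    (hpolicy : ∀ t ∈ Icc 1 T,
      ((f 0 + ∑ i ∈ Icc 1 n, c 0 i * S t i <
          ∑ k ∈ Icc 0 K, (f k * (if 0 < ∑ i ∈ Icc 1 n, mhat k t i then (1:ℝ) else 0)
            + ∑ i ∈ Icc 1 n, c k i * mhat k t i)) →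
        (∀ i ∈ Icc 1 n, m 0 t i = S t i) ∧
        (∀ k ∈ Icc 1 K, ∀ i ∈ Icc 1 n, m k t i = 0)) ∧
      ((∑ k ∈ Icc 0 K, (f k * (if 0 < ∑ i ∈ Icc 1 n, mhat k t i then (1:ℝ) else 0)
            + ∑ i ∈ Icc 1 n, c k i * mhat k t i) ≤
          f 0 + ∑ i ∈ Icc 1 n, c 0 i * S t i) →
        ∀ k ∈ Icc 0 K, ∀ i ∈ Icc 1 n, m k t i = mhat k t i))
    (mstar : ℕ → ℕ → ℕ → ℝ) (hmstar : feasiblePlan n T K S I0 mstar) :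
    fulfillCost n T K f (fun k _ i => c k i) m ≤
      max ((f 0 + ∑ k ∈ Icc 1 K, f k) /
          ((Icc 1 K).inf' (Finset.nonempty_Icc.mpr hK) f)) 2
        * fulfillCost n T K f (fun k _ i => c k i) mstar :=
  costComparisonVPriority_competitive_general n T K hK f hf0 hf c hc S hS I0 hI0 σ hσ_mem hσ_inj
    hσ_sorted k0 hk0 m I hI mhat hmhat hmhat' hmhat0 hpolicy mstar hmstar
end

section
/- For all real numbers f_0 ≥ 0, f ≥ 0 and 0 < a ≤ b, the following inequality holds: max{ √(f_0/a + (f − b)²/(4a²)) − (f − b)/(2a) , b/a } ≤ 2(1 + √5) · max{ b/(4a) , (1/4)·( √(f_0/a + f²/(4a²)) − f/(2a) ) }. -/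
set_option maxHeartbeats 1000000

private lemma sq_sub_key (c t : ℝ) (hc : 0 ≤ c) :
    (Real.sqrt (c + t ^ 2) - t) ^ 2 + 2 * t * (Real.sqrt (c + t ^ 2) - t) = c := by
  have h : Real.sqrt (c + t ^ 2) ^ 2 = c + t ^ 2 := Real.sq_sqrt (by positivity)
  nlinarith [h]

private lemma sq_sub_nonneg (c t : ℝ) (hc : 0 ≤ c) :
    0 ≤ Real.sqrt (c + t ^ 2) - t := by
  have h1 : t ≤ |t| := le_abs_self t
  have h2 : |t| = Real.sqrt (t ^ 2) := (Real.sqrt_sq_eq_abs t).symm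
  have h3 : Real.sqrt (t ^ 2) ≤ Real.sqrt (c + t ^ 2) :=
    Real.sqrt_le_sqrt (by linarith)
  linarith

/-- Proposition 1: the competitive-ratio upper bound of Order-Size F-Priority with
optimized threshold exceeds the universal lower bound by at most the factor
`2(1 + √5)`. -/
theorem ub_lb_ratio_multi_varying
    (f₀ f a b : ℝ) (hf₀ : 0 ≤ f₀) (hf : 0 ≤ f) (ha : 0 < a) (hab : a ≤ b) :
    max (Real.sqrt (f₀ / a + (f - b) ^ 2 / (4 * a ^ 2)) - (f - b) / (2 * a)) (b / a)
      ≤ 2 * (1 + Real.sqrt 5) *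
        max (b / (4 * a))
          ((1 / 4) * (Real.sqrt (f₀ / a + f ^ 2 / (4 * a ^ 2)) - f / (2 * a))) := by
  have ha' : a ≠ 0 := ne_of_gt ha
  have hc : 0 ≤ f₀ / a := div_nonneg hf₀ ha.le
  have e1 : f₀ / a + (f - b) ^ 2 / (4 * a ^ 2) = f₀ / a + ((f - b) / (2 * a)) ^ 2 := by
    field_simp; ring
  have e2 : f₀ / a + f ^ 2 / (4 * a ^ 2) = f₀ / a + (f / (2 * a)) ^ 2 := by
    field_simp; ring
  rw [e1, e2]
  set t1 := (f - b) / (2 * a) with ht1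
  set t2 := f / (2 * a) with ht2
  set U := Real.sqrt (f₀ / a + t1 ^ 2) - t1 with hUdef
  set L := Real.sqrt (f₀ / a + t2 ^ 2) - t2 with hLdef
  have hU : U ^ 2 + 2 * t1 * U = f₀ / a := sq_sub_key _ _ hc
  have hL : L ^ 2 + 2 * t2 * L = f₀ / a := sq_sub_key _ _ hc
  have hU0 : 0 ≤ U := sq_sub_nonneg _ _ hc
  have hL0 : 0 ≤ L := sq_sub_nonneg _ _ hc
  set s := Real.sqrt 5 with hsdef
  have hs : s ^ 2 = 5 := Real.sq_sqrt (by norm_num)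
  have hs0 : 0 ≤ s := Real.sqrt_nonneg 5
  have hs2 : 2 ≤ s := by nlinarith
  have hB0 : 0 < b / a := div_pos (lt_of_lt_of_le ha hab) ha
  set M := max (b / a) L with hMdef
  have hM0 : 0 ≤ M := le_trans hB0.le (le_max_left _ _)
  have hLM : L ≤ M := le_max_right _ _
  have hBM : b / a ≤ M := le_max_left _ _
  have hb4 : b / (4 * a) = (1 / 4) * (b / a) := by
    field_simp
  have hrhs : max (b / (4 * a)) ((1 / 4) * L) = (1 / 4) * M := by
    rw [hb4, hMdef]
    rcases le_total (b / a) L with h | h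
    · rw [max_eq_right h, max_eq_right (by linarith)]
    · rw [max_eq_left h, max_eq_left (by linarith)]
  have hfa : 0 ≤ f / a := div_nonneg hf ha.le
  have e3 : 2 * t1 * U = (f / a) * U - (b / a) * U := by
    rw [ht1]; field_simp
  have e4 : 2 * t2 * L = (f / a) * L := by
    rw [ht2]; field_simp
  clear hUdef hLdef hsdef e1 e2 ht1 ht2
  clear_value U L s t1 t2
  rw [hrhs]
  clear hrhs hb4 hMdef
  clear_value M
  have hgoal2 : 2 * (1 + s) * ((1 / 4) * M) = ((1 + s) / 2) * M := by ring
  rw [hgoal2]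
  have hphi1 : (1:ℝ) ≤ (1 + s) / 2 := by linarith
  have hMphi : M ≤ ((1 + s) / 2) * M := by
    nlinarith [mul_nonneg (by linarith : (0:ℝ) ≤ (1 + s) / 2 - 1) hM0]
  apply max_le
  · rcases le_total U L with h | h
    · linarith
    · have key : U ^ 2 = L ^ 2 + (f / a) * (L - U) + (b / a) * U := by
        linear_combination hU - hL - e3 + e4
      have hquad : U ^ 2 ≤ M ^ 2 + M * U := by
        nlinarith [key, mul_nonneg hfa (by linarith : (0:ℝ) ≤ U - L),
          mul_nonneg hU0 (by linarith : (0:ℝ) ≤ M - b / a),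
          mul_nonneg (by linarith : (0:ℝ) ≤ M - L) (by linarith : (0:ℝ) ≤ M + L)]
      have h5 : 0 ≤ 2 * U + (s - 1) * M := by
        nlinarith [mul_nonneg (by linarith : (0:ℝ) ≤ s - 1) hM0]
      nlinarith [hquad, hs, h5]
  · linarith
end

section
/- For all real numbers u ≥ 0 and v ≥ 0: max{ √(u + (v − 1)²/4) − (v − 1)/2 , 1 } ≤ ((1 + √5)/2) · max{ √(u + v²/4) − v/2 , 1 }. -/
/-- Normalized form of the inequality comparing the competitive-ratio upper bound of
Order-Size F-Priority with the universal lower bound: the two match up to the factor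
`(1 + √5)/2`. -/
theorem ub_lb_ratio_normalized (u v : ℝ) (hu : 0 ≤ u) (hv : 0 ≤ v) :
    max (Real.sqrt (u + (v - 1) ^ 2 / 4) - (v - 1) / 2) 1
      ≤ ((1 + Real.sqrt 5) / 2) * max (Real.sqrt (u + v ^ 2 / 4) - v / 2) 1 := by
  set s5 := Real.sqrt 5 with hs5def
  have hs5sq : s5 ^ 2 = 5 := Real.sq_sqrt (by norm_num)
  have hs5nn : 0 ≤ s5 := Real.sqrt_nonneg 5
  clear_value s5
  have hs52 : 2 ≤ s5 := by nlinarith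
  set φ := (1 + s5) / 2 with hφdef
  have hφsq : φ ^ 2 = φ + 1 := by rw [hφdef]; nlinarith
  have hφ1 : 1 < φ := by rw [hφdef]; linarith
  clear_value φ
  set A := Real.sqrt (u + (v - 1) ^ 2 / 4) - (v - 1) / 2 with hAdef
  set B := Real.sqrt (u + v ^ 2 / 4) - v / 2 with hBdef
  have h1nn : (0:ℝ) ≤ u + (v - 1) ^ 2 / 4 := by positivity
  have h2nn : (0:ℝ) ≤ u + v ^ 2 / 4 := by positivity
  have hAs : A + (v - 1) / 2 = Real.sqrt (u + (v - 1) ^ 2 / 4) := by rw [hAdef]; ring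
  have hBs : B + v / 2 = Real.sqrt (u + v ^ 2 / 4) := by rw [hBdef]; ring
  have hAsq : (A + (v - 1) / 2) ^ 2 = u + (v - 1) ^ 2 / 4 := by
    rw [hAs]; exact Real.sq_sqrt h1nn
  have hBsq : (B + v / 2) ^ 2 = u + v ^ 2 / 4 := by
    rw [hBs]; exact Real.sq_sqrt h2nn
  have hA0 : 0 ≤ A := by
    have h : ((v - 1) / 2) ^ 2 ≤ u + (v - 1) ^ 2 / 4 := by nlinarith
    have h2 := Real.sqrt_le_sqrt h
    rw [Real.sqrt_sq_eq_abs] at h2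
    have h3 := (le_abs_self ((v - 1) / 2)).trans h2
    rw [hAdef]; linarith
  have hB0 : 0 ≤ B := by
    have h : (v / 2) ^ 2 ≤ u + v ^ 2 / 4 := by nlinarith
    have h2 := Real.sqrt_le_sqrt h
    rw [Real.sqrt_sq_eq_abs] at h2
    have h3 := (le_abs_self (v / 2)).trans h2
    rw [hBdef]; linarith
  have keyA : A ^ 2 + (v - 1) * A = u := by linear_combination hAsq
  have keyB : B ^ 2 + v * B = u := by linear_combination hBsq
  clear_value A B
  clear hAs hBs hAsq hBsq h1nn h2nn hAdef hBdef hs5sq hs5nn hs5def hφdef hu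
  -- A^2 - A = B^2 + v*(B - A)
  have hkey : A ^ 2 - A = B ^ 2 + v * (B - A) := by linarith [keyA, keyB]
  clear keyA keyB
  have hmaxB : (1:ℝ) ≤ max B 1 := le_max_right _ _
  have hφ0 : (0:ℝ) < φ := by linarith
  apply max_le
  · rcases le_total B 1 with hB | hB
    · rw [max_eq_right hB, mul_one]
      by_contra hc
      push_neg at hc
      have hAB : B ≤ A := by linarith
      have hvAB : 0 ≤ v * (A - B) := mul_nonneg hv (by linarith)
      have h1 : A ^ 2 - A ≤ 1 := by nlinarith
      have hp : 0 < (A - φ) * (A + φ - 1) :=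
        mul_pos (by linarith) (by linarith)
      nlinarith [hp, h1, hφsq]
    · rw [max_eq_left hB]
      by_contra hc
      push_neg at hc
      have hAB : B ≤ A := by nlinarith
      have hvAB : 0 ≤ v * (A - B) := mul_nonneg hv (by linarith)
      have h1 : A ^ 2 - A ≤ B ^ 2 := by nlinarith
      have hp : 0 < (A - φ * B) * (A + φ * B) :=
        mul_pos (by linarith) (by nlinarith)
      -- φ^2 * B^2 < A^2
      have h2 : φ ^ 2 * B ^ 2 < A ^ 2 := by nlinarith
      have h3 : φ ^ 2 * (A ^ 2 - A) ≤ φ ^ 2 * B ^ 2 :=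
        mul_le_mul_of_nonneg_left h1 (by positivity)
      have e1 : φ ^ 2 * (A ^ 2 - A) = φ * A ^ 2 + A ^ 2 - φ * A - A := by
        linear_combination (A ^ 2 - A) * hφsq
      have h4 : φ * A ^ 2 < φ * A + A := by linarith
      have hφB : φ ≤ φ * B := le_mul_of_one_le_right (le_of_lt hφ0) hB
      have hApos : 0 < A := by linarith
      have e2 : φ * A * φ = φ * A + A := by linear_combination A * hφsq
      have h6 : φ * A * A < φ * A * φ := by
        have e3 : φ * A * A = φ * A ^ 2 := by ring
        linarith
      have h5 : A < φ := lt_of_mul_lt_mul_left h6 (le_of_lt (mul_pos hφ0 hApos))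
      linarith
  · calc (1:ℝ) ≤ φ := le_of_lt hφ1
    _ = φ * 1 := (mul_one φ).symm
    _ ≤ φ * max B 1 := mul_le_mul_of_nonneg_left hmaxB (le_of_lt hφ0)
end

section
/- Let a > 0, f ≥ 0 and f_0 > 0 be reals and set n* = √(f_0/a + f²/(4a²)) − f/(2a). Then n* > 0, min{ n*, f_0/(f + n*·a) } = n*, and for every real n > 0 one has min{ n, f_0/(f + n·a) } ≤ n*; that is, n* is the greatest element of the set { min{ n, f_0/(f + n·a) } : n > 0 }. -/
/-- The quantity `n* = √(f₀/a + f²/(4a²)) − f/(2a)` is positive, is a fixed point of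
`n ↦ min{n, f₀/(f + n·a)}`, dominates `min{n, f₀/(f + n·a)}` for every `n > 0`, and is
therefore the greatest element of `{ min{n, f₀/(f + n·a)} : n > 0 }`. -/
theorem max_min_adversarial_order_size
    (a f f₀ : ℝ) (ha : 0 < a) (hf : 0 ≤ f) (hf₀ : 0 < f₀)
    (nstar : ℝ) (hnstar : nstar = Real.sqrt (f₀ / a + f ^ 2 / (4 * a ^ 2)) - f / (2 * a)) :
    0 < nstar ∧
    min nstar (f₀ / (f + nstar * a)) = nstar ∧
    (∀ n : ℝ, 0 < n → min n (f₀ / (f + n * a)) ≤ nstar) ∧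
    IsGreatest {x : ℝ | ∃ n : ℝ, 0 < n ∧ x = min n (f₀ / (f + n * a))} nstar := by
  have harg : 0 ≤ f₀ / a + f ^ 2 / (4 * a ^ 2) := by positivity
  set s := Real.sqrt (f₀ / a + f ^ 2 / (4 * a ^ 2)) with hs
  have hs2 : s ^ 2 = f₀ / a + f ^ 2 / (4 * a ^ 2) := Real.sq_sqrt harg
  have hsnn : 0 ≤ s := Real.sqrt_nonneg _
  have hpos : 0 < nstar := by
    rw [hnstar]
    have h1 : (f / (2 * a)) ^ 2 < s ^ 2 := by
      rw [hs2]
      have : (f / (2 * a)) ^ 2 = f ^ 2 / (4 * a ^ 2) := by ring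
      rw [this]
      have : 0 < f₀ / a := by positivity
      linarith
    have h2 : f / (2 * a) < s := by nlinarith [div_nonneg hf (by linarith : (0:ℝ) ≤ 2 * a)]
    linarith
  have key : nstar * (f + nstar * a) = f₀ := by
    have ha' : a ≠ 0 := ne_of_gt ha
    have h4 : 4 * a ^ 2 * s ^ 2 = 4 * a * f₀ + f ^ 2 := by
      field_simp at hs2
      nlinarith [hs2, ha]
    rw [hnstar]
    field_simp
    linear_combination h4
  have hden : 0 < f + nstar * a := by positivity
  have hfix : f₀ / (f + nstar * a) = nstar := by
    field_simp
    linarith [key]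
  have hub : ∀ n : ℝ, 0 < n → min n (f₀ / (f + n * a)) ≤ nstar := by
    intro n hn
    rcases le_or_gt n nstar with h | h
    · exact le_trans (min_le_left _ _) h
    · refine le_trans (min_le_right _ _) ?_
      rw [← hfix]
      apply div_le_div_of_nonneg_left (le_of_lt hf₀) hden
      nlinarith
  refine ⟨hpos, by rw [hfix, min_self], hub, ⟨⟨nstar, hpos, by rw [hfix, min_self]⟩, ?_⟩⟩
  rintro x ⟨n, hn, rfl⟩
  exact hub n hn
end

section
/- Let C = 4·(9 + 4√2)/(√(10 + 4√2) − 1). For all real numbers f_0 ≥ 0, f_1 > 0 and 0 < a ≤ b: max{ min{ 2·f_0/f_1 , (2√2 + 1)·√(f_0/a) } , (4 + √2)·√(b/a) } ≤ C · max{ 1 , (1/3)·√(b/a) , (1/4)·( √(f_0/a + f_1²/(4a²)) − f_1/(2a) ) }. Moreover C ≤ 19.828. -/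
/-!
With `x = f₀/a`, `t = f₁/(2a)` and `s = √(10 + 4√2)`, the constant is `C = 4(1 + s)` because
`9 + 4√2 = s² - 1`, and the fourth argument of the lower bound is `(√(x + t²) - t)/4`. Since
`2√2 + 1 = √(s² - 1)`, the first term of the upper bound is handled by the inequality
`min (x/t) (√(s² - 1)·√x) ≤ (1 + s)(√(x + t²) - t)`: writing `x = u(u + 2t)` with
`u = √(x + t²) - t`, the first argument wins when `u ≤ (s - 1)t` and the second one otherwise.
The term `(4 + √2)√(b/a)` is at most `C/3 · √(b/a)` as soon as `s ≥ 3.1`.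
-/

open Real

lemma min_div_mul_sqrt_le {x t k s : ℝ} (hx : 0 ≤ x) (ht : 0 < t) (hs : 0 ≤ s)
    (hks : k ^ 2 + 1 = s ^ 2) :
    min (x / t) (k * √x) ≤ (1 + s) * (√(x + t ^ 2) - t) := by
  set w := √(x + t ^ 2)
  have hw : w ^ 2 = x + t ^ 2 := sq_sqrt (by positivity)
  have htw : t ≤ w := le_sqrt_of_sq_le (by linarith)
  have hx_eq : x = (w - t) * (w + t) := by linear_combination -hw
  rcases le_or_gt w (s * t) with hsmall | hlarge
  · refine (min_le_left _ _).trans ?_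
    rw [div_le_iff₀ ht, hx_eq]
    nlinarith [mul_le_mul_of_nonneg_left (show w + t ≤ (s + 1) * t by linarith)
      (sub_nonneg.2 htw)]
  · refine (min_le_right _ _).trans ?_
    have hsq : (k * √x) ^ 2 ≤ ((1 + s) * (w - t)) ^ 2 := by
      have hk2 : k ^ 2 = (s - 1) * (s + 1) := by linear_combination hks
      rw [mul_pow, sq_sqrt hx, hk2, hx_eq]
      nlinarith [mul_le_mul_of_nonneg_left
        (show (s - 1) * (w + t) ≤ (s + 1) * (w - t) by linarith)
        (mul_nonneg (by linarith : 0 ≤ s + 1) (sub_nonneg.2 htw))]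
    exact le_of_pow_le_pow_left₀ two_ne_zero
      (mul_nonneg (by linarith) (sub_nonneg.2 htw)) hsq

lemma sq_two_mul_sqrt_two_add_one :
    (2 * √2 + 1) ^ 2 + 1 = √(10 + 4 * √2) ^ 2 := by
  have h2 : √2 ^ 2 = 2 := sq_sqrt zero_le_two
  rw [sq_sqrt (by positivity)]
  linear_combination 4 * h2

lemma sqrt_ten_add_four_sqrt_two_mem_Icc :
    √(10 + 4 * √2) ∈ Set.Icc (3.1 : ℝ) 3.957 := by
  have h2 : √2 ^ 2 = 2 := sq_sqrt zero_le_two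
  have h2le : √2 ≤ 1.414214 := by nlinarith [sq_nonneg (√2 - 1.414214), sqrt_nonneg 2]
  constructor
  · rw [le_sqrt (by norm_num) (by positivity)]
    nlinarith [sqrt_nonneg 2]
  · rw [sqrt_le_left (by norm_num)]
    linarith

lemma four_mul_nine_add_four_sqrt_two_div :
    4 * (9 + 4 * √2) / (√(10 + 4 * √2) - 1) = 4 * (1 + √(10 + 4 * √2)) := by
  have hs : √(10 + 4 * √2) ^ 2 = 10 + 4 * √2 := sq_sqrt (by positivity)
  have hs1 : √(10 + 4 * √2) - 1 ≠ 0 := by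
    linarith [sqrt_ten_add_four_sqrt_two_mem_Icc.1]
  rw [div_eq_iff hs1]
  linear_combination -4 * hs

theorem ub_lb_ratio_single_varying_general
    (f₀ f₁ a b : ℝ) (hf₀ : 0 ≤ f₀) (hf₁ : 0 < f₁) (ha : 0 < a) :
    max (min (2 * (f₀ / f₁)) ((2 * Real.sqrt 2 + 1) * Real.sqrt (f₀ / a)))
        ((4 + Real.sqrt 2) * Real.sqrt (b / a))
      ≤ (4 * (9 + 4 * Real.sqrt 2) / (Real.sqrt (10 + 4 * Real.sqrt 2) - 1)) *
        max (max 1 ((1 / 3) * Real.sqrt (b / a)))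
          ((1 / 4) * (Real.sqrt (f₀ / a + f₁ ^ 2 / (4 * a ^ 2)) - f₁ / (2 * a)))
    ∧ 4 * (9 + 4 * Real.sqrt 2) / (Real.sqrt (10 + 4 * Real.sqrt 2) - 1)
        ≤ 19.828 := by
  obtain ⟨hs_lo, hs_hi⟩ := sqrt_ten_add_four_sqrt_two_mem_Icc
  rw [four_mul_nine_add_four_sqrt_two_div]
  refine ⟨max_le ?_ ?_, by linarith⟩
  · have hmin := min_div_mul_sqrt_le (div_nonneg hf₀ ha.le) (by positivity : 0 < f₁ / (2 * a))
      (sqrt_nonneg _) sq_two_mul_sqrt_two_add_one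
    rw [show f₀ / a / (f₁ / (2 * a)) = 2 * (f₀ / f₁) by field_simp,
      show f₀ / a + (f₁ / (2 * a)) ^ 2 = f₀ / a + f₁ ^ 2 / (4 * a ^ 2) by ring] at hmin
    calc _ ≤ _ := hmin
      _ = 4 * (1 + √(10 + 4 * √2)) *
            (1 / 4 * (√(f₀ / a + f₁ ^ 2 / (4 * a ^ 2)) - f₁ / (2 * a))) := by ring
      _ ≤ _ := mul_le_mul_of_nonneg_left (le_max_right _ _) (by linarith)
  · have hba := sqrt_nonneg (b / a)
    have h2le : √2 ≤ 1.415 := by nlinarith [sq_sqrt (zero_le_two : (0 : ℝ) ≤ 2), sqrt_nonneg 2]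
    calc (4 + √2) * √(b / a) ≤ 4 * (1 + √(10 + 4 * √2)) * (1 / 3 * √(b / a)) := by
          nlinarith
      _ ≤ _ := mul_le_mul_of_nonneg_left (le_max_of_le_left (le_max_right _ _)) (by linarith)

/-- Proposition 2: the competitive-ratio upper bound of the Better-of-Two policy in
the single-FDC time-varying-cost setting exceeds the universal lower bound by at most
the constant factor `C = 4(9 + 4√2)/(√(10 + 4√2) − 1)`, and `C ≤ 19.828`. -/
theorem ub_lb_ratio_single_varying
    (f₀ f₁ a b : ℝ) (hf₀ : 0 ≤ f₀) (hf₁ : 0 < f₁) (ha : 0 < a) (hab : a ≤ b) :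
    max (min (2 * (f₀ / f₁)) ((2 * Real.sqrt 2 + 1) * Real.sqrt (f₀ / a)))
        ((4 + Real.sqrt 2) * Real.sqrt (b / a))
      ≤ (4 * (9 + 4 * Real.sqrt 2) / (Real.sqrt (10 + 4 * Real.sqrt 2) - 1)) *
        max (max 1 ((1 / 3) * Real.sqrt (b / a)))
          ((1 / 4) * (Real.sqrt (f₀ / a + f₁ ^ 2 / (4 * a ^ 2)) - f₁ / (2 * a)))
    ∧ 4 * (9 + 4 * Real.sqrt 2) / (Real.sqrt (10 + 4 * Real.sqrt 2) - 1)
        ≤ 19.828 :=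
  ub_lb_ratio_single_varying_general f₀ f₁ a b hf₀ hf₁ ha
end

section
/- For all real numbers t with 0 < t < 1 and all reals f_0 > 0, f_1 > 0, a > 0: √(f_0/a + f_1²/(4a²)) − f_1/(2a) ≥ min{ t·√(f_0/a) , (1 − t²)·f_0/f_1 }. -/
/-!
Put `b = f₁/(2a)` and let `m` be the minimum. The left-hand side of the bound is the positive
root of `m² + 2bm = f₀/a`, so it suffices that `m² + 2bm ≤ f₀/a` whenever `m > 0`; the two
arguments of the minimum bound `m²` by `t²·f₀/a` and `2bm` by `(1 − t²)·f₀/a`.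
-/

theorem le_sqrt_add_sq_sub {m x b : ℝ} (hx : 0 ≤ x) (h : 0 < m → m * (m + 2 * b) ≤ x) :
    m ≤ √(x + b ^ 2) - b := by
  rw [le_sub_iff_add_le]
  rcases le_or_gt m 0 with hm | hm
  · calc m + b ≤ |b| := by linarith [le_abs_self b]
      _ ≤ √(x + b ^ 2) := Real.abs_le_sqrt (by linarith)
  · calc m + b ≤ |m + b| := le_abs_self _
      _ ≤ √(x + b ^ 2) := Real.abs_le_sqrt (by nlinarith [h hm])

theorem parametric_lower_bound_general
    (t f₀ f₁ a : ℝ)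
    (hf₀ : 0 < f₀) (hf₁ : 0 < f₁) (ha : 0 < a) :
    min (t * Real.sqrt (f₀ / a)) ((1 - t ^ 2) * f₀ / f₁)
      ≤ Real.sqrt (f₀ / a + f₁ ^ 2 / (4 * a ^ 2)) - f₁ / (2 * a) := by
  rw [show f₁ ^ 2 / (4 * a ^ 2) = (f₁ / (2 * a)) ^ 2 by ring]
  refine le_sqrt_add_sq_sub (by positivity) fun hm => ?_
  set m := min (t * √(f₀ / a)) ((1 - t ^ 2) * f₀ / f₁)
  have h_sq : m ^ 2 ≤ t ^ 2 * (f₀ / a) := by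
    rw [← Real.sq_sqrt (div_nonneg hf₀.le ha.le), ← mul_pow]
    exact pow_le_pow_left₀ hm.le (min_le_left _ _) 2
  have h_lin : m * (2 * (f₁ / (2 * a))) ≤ (1 - t ^ 2) * (f₀ / a) := by
    have hmf₁ : m * f₁ ≤ (1 - t ^ 2) * f₀ := (le_div_iff₀ hf₁).1 (min_le_right _ _)
    calc m * (2 * (f₁ / (2 * a))) = m * f₁ / a := by field_simp
      _ ≤ (1 - t ^ 2) * f₀ / a := div_le_div_of_nonneg_right hmf₁ ha.le
      _ = (1 - t ^ 2) * (f₀ / a) := by ring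
  linarith [mul_add m m (2 * (f₁ / (2 * a)))]

/-- Parametric lower bound: for `0 < t < 1`,
`√(f₀/a + f₁²/(4a²)) − f₁/(2a) ≥ min{ t·√(f₀/a), (1 − t²)·f₀/f₁ }`. -/
theorem parametric_lower_bound
    (t f₀ f₁ a : ℝ) (ht0 : 0 < t) (ht1 : t < 1)
    (hf₀ : 0 < f₀) (hf₁ : 0 < f₁) (ha : 0 < a) :
    min (t * Real.sqrt (f₀ / a)) ((1 - t ^ 2) * f₀ / f₁)
      ≤ Real.sqrt (f₀ / a + f₁ ^ 2 / (4 * a ^ 2)) - f₁ / (2 * a) :=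
  parametric_lower_bound_general t f₀ f₁ a hf₀ hf₁ ha
end

section
/- For all real numbers f_0 ≥ f_1 > 0 and 0 < a ≤ b: min{ 1 + max{ f_0/f_1 , √(b/a) } , (4 + √2)·max{ √(f_0/(2a)) , √(b/a) } } ≤ max{ min{ 2·f_0/f_1 , (2√2 + 1)·√(f_0/a) } , (4 + √2)·√(b/a) }. -/
/-- Closed form of the Better-of-Two guarantee when `f₀ ≥ f₁`: the minimum of the two
sub-policy guarantees is bounded by the simplified expression on the right. -/
theorem better_of_two_closed_form
    (f₀ f₁ a b : ℝ) (hf₁ : 0 < f₁) (hf₀₁ : f₁ ≤ f₀) (ha : 0 < a) (hab : a ≤ b) :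
    min (1 + max (f₀ / f₁) (Real.sqrt (b / a)))
        ((4 + Real.sqrt 2) * max (Real.sqrt (f₀ / (2 * a))) (Real.sqrt (b / a)))
      ≤ max (min (2 * (f₀ / f₁)) ((2 * Real.sqrt 2 + 1) * Real.sqrt (f₀ / a)))
          ((4 + Real.sqrt 2) * Real.sqrt (b / a)) := by
  set s := Real.sqrt (b / a) with hs
  set t := Real.sqrt (f₀ / a) with ht
  have h2 : Real.sqrt 2 * Real.sqrt 2 = 2 := Real.mul_self_sqrt (by norm_num)
  have h2pos : 0 < Real.sqrt 2 := Real.sqrt_pos.mpr (by norm_num)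
  have hf0 : 0 < f₀ := lt_of_lt_of_le hf₁ hf₀₁
  have hs1 : 1 ≤ s := Real.one_le_sqrt.mpr ((one_le_div ha).mpr hab)
  have hr1 : 1 ≤ f₀ / f₁ := (one_le_div hf₁).mpr hf₀₁
  have hid : Real.sqrt (f₀ / (2 * a)) = t / Real.sqrt 2 := by
    rw [show f₀ / (2 * a) = (f₀ / a) / 2 by ring,
      Real.sqrt_div (by positivity : (0:ℝ) ≤ f₀ / a) 2]
  have hid2 : (4 + Real.sqrt 2) * (t / Real.sqrt 2) = (2 * Real.sqrt 2 + 1) * t := by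
    field_simp
    linear_combination (-2 * t) * h2
  rcases le_total (f₀ / f₁) s with hA | hA
  · calc min (1 + max (f₀ / f₁) s) ((4 + Real.sqrt 2) * max (Real.sqrt (f₀ / (2 * a))) s)
        ≤ 1 + max (f₀ / f₁) s := min_le_left _ _
      _ = 1 + s := by rw [max_eq_right hA]
      _ ≤ (4 + Real.sqrt 2) * s := by nlinarith
      _ ≤ _ := le_max_right _ _
  · rcases le_total (Real.sqrt (f₀ / (2 * a))) s with hB | hB
    · calc min (1 + max (f₀ / f₁) s) ((4 + Real.sqrt 2) * max (Real.sqrt (f₀ / (2 * a))) s)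
          ≤ (4 + Real.sqrt 2) * max (Real.sqrt (f₀ / (2 * a))) s := min_le_right _ _
        _ = (4 + Real.sqrt 2) * s := by rw [max_eq_right hB]
        _ ≤ _ := le_max_right _ _
    · refine le_trans (le_min ?_ ?_) (le_max_left _ _)
      · calc min (1 + max (f₀ / f₁) s) ((4 + Real.sqrt 2) * max (Real.sqrt (f₀ / (2 * a))) s)
            ≤ 1 + max (f₀ / f₁) s := min_le_left _ _
          _ = 1 + f₀ / f₁ := by rw [max_eq_left hA]
          _ ≤ 2 * (f₀ / f₁) := by linarith
      · calc min (1 + max (f₀ / f₁) s) ((4 + Real.sqrt 2) * max (Real.sqrt (f₀ / (2 * a))) s)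
            ≤ (4 + Real.sqrt 2) * max (Real.sqrt (f₀ / (2 * a))) s := min_le_right _ _
          _ = (4 + Real.sqrt 2) * (t / Real.sqrt 2) := by rw [max_eq_left hB, hid]
          _ = (2 * Real.sqrt 2 + 1) * t := hid2
end

section
/- For all real numbers w and r with 0 < w < 1 and 1 < r ≤ 1/w − w: (w + r − 1)/(1 + w·r + r² − w − r) ≤ 1/(1 − w + 2·√(1 − w)). -/
/-- Key estimate for the Randomized-Cost-Comparison V-Priority policy: for
`0 < w < 1` and `1 < r ≤ 1/w − w`,
`(w + r − 1)/(1 + wr + r² − w − r) ≤ 1/(1 − w + 2√(1 − w))`. -/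
theorem randomized_cost_comparison_key_estimate
    (w r : ℝ) (hw0 : 0 < w) (hw1 : w < 1) (hr1 : 1 < r) (hr2 : r ≤ 1 / w - w) :
    (w + r - 1) / (1 + w * r + r ^ 2 - w - r)
      ≤ 1 / (1 - w + 2 * Real.sqrt (1 - w)) := by
  set s := Real.sqrt (1 - w) with hs
  have hs0 : 0 ≤ s := Real.sqrt_nonneg _
  have hs2 : s ^ 2 = 1 - w := Real.sq_sqrt (by linarith)
  have hD1 : 0 < 1 + w * r + r ^ 2 - w - r := by nlinarith
  have hD2 : 0 < 1 - w + 2 * s := by linarith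
  rw [div_le_div_iff₀ hD1 hD2]
  nlinarith [sq_nonneg (r + w - 1 - s)]
end

section
/- Let a, b > 0 and f_0, f_1 ≥ 0 be reals and let N > 0. Then for every real x with 0 ≤ x ≤ N: max{ √(a·b)·x/(f_1 + a·N) , b·(N − x)/(f_0 + f_1 + 2·√(a·b)·N) } ≥ √(a·b)·b·N/( √(a·b)·(f_0 + f_1) + b·f_1 + 3·a·b·N ). Moreover, as N → ∞, the right-hand side converges to (1/3)·√(b/a). -/
/-- Two-instance minimax estimate for the single-FDC time-varying lower bound: for
every `x ∈ [0, N]` the maximum of the two instance ratios is at least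
`√(ab)·b·N/(√(ab)(f₀+f₁) + b·f₁ + 3abN)`, and as `N → ∞` this bound converges to
`(1/3)·√(b/a)`. -/
theorem two_instance_minimax_lower_bound
    (a b f₀ f₁ N : ℝ) (ha : 0 < a) (hb : 0 < b)
    (hf₀ : 0 ≤ f₀) (hf₁ : 0 ≤ f₁) (hN : 0 < N) :
    (∀ x : ℝ, 0 ≤ x → x ≤ N →
      Real.sqrt (a * b) * b * N /
          (Real.sqrt (a * b) * (f₀ + f₁) + b * f₁ + 3 * (a * b) * N)
        ≤ max (Real.sqrt (a * b) * x / (f₁ + a * N))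
            (b * (N - x) / (f₀ + f₁ + 2 * Real.sqrt (a * b) * N))) ∧
    Filter.Tendsto
      (fun M : ℝ => Real.sqrt (a * b) * b * M /
        (Real.sqrt (a * b) * (f₀ + f₁) + b * f₁ + 3 * (a * b) * M))
      Filter.atTop (nhds ((1 / 3) * Real.sqrt (b / a))) := by
  have hs : 0 < Real.sqrt (a * b) := Real.sqrt_pos.2 (mul_pos ha hb)
  have hsq : Real.sqrt (a * b) * Real.sqrt (a * b) = a * b :=
    Real.mul_self_sqrt (mul_pos ha hb).le
  set s := Real.sqrt (a * b) with hsdef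
  constructor
  · intro x hx0 hxN
    have hD1 : 0 < f₁ + a * N := by positivity
    have hD2 : 0 < f₀ + f₁ + 2 * s * N := by positivity
    have hD : 0 < s * (f₀ + f₁) + b * f₁ + 3 * (a * b) * N := by positivity
    by_contra h
    push_neg at h
    rw [max_lt_iff] at h
    obtain ⟨h1, h2⟩ := h
    set c := s * b * N / (s * (f₀ + f₁) + b * f₁ + 3 * (a * b) * N) with hc
    have hx1 : s * x < c * (f₁ + a * N) := by
      have := (div_lt_iff₀ hD1).1 h1
      linarith
    have hx2 : b * (N - x) < c * (f₀ + f₁ + 2 * s * N) := by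
      have := (div_lt_iff₀ hD2).1 h2
      linarith
    -- multiply hx1 by b, hx2 by s, add
    have key : s * b * N < c * (b * (f₁ + a * N) + s * (f₀ + f₁ + 2 * s * N)) := by
      nlinarith [mul_lt_mul_of_pos_left hx1 hb, mul_lt_mul_of_pos_left hx2 hs]
    have hcval : c * (b * (f₁ + a * N) + s * (f₀ + f₁ + 2 * s * N)) = s * b * N := by
      rw [hc, div_mul_eq_mul_div, div_eq_iff hD.ne']
      linear_combination 2 * s * b * N ^ 2 * hsq
    linarith [key, hcval.le]
  · set C := s * (f₀ + f₁) + b * f₁ with hC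
    have hC0 : 0 ≤ C := by positivity
    have hlim : Filter.Tendsto (fun M : ℝ => s * b / (C * M⁻¹ + 3 * (a * b)))
        Filter.atTop (nhds ((1 / 3) * Real.sqrt (b / a))) := by
      have h1 : Filter.Tendsto (fun M : ℝ => C * M⁻¹ + 3 * (a * b))
          Filter.atTop (nhds (0 + 3 * (a * b))) := by
        have := ((tendsto_inv_atTop_zero).const_mul C).add
          (tendsto_const_nhds (x := 3 * (a * b)) (f := Filter.atTop))
        rwa [mul_zero] at this
      have h2 := Filter.Tendsto.div (tendsto_const_nhds (x := s * b)) h1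
        (by positivity : (0:ℝ) + 3 * (a * b) ≠ 0)
      convert h2 using 2
      · rfl
      rw [Real.sqrt_div hb.le]
      have hsa : Real.sqrt a > 0 := Real.sqrt_pos.2 ha
      have hsb : Real.sqrt b > 0 := Real.sqrt_pos.2 hb
      have : s = Real.sqrt a * Real.sqrt b := Real.sqrt_mul ha.le b
      rw [this]
      field_simp
      linear_combination (-(3 * b)) * Real.sq_sqrt ha.le
    refine hlim.congr' ?_
    filter_upwards [Filter.eventually_gt_atTop 0] with M hM
    rw [hC]
    field_simp
end
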